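/- arXiv:0906.4774 — 4 statements merged into one kernel-verified Lean document; each statement's English description precedes it below -/
import Mathlib

section
/- Let V be a finite-dimensional vector space over a field K and let Δ = (α₁,…,αₙ) be a sequence of linear forms spanning V*. For each flat X of the matroid M(Δ) on E = {1,…,n}, let P(Δ)_X be the K-span of the products α_S = ∏_{i∈S} α_i over subsets S ⊆ E such that the closure of E−S equals X, inside the symmetric algebra Sym(V*). Then P(Δ), the span of all products α_S, decomposes as the direct sum over all flats X of the subspaces P(Δ)_X. -/
open MvPolynomial Finset Submodule
open scoped Classical

noncomputable section

variable {K : Type*} [Field K] {ι σ : Type*} [Fintype ι]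

/-- The product `α_S = ∏_{i ∈ S} α_i` of the linear forms indexed by `S`. -/
def prodForms (Δ : ι → MvPolynomial σ K) (S : Finset ι) : MvPolynomial σ K := ∏ i ∈ S, Δ i

/-- `P(Δ)`: the span of all subproducts of `Δ` inside `Sym(V*)` (realized as a
polynomial ring). -/
def Pspace (Δ : ι → MvPolynomial σ K) : Submodule K (MvPolynomial σ K) :=
  span K (Set.range fun S : Finset ι => prodForms Δ S)

/-- The rank function of the realized matroid `M(Δ)`:
`r(S) = dim span {α_i : i ∈ S}`. -/
def rk (Δ : ι → MvPolynomial σ K) (S : Finset ι) : ℕ :=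
  Module.finrank K (span K (Δ '' (S : Set ι)))

/-- The closure of `S` in the matroid `M(Δ)`. -/
def clos (Δ : ι → MvPolynomial σ K) (S : Finset ι) : Finset ι :=
  Finset.univ.filter fun i => Δ i ∈ span K (Δ '' (S : Set ι))

/-- `X` is a flat of `M(Δ)`. -/
def IsFlat (Δ : ι → MvPolynomial σ K) (X : Finset ι) : Prop := clos Δ X = X

/-- `P(Δ)_X`: span of the `α_S` with `cl(E − S) = X`. -/
def PX (Δ : ι → MvPolynomial σ K) (X : Finset ι) : Submodule K (MvPolynomial σ K) :=
  span K {p | ∃ S : Finset ι, clos Δ (univ \ S) = X ∧ p = prodForms Δ S}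

/-- `P(Δ)_{X,k}`: span of the `α_S` with `cl(E − S) = X` and `|E − S| = k`. -/
def PXk (Δ : ι → MvPolynomial σ K) (X : Finset ι) (k : ℕ) :
    Submodule K (MvPolynomial σ K) :=
  span K {p | ∃ S : Finset ι,
    clos Δ (univ \ S) = X ∧ (univ \ S).card = k ∧ p = prodForms Δ S}

/-- `P(Δ)_{j,k}`: span of the `α_S` with `r(E − S) = j` and `|E − S| = k`. -/
def Pjk (Δ : ι → MvPolynomial σ K) (j k : ℕ) : Submodule K (MvPolynomial σ K) :=
  span K {p | ∃ S : Finset ι,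
    rk Δ (univ \ S) = j ∧ (univ \ S).card = k ∧ p = prodForms Δ S}

/-- The Tutte polynomial in its corank–nullity form,
`T = ∑_{S ⊆ E} (x−1)^{r(E)−r(S)} (y−1)^{|S|−r(S)}`, evaluated at elements `x`, `y` of a
commutative ring, for a finite ground set `α` with rank function `r`. -/
def tutteEval {α : Type*} [Fintype α] [DecidableEq α] {R : Type*} [CommRing R]
    (r : Finset α → ℕ) (x y : R) : R :=
  ∑ S : Finset α, (x - 1) ^ (r Finset.univ - r S) * (y - 1) ^ (S.card - r S)

/-- `S` is independent in `M(Δ)`. -/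
def Indep (Δ : ι → MvPolynomial σ K) (S : Finset ι) : Prop := rk Δ S = S.card

/-- `C` is a circuit of `M(Δ)`: a minimal dependent set. -/
def IsCircuit (Δ : ι → MvPolynomial σ K) (C : Finset ι) : Prop :=
  ¬ Indep Δ C ∧ ∀ i ∈ C, Indep Δ (C.erase i)

/-- `e` is externally active in `I`: it is the smallest element of a circuit
contained in `I ∪ {e}`. -/
def ExtAct [LinearOrder ι] (Δ : ι → MvPolynomial σ K) (I : Finset ι) (e : ι) : Prop :=
  ∃ C : Finset ι, IsCircuit Δ C ∧ C ⊆ insert e I ∧ e ∈ C ∧ ∀ f ∈ C, e ≤ f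

/-- `ex(I)`: the set of externally active elements of `I`. -/
def exSet [LinearOrder ι] (Δ : ι → MvPolynomial σ K) (I : Finset ι) : Finset ι :=
  Finset.univ.filter (ExtAct Δ I)

/-- `S` contains no broken circuit. -/
def NBC [LinearOrder ι] (Δ : ι → MvPolynomial σ K) (S : Finset ι) : Prop :=
  ∀ C : Finset ι, ∀ e, IsCircuit Δ C → e ∈ C → (∀ f ∈ C, e ≤ f) → ¬ C.erase e ⊆ S

end

noncomputable section OTProof

open MvPolynomial Finset Submodule
open scoped Classical

namespace OTProof

variable {K : Type*} [Field K] {ℓ n : ℕ}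

/-- Use the classical decidable equality everywhere, matching the instances picked in the
definitions above. -/
@[local instance 2000] private abbrev decEqFin : DecidableEq (Fin n) := fun a b =>
  Classical.propDecidable (a = b)

variable (Δ : Fin n → MvPolynomial (Fin ℓ) K)

lemma mem_clos_iff {S : Finset (Fin n)} {i : Fin n} :
    i ∈ clos Δ S ↔ Δ i ∈ span K (Δ '' (S : Set (Fin n))) := by
  simp [clos]

lemma subset_clos (S : Finset (Fin n)) : S ⊆ clos Δ S := fun i hi =>
  (mem_clos_iff Δ).2 (subset_span ⟨i, by simpa using hi, rfl⟩)

lemma span_image_clos (S : Finset (Fin n)) :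
    span K (Δ '' ((clos Δ S : Finset (Fin n)) : Set (Fin n))) =
      span K (Δ '' (S : Set (Fin n))) := by
  refine le_antisymm (span_le.2 ?_) (span_mono (Set.image_mono ?_))
  · rintro _ ⟨i, hi, rfl⟩
    exact (mem_clos_iff Δ).1 (by simpa using hi)
  · exact_mod_cast subset_clos Δ S

lemma clos_mono {S T : Finset (Fin n)} (h : S ⊆ T) : clos Δ S ⊆ clos Δ T := fun i hi =>
  (mem_clos_iff Δ).2 (span_mono (Set.image_mono (by exact_mod_cast h))
    ((mem_clos_iff Δ).1 hi))

lemma isFlat_clos (S : Finset (Fin n)) : IsFlat Δ (clos Δ S) := by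
  unfold IsFlat
  ext i
  rw [mem_clos_iff, span_image_clos, ← mem_clos_iff]

lemma degree_one_eq_single {d : Fin ℓ →₀ ℕ} (h : d.degree = 1) :
    ∃ j, d = Finsupp.single j 1 := by
  have hsupp : d.support.Nonempty := by
    by_contra hc
    rw [Finset.not_nonempty_iff_eq_empty] at hc
    rw [Finsupp.degree_apply, hc] at h
    simp at h
  obtain ⟨j, hj⟩ := hsupp
  have hdj : d j ≠ 0 := Finsupp.mem_support_iff.1 hj
  have hsum : d j + ∑ a ∈ d.support.erase j, d a = 1 := by
    rw [Finset.add_sum_erase _ _ hj]; exact h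
  have hdj1 : d j = 1 := by omega
  have hrest : ∑ a ∈ d.support.erase j, d a = 0 := by omega
  refine ⟨j, Finsupp.ext fun a => ?_⟩
  by_cases ha : a = j
  · subst ha; simp [hdj1]
  · rw [Finsupp.single_apply, if_neg (Ne.symm ha)]
    by_contra hda
    have haj : a ∈ d.support.erase j := by
      simp [Finset.mem_erase, ha, Finsupp.mem_support_iff, hda]
    have := Finset.sum_eq_zero_iff.1 hrest a haj
    exact hda this

lemma homogeneousSubmodule_one_le_span :
    homogeneousSubmodule (Fin ℓ) K 1 ≤
      span K (Set.range (MvPolynomial.X : Fin ℓ → MvPolynomial (Fin ℓ) K)) := by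
  intro f hf
  rw [mem_homogeneousSubmodule] at hf
  rw [f.as_sum]
  refine Submodule.sum_mem _ fun d hd => ?_
  have hdeg : d.degree = 1 := by
    have := hf (MvPolynomial.mem_support_iff.1 hd)
    rw [Finsupp.degree_eq_weight_one]; exact this
  obtain ⟨j, rfl⟩ := degree_one_eq_single hdeg
  have : (monomial (Finsupp.single j 1)) (coeff (Finsupp.single j 1) f) =
      (coeff (Finsupp.single j 1) f) • MvPolynomial.X j := by
    rw [smul_eq_C_mul, MvPolynomial.X, MvPolynomial.C_mul_monomial, mul_one]
  rw [this]
  exact Submodule.smul_mem _ _ (subset_span ⟨j, rfl⟩)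


section Phi

variable (πl : MvPolynomial (Fin ℓ) K →ₗ[K] MvPolynomial (Fin ℓ) K)

/-- The `K`-linear map `a ↦ C (a - πl a) + X * C (πl a)`. -/
def psiOT : MvPolynomial (Fin ℓ) K →ₗ[K] Polynomial (MvPolynomial (Fin ℓ) K) where
  toFun a := Polynomial.C (a - πl a) + Polynomial.X * Polynomial.C (πl a)
  map_add' a b := by
    have h : a + b - (πl a + πl b) = a - πl a + (b - πl b) := by ring
    simp only [map_add, h, map_add]
    ring
  map_smul' c a := by
    simp only [map_smul, RingHom.id_apply, ← smul_sub, ← Polynomial.smul_C, smul_add,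
      mul_smul_comm]

/-- The "leading form along `W`" deformation map. -/
def PhiOT : MvPolynomial (Fin ℓ) K →ₐ[K] Polynomial (MvPolynomial (Fin ℓ) K) :=
  aeval fun j => Polynomial.C (MvPolynomial.X j - πl (MvPolynomial.X j)) +
    Polynomial.X * Polynomial.C (πl (MvPolynomial.X j))

lemma PhiOT_apply_homogeneous {α : MvPolynomial (Fin ℓ) K}
    (hα : α ∈ homogeneousSubmodule (Fin ℓ) K 1) :
    PhiOT πl α = Polynomial.C (α - πl α) + Polynomial.X * Polynomial.C (πl α) := by
  have h : Set.EqOn (⇑(PhiOT πl).toLinearMap) (⇑(psiOT πl))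
      (Set.range (MvPolynomial.X : Fin ℓ → MvPolynomial (Fin ℓ) K)) := by
    rintro _ ⟨j, rfl⟩
    simp [PhiOT, psiOT]
  exact LinearMap.eqOn_span h (homogeneousSubmodule_one_le_span hα)

/-- coefficient extraction composed with `PhiOT`, as a `K`-linear map. -/
def lamOT (m : ℕ) : MvPolynomial (Fin ℓ) K →ₗ[K] MvPolynomial (Fin ℓ) K :=
  ((Polynomial.lcoeff (MvPolynomial (Fin ℓ) K) m).restrictScalars K) ∘ₗ
    (PhiOT πl).toLinearMap

lemma lamOT_apply (m : ℕ) (f : MvPolynomial (Fin ℓ) K) :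
    lamOT πl m f = (PhiOT πl f).coeff m := rfl

variable {Δ} {X₀ : Finset (Fin n)}

lemma PhiOT_prod (hdeg : ∀ i, Δ i ∈ homogeneousSubmodule (Fin ℓ) K 1)
    (hW : ∀ i ∈ X₀, πl (Δ i) = Δ i) (S : Finset (Fin n)) :
    PhiOT πl (prodForms Δ S) =
      Polynomial.X ^ (S ∩ X₀).card * Polynomial.C (prodForms Δ (S ∩ X₀)) *
        ∏ i ∈ S \ X₀,
          (Polynomial.C (Δ i - πl (Δ i)) + Polynomial.X * Polynomial.C (πl (Δ i))) := by
  rw [prodForms, ← Finset.prod_inter_mul_prod_diff S X₀, map_mul, map_prod, map_prod]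
  congr 1
  · have h1 : ∀ i ∈ S ∩ X₀, PhiOT πl (Δ i) = Polynomial.X * Polynomial.C (Δ i) := by
      intro i hi
      rw [PhiOT_apply_homogeneous πl (hdeg i), hW i (Finset.mem_of_mem_inter_right hi)]
      simp
    rw [Finset.prod_congr rfl h1, Finset.prod_mul_distrib, Finset.prod_const, prodForms,
      map_prod]
  · exact Finset.prod_congr rfl fun i _ => PhiOT_apply_homogeneous πl (hdeg i)

lemma coeff_PhiOT_prod_eq_zero (hdeg : ∀ i, Δ i ∈ homogeneousSubmodule (Fin ℓ) K 1)
    (hW : ∀ i ∈ X₀, πl (Δ i) = Δ i) (S : Finset (Fin n)) (m : ℕ)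
    (hm : m < (S ∩ X₀).card) :
    (PhiOT πl (prodForms Δ S)).coeff m = 0 := by
  rw [PhiOT_prod πl hdeg hW S]
  have h : Polynomial.X ^ (S ∩ X₀).card * Polynomial.C (prodForms Δ (S ∩ X₀)) *
        (∏ i ∈ S \ X₀,
          (Polynomial.C (Δ i - πl (Δ i)) + Polynomial.X * Polynomial.C (πl (Δ i)))) =
      (Polynomial.C (prodForms Δ (S ∩ X₀)) *
        ∏ i ∈ S \ X₀,
          (Polynomial.C (Δ i - πl (Δ i)) + Polynomial.X * Polynomial.C (πl (Δ i)))) *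
        Polynomial.X ^ (S ∩ X₀).card := by ring
  rw [h, Polynomial.coeff_mul_X_pow', if_neg (by omega)]

lemma coeff_PhiOT_top (hdeg : ∀ i, Δ i ∈ homogeneousSubmodule (Fin ℓ) K 1)
    (hW : ∀ i ∈ X₀, πl (Δ i) = Δ i) (T : Finset (Fin n)) (hT : T ⊆ X₀) :
    (PhiOT πl (prodForms Δ (univ \ T))).coeff (X₀.card - T.card) =
      prodForms Δ (X₀ \ T) * ∏ i ∈ univ \ X₀, (Δ i - πl (Δ i)) := by
  have hT' : ∀ x, x ∈ T → x ∈ X₀ := fun x hx => hT hx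
  have h1 : (univ \ T) ∩ X₀ = X₀ \ T := by
    ext x; simp only [Finset.mem_inter, Finset.mem_sdiff, Finset.mem_univ, true_and]; tauto
  have h2 : (univ \ T) \ X₀ = univ \ X₀ := by
    ext x; simp only [Finset.mem_sdiff, Finset.mem_univ, true_and]
    exact ⟨fun h => h.2, fun h => ⟨fun hx => h (hT' x hx), h⟩⟩
  have h3 : (X₀ \ T).card = X₀.card - T.card := Finset.card_sdiff_of_subset hT
  rw [PhiOT_prod πl hdeg hW, h1, h2, h3]
  have h : Polynomial.X ^ (X₀.card - T.card) * Polynomial.C (prodForms Δ (X₀ \ T)) *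
        (∏ i ∈ univ \ X₀,
          (Polynomial.C (Δ i - πl (Δ i)) + Polynomial.X * Polynomial.C (πl (Δ i)))) =
      (Polynomial.C (prodForms Δ (X₀ \ T)) *
        ∏ i ∈ univ \ X₀,
          (Polynomial.C (Δ i - πl (Δ i)) + Polynomial.X * Polynomial.C (πl (Δ i)))) *
        Polynomial.X ^ (X₀.card - T.card) := by ring
  rw [h, Polynomial.coeff_mul_X_pow', if_pos le_rfl, Nat.sub_self,
    Polynomial.coeff_C_mul, Polynomial.coeff_zero_eq_eval_zero, Polynomial.eval_prod]
  simp

end Phi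

section Main

variable {Δ : Fin n → MvPolynomial (Fin ℓ) K} {X₀ : Finset (Fin n)}
variable (πl : MvPolynomial (Fin ℓ) K →ₗ[K] MvPolynomial (Fin ℓ) K)

lemma lamOT_eq_zero_on_PXk (hdeg : ∀ i, Δ i ∈ homogeneousSubmodule (Fin ℓ) K 1)
    (hW : ∀ i ∈ X₀, πl (Δ i) = Δ i) (hflat : IsFlat Δ X₀) {Y : Finset (Fin n)}
    (hY : ¬ Y ⊆ X₀) {k : ℕ} (hk : k ≤ X₀.card) {p : MvPolynomial (Fin ℓ) K}
    (hp : p ∈ PXk Δ Y k) :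
    lamOT πl (X₀.card - k) p = 0 := by
  induction hp using span_induction with
  | mem x hx =>
    obtain ⟨S, hcl, hcard, rfl⟩ := hx
    rw [lamOT_apply]
    apply coeff_PhiOT_prod_eq_zero πl hdeg hW
    have hsub : X₀ ∩ (univ \ S) ⊆ univ \ S := Finset.inter_subset_right
    have hble : (X₀ ∩ (univ \ S)).card ≤ k := hcard ▸ Finset.card_le_card hsub
    have hb : (X₀ ∩ (univ \ S)).card < k := by
      rcases lt_or_eq_of_le hble with h | h
      · exact h
      · exfalso
        have heq : X₀ ∩ (univ \ S) = univ \ S :=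
          Finset.eq_of_subset_of_card_le hsub (by omega)
        have hsub2 : univ \ S ⊆ X₀ := by
          rw [← heq]; exact Finset.inter_subset_left
        have : Y ⊆ X₀ := by
          calc Y = clos Δ (univ \ S) := hcl.symm
            _ ⊆ clos Δ X₀ := clos_mono Δ hsub2
            _ = X₀ := hflat
        exact hY this
    have hXS : X₀ \ S = X₀ ∩ (univ \ S) := by
      ext x; simp [Finset.mem_sdiff, Finset.mem_inter]
    have hax : (S ∩ X₀).card + (X₀ \ S).card = X₀.card := by
      rw [Finset.inter_comm]; exact Finset.card_inter_add_card_sdiff X₀ S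
    have hXScard : (X₀ \ S).card = (X₀ ∩ (univ \ S)).card := by rw [hXS]
    omega
  | zero => simp
  | add x y hx hy ihx ihy => rw [map_add, ihx, ihy, add_zero]
  | smul c x hx ih => rw [map_smul, ih, smul_zero]

lemma lamOT_mul_on_PXk (hdeg : ∀ i, Δ i ∈ homogeneousSubmodule (Fin ℓ) K 1)
    (hW : ∀ i ∈ X₀, πl (Δ i) = Δ i) {k : ℕ} {p : MvPolynomial (Fin ℓ) K}
    (hp : p ∈ PXk Δ X₀ k) :
    prodForms Δ (univ \ X₀) * lamOT πl (X₀.card - k) p =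
      (∏ i ∈ univ \ X₀, (Δ i - πl (Δ i))) * p := by
  induction hp using span_induction with
  | mem x hx =>
    obtain ⟨S, hcl, hcard, rfl⟩ := hx
    set T := univ \ S with hTdef
    have hS : S = univ \ T := by
      rw [hTdef, Finset.sdiff_sdiff_self_left, Finset.univ_inter]
    clear_value T
    have hT : T ⊆ X₀ := hcl ▸ subset_clos Δ T
    have hT' : ∀ x, x ∈ T → x ∈ X₀ := fun x hx => hT hx
    rw [lamOT_apply, ← hcard, hS]
    rw [coeff_PhiOT_top πl hdeg hW T hT]
    have hunion : univ \ T = (univ \ X₀) ∪ (X₀ \ T) := by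
      ext x
      simp only [Finset.mem_sdiff, Finset.mem_univ, true_and, Finset.mem_union, not_not]
      constructor
      · intro hx
        by_cases hxX : x ∈ X₀
        · exact Or.inr ⟨hxX, hx⟩
        · exact Or.inl hxX
      · rintro (hx | ⟨hx1, hx2⟩)
        · intro hc; exact hx (hT' x hc)
        · exact hx2
    have hdisj : Disjoint (univ \ X₀) (X₀ \ T) := by
      rw [Finset.disjoint_left]
      intro a ha hb
      simp only [Finset.mem_sdiff, Finset.mem_univ, true_and] at ha hb
      exact ha hb.1
    conv_rhs => rw [hunion]
    simp only [prodForms]; rw [Finset.prod_union hdisj]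
    ring
  | zero => simp
  | add x y hx hy ihx ihy => rw [map_add, mul_add, ihx, ihy, mul_add]
  | smul c x hx ih => rw [map_smul, mul_smul_comm, ih, mul_smul_comm]

lemma sum_eq_zero_PXk (hdeg : ∀ i, Δ i ∈ homogeneousSubmodule (Fin ℓ) K 1) (k : ℕ)
    (q : {X : Finset (Fin n) // IsFlat Δ X} → MvPolynomial (Fin ℓ) K)
    (hq : ∀ X, q X ∈ PXk Δ X.1 k)
    (hsum : ∑ X : {X : Finset (Fin n) // IsFlat Δ X}, q X = 0) :
    ∀ X, q X = 0 := by
  by_contra hcon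
  push_neg at hcon
  obtain ⟨Z, hZ⟩ := hcon
  have hsne : (Finset.univ.filter fun X : {X : Finset (Fin n) // IsFlat Δ X} =>
      q X ≠ 0).Nonempty := ⟨Z, by simp [hZ]⟩
  obtain ⟨X₀, hX₀mem, hX₀min⟩ := Finset.exists_min_image _ (fun X => X.1.card) hsne
  have hX₀ne : q X₀ ≠ 0 := (Finset.mem_filter.1 hX₀mem).2
  have hflat : IsFlat Δ X₀.1 := X₀.2
  by_cases hk : k ≤ X₀.1.card
  · obtain ⟨Cp, hCp⟩ := Submodule.exists_isCompl (span K (Δ '' (X₀.1 : Set (Fin n))))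
    set W := span K (Δ '' (X₀.1 : Set (Fin n))) with hWdef
    set πl : MvPolynomial (Fin ℓ) K →ₗ[K] MvPolynomial (Fin ℓ) K :=
      W.subtype ∘ₗ (Submodule.projectionOnto W Cp hCp) with hπl
    have hWmem : ∀ i ∈ X₀.1, Δ i ∈ W := fun i hi =>
      subset_span ⟨i, by simpa using hi, rfl⟩
    have hW : ∀ i ∈ X₀.1, πl (Δ i) = Δ i := by
      intro i hi
      have h1 : Δ i = ((⟨Δ i, hWmem i hi⟩ : W) : MvPolynomial (Fin ℓ) K) := rfl
      rw [hπl, LinearMap.comp_apply]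
      conv_lhs => rw [h1, Submodule.projectionOnto_apply_left]
      rfl
    have humem : ∀ a, πl a ∈ W := fun a => SetLike.coe_mem _
    have hune : ∀ i ∈ univ \ X₀.1, Δ i - πl (Δ i) ≠ 0 := by
      intro i hi h0
      rw [sub_eq_zero] at h0
      have hDi : Δ i ∈ W := h0 ▸ humem (Δ i)
      have : i ∈ clos Δ X₀.1 := (mem_clos_iff Δ).2 hDi
      rw [hflat] at this
      simp only [Finset.mem_sdiff, Finset.mem_univ, true_and] at hi
      exact hi this
    have huprod : (∏ i ∈ univ \ X₀.1, (Δ i - πl (Δ i))) ≠ 0 :=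
      Finset.prod_ne_zero_iff.2 hune
    have hz : ∀ X ∈ (Finset.univ : Finset {X : Finset (Fin n) // IsFlat Δ X}), X ≠ X₀ →
        lamOT πl (X₀.1.card - k) (q X) = 0 := by
      intro X _ hne
      by_cases hq0 : q X = 0
      · rw [hq0, map_zero]
      · have hXmem : X ∈ Finset.univ.filter fun X => q X ≠ 0 :=
          Finset.mem_filter.2 ⟨Finset.mem_univ _, hq0⟩
        have hcard : X₀.1.card ≤ X.1.card := hX₀min X hXmem
        have hnsub : ¬ X.1 ⊆ X₀.1 := by
          intro hsub
          exact hne (Subtype.ext (Finset.eq_of_subset_of_card_le hsub hcard))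
        exact lamOT_eq_zero_on_PXk πl hdeg hW hflat hnsub hk (hq X)
    have hlam0 : lamOT πl (X₀.1.card - k) (q X₀) = 0 := by
      have h0 : ∑ X : {X : Finset (Fin n) // IsFlat Δ X},
          lamOT πl (X₀.1.card - k) (q X) = 0 := by
        rw [← map_sum, hsum, map_zero]
      rw [Finset.sum_eq_single_of_mem X₀ (Finset.mem_univ _) hz] at h0
      exact h0
    have hmul : (∏ i ∈ univ \ X₀.1, (Δ i - πl (Δ i))) * q X₀ = 0 := by
      rw [← lamOT_mul_on_PXk πl hdeg hW (hq X₀), hlam0, mul_zero]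
    exact hX₀ne ((mul_eq_zero.1 hmul).resolve_left huprod)
  · apply hX₀ne
    have hmem : q X₀ ∈ PXk Δ X₀.1 k := hq X₀
    have hempty : {p : MvPolynomial (Fin ℓ) K | ∃ S : Finset (Fin n),
        clos Δ (univ \ S) = X₀.1 ∧ (univ \ S).card = k ∧ p = prodForms Δ S} = ∅ := by
      ext p
      simp only [Set.mem_setOf_eq, Set.mem_empty_iff_false, iff_false]
      rintro ⟨S, hcl, hcard, rfl⟩
      have hsub : univ \ S ⊆ X₀.1 := hcl ▸ subset_clos Δ (univ \ S)
      have := Finset.card_le_card hsub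
      omega
    rw [PXk, hempty, span_empty, Submodule.mem_bot] at hmem
    exact hmem

lemma homogeneousComponent_mem_PXk {X : Finset (Fin n)}
    (hdeg : ∀ i, Δ i ∈ homogeneousSubmodule (Fin ℓ) K 1) (d : ℕ)
    {p : MvPolynomial (Fin ℓ) K} (hp : p ∈ PX Δ X) :
    homogeneousComponent d p ∈ PXk Δ X (n - d) := by
  induction hp using span_induction with
  | mem x hx =>
    obtain ⟨S, hcl, rfl⟩ := hx
    have hhom : prodForms Δ S ∈ homogeneousSubmodule (Fin ℓ) K S.card := by
      rw [mem_homogeneousSubmodule, prodForms]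
      have h := MvPolynomial.IsHomogeneous.prod S Δ (fun _ => 1)
        (fun i _ => (mem_homogeneousSubmodule _ _).1 (hdeg i))
      simpa using h
    rw [homogeneousComponent_of_mem hhom]
    split_ifs with h
    · apply subset_span
      refine ⟨S, hcl, ?_, rfl⟩
      rw [Finset.card_sdiff_of_subset (Finset.subset_univ S), Finset.card_univ, Fintype.card_fin, h]
    · exact zero_mem _
  | zero => rw [map_zero]; exact zero_mem _
  | add x y hx hy ihx ihy => rw [map_add]; exact add_mem ihx ihy
  | smul c x hx ih => rw [map_smul]; exact smul_mem _ _ ih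

lemma sum_eq_zero_PX (hdeg : ∀ i, Δ i ∈ homogeneousSubmodule (Fin ℓ) K 1)
    (q : {X : Finset (Fin n) // IsFlat Δ X} → MvPolynomial (Fin ℓ) K)
    (hq : ∀ X, q X ∈ PX Δ X.1)
    (hsum : ∑ X : {X : Finset (Fin n) // IsFlat Δ X}, q X = 0) :
    ∀ X, q X = 0 := by
  intro X
  have hcomp : ∀ d, homogeneousComponent d (q X) = 0 := by
    intro d
    exact sum_eq_zero_PXk hdeg (n - d) (fun Y => homogeneousComponent d (q Y))
      (fun Y => homogeneousComponent_mem_PXk hdeg d (hq Y))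
      (by rw [← map_sum, hsum, map_zero]) X
  calc q X = ∑ i ∈ Finset.range ((q X).totalDegree + 1), homogeneousComponent i (q X) :=
        (sum_homogeneousComponent _).symm
    _ = 0 := Finset.sum_eq_zero fun i _ => hcomp i

lemma indep_part (hdeg : ∀ i, Δ i ∈ homogeneousSubmodule (Fin ℓ) K 1) :
    iSupIndep (fun X : {X : Finset (Fin n) // IsFlat Δ X} => PX Δ X.1) := by
  rw [iSupIndep_def]
  intro X
  rw [Submodule.disjoint_def]
  intro p hpX hpsup
  rw [Submodule.mem_iSup_iff_exists_finsupp] at hpsup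
  obtain ⟨f, hf, hfsum⟩ := hpsup
  have hfX : f X = 0 := by
    have h := hf X
    rw [iSup_neg (by simp)] at h
    simpa using h
  have hfY : ∀ Y, Y ≠ X → f Y ∈ PX Δ Y.1 := by
    intro Y hY
    have h := hf Y
    rwa [iSup_pos hY] at h
  have hsumf : ∑ Y : {X' : Finset (Fin n) // IsFlat Δ X'}, f Y = p := by
    rw [← hfsum]
    exact (Finsupp.sum_fintype f (fun _ xi => xi) (fun _ => rfl)).symm
  set q : {X' : Finset (Fin n) // IsFlat Δ X'} → MvPolynomial (Fin ℓ) K :=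
    Function.update (fun Y => f Y) X (-p) with hqdef
  have hqmem : ∀ Y, q Y ∈ PX Δ Y.1 := by
    intro Y
    by_cases hYX : Y = X
    · subst hYX
      rw [hqdef, Function.update_self]
      exact neg_mem hpX
    · rw [hqdef, Function.update_of_ne hYX]
      exact hfY Y hYX
  have hqsum : ∑ Y, q Y = 0 := by
    rw [hqdef, Finset.sum_update_of_mem (Finset.mem_univ X)]
    have h2 : ∑ Y ∈ Finset.univ \ {X}, f Y = p := by
      rw [← hsumf, show ((Finset.univ : Finset {X' : Finset (Fin n) // IsFlat Δ X'}) \ {X}) =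
        Finset.univ.erase X from (Finset.erase_eq _ _).symm]
      exact Finset.sum_erase _ hfX
    rw [h2, neg_add_cancel]
  have hq0 := sum_eq_zero_PX hdeg q hqmem hqsum X
  rw [hqdef, Function.update_self] at hq0
  exact neg_eq_zero.1 hq0

lemma sup_part :
    (⨆ X : {X : Finset (Fin n) // IsFlat Δ X}, PX Δ X.1) = Pspace Δ := by
  refine le_antisymm (iSup_le fun X => ?_) ?_
  · rw [PX]
    apply span_le.2
    rintro p ⟨S, hclS, rfl⟩
    exact subset_span ⟨S, rfl⟩
  · rw [Pspace]
    apply span_le.2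
    rintro _ ⟨S, rfl⟩
    refine Submodule.mem_iSup_of_mem ⟨clos Δ (univ \ S), isFlat_clos Δ _⟩ ?_
    exact subset_span ⟨S, rfl, rfl⟩

end Main

end OTProof

end OTProof

/-- Orlik–Terao direct sum decomposition: `P(Δ)` is the direct sum,
over all flats `X` of `M(Δ)`, of the subspaces `P(Δ)_X`. -/
theorem statement0 {K : Type*} [Field K] {ℓ n : ℕ}
    (Δ : Fin n → MvPolynomial (Fin ℓ) K)
    (hdeg : ∀ i, Δ i ∈ homogeneousSubmodule (Fin ℓ) K 1)
    (hspan : homogeneousSubmodule (Fin ℓ) K 1 ≤ span K (Set.range Δ)) :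
    iSupIndep (fun X : {X : Finset (Fin n) // IsFlat Δ X} => PX Δ X.1) ∧
      (⨆ X : {X : Finset (Fin n) // IsFlat Δ X}, PX Δ X.1) = Pspace Δ :=
  ⟨OTProof.indep_part hdeg, OTProof.sup_part (Δ := Δ)⟩
end

section
/- Let Δ be a sequence of n linear forms spanning the dual of an ℓ-dimensional vector space V, with all αᵢ nonzero. Fix a linear order on E = {1,…,n}. For each flat X of M(Δ) and each k with r(X) ≤ k ≤ |X|, the dimension of P(Δ)_{X,k} (the span of products α_S, deg α_S = n−k, with closure of E−S equal to X and |E−S| = k) equals the number of independent sets I of M(Δ) with closure X and |I ∪ ex(I)| = k, where ex(I) is the set of externally active elements of I. -/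
open MvPolynomial Finset Submodule
open scoped Classical

noncomputable section Aux
open MvPolynomial Finset Submodule
open scoped Classical
set_option linter.unusedSectionVars false

variable {K : Type*} [Field K] {ι σ : Type*} [Fintype ι] [LinearOrder ι]

namespace AP

variable (Δ : ι → MvPolynomial σ K)

lemma decEq_norm :
    (fun (a b : ι) => Classical.propDecidable (a = b)) = (fun a b => LinearOrder.toDecidableEq a b : DecidableEq ι) :=
  Subsingleton.elim _ _

lemma mem_clos {a : ι} {S : Finset ι} :
    a ∈ clos Δ S ↔ Δ a ∈ span K (Δ '' (S : Set ι)) := by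
  simp [clos]

lemma image_insert (a : ι) (S : Finset ι) :
    (Δ '' ((insert a S : Finset ι) : Set ι)) = insert (Δ a) (Δ '' (S : Set ι)) := by
  simp [Set.image_insert_eq]

instance spanFD (S : Finset ι) : FiniteDimensional K (span K (Δ '' (S : Set ι))) :=
  FiniteDimensional.span_of_finite K (S.finite_toSet.image Δ)

lemma rk_insert_of_mem {a : ι} {S : Finset ι}
    (h : Δ a ∈ span K (Δ '' (S : Set ι))) : rk Δ (insert a S) = rk Δ S := by
  unfold rk
  rw [image_insert, span_insert_eq_span h]

lemma rk_insert_of_not_mem {a : ι} {S : Finset ι}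
    (h : Δ a ∉ span K (Δ '' (S : Set ι))) : rk Δ (insert a S) = rk Δ S + 1 := by
  unfold rk
  rw [image_insert, span_insert]
  have hne : Δ a ≠ 0 := fun h0 => h (h0 ▸ zero_mem _)
  have hinf : span K {Δ a} ⊓ span K (Δ '' (S : Set ι)) = ⊥ := by
    rw [eq_bot_iff]
    rintro x ⟨hx1, hx2⟩
    obtain ⟨c, rfl⟩ := Submodule.mem_span_singleton.mp hx1
    rcases eq_or_ne c 0 with rfl | hc
    · simp
    · exact absurd ((Submodule.smul_mem_iff _ hc).mp hx2) h
  have := finrank_sup_add_finrank_inf_eq (span K {Δ a}) (span K (Δ '' (S : Set ι)))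
  rw [hinf, finrank_bot, add_zero, finrank_span_singleton hne] at this
  omega

lemma rk_insert_le (a : ι) (S : Finset ι) : rk Δ (insert a S) ≤ rk Δ S + 1 := by
  by_cases h : Δ a ∈ span K (Δ '' (S : Set ι))
  · rw [rk_insert_of_mem Δ h]; omega
  · rw [rk_insert_of_not_mem Δ h]

lemma span_mono_of_subset {S T : Finset ι} (h : S ⊆ T) :
    span K (Δ '' (S : Set ι)) ≤ span K (Δ '' (T : Set ι)) :=
  span_mono (Set.image_mono h)

lemma rk_mono {S T : Finset ι} (h : S ⊆ T) : rk Δ S ≤ rk Δ T :=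
  Submodule.finrank_mono (span_mono_of_subset Δ h)

lemma rk_le_card (S : Finset ι) : rk Δ S ≤ S.card := by
  induction S using Finset.induction with
  | empty => simp [rk]
  | @insert a S ha ih =>
      calc rk Δ (insert a S) ≤ rk Δ S + 1 := rk_insert_le Δ a S
      _ ≤ S.card + 1 := by omega
      _ = (insert a S).card := by rw [Finset.card_insert_of_notMem ha]

lemma rk_union_le (S T : Finset ι) : rk Δ (S ∪ T) ≤ rk Δ S + T.card := by
  induction T using Finset.induction with
  | empty => simp
  | @insert a T ha ih =>
      rw [Finset.union_insert, Finset.card_insert_of_notMem ha]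
      have := rk_insert_le Δ a (S ∪ T)
      omega

/-- Independence is downward closed. -/
lemma indep_subset {S T : Finset ι} (hT : Indep Δ T) (h : S ⊆ T) : Indep Δ S := by
  have h1 : T = S ∪ (T \ S) := by rw [Finset.union_sdiff_of_subset h]
  have h2 : rk Δ T ≤ rk Δ S + (T \ S).card := by
    calc rk Δ T = rk Δ (S ∪ (T \ S)) := by rw [← h1]
    _ ≤ rk Δ S + (T \ S).card := rk_union_le Δ S (T \ S)
  have h3 : (T \ S).card = T.card - S.card := Finset.card_sdiff_of_subset h
  have h4 := rk_le_card Δ S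
  have h5 := Finset.card_le_card h
  unfold Indep at hT ⊢
  omega

lemma indep_not_mem_span_erase {S : Finset ι} (hS : Indep Δ S) {a : ι} (ha : a ∈ S) :
    Δ a ∉ span K (Δ '' ((S.erase a : Finset ι) : Set ι)) := by
  intro h
  have h1 : insert a (S.erase a) = S := Finset.insert_erase ha
  have h2 : rk Δ S = rk Δ (S.erase a) := by
    conv_lhs => rw [← h1]
    exact rk_insert_of_mem Δ h
  have h3 := rk_le_card Δ (S.erase a)
  have h4 : (S.erase a).card = S.card - 1 := Finset.card_erase_of_mem ha
  have h5 : 0 < S.card := Finset.card_pos.mpr ⟨a, ha⟩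
  unfold Indep at hS
  omega

/-- Build independence from a "greedy" condition. -/
lemma indep_of_forall_not_mem_span_gt {A : Finset ι}
    (h : ∀ a ∈ A, Δ a ∉ span K (Δ '' ((A.filter (a < ·) : Finset ι) : Set ι))) :
    Indep Δ A := by
  revert h
  induction A using Finset.strongInduction with
  | _ A ih =>
      intro h
      rcases A.eq_empty_or_nonempty with rfl | hne
      · simp [Indep, rk]
      obtain ⟨a, ha, hmin⟩ := Finset.exists_min_image A id hne
      have hfa : A.filter (a < ·) = A.erase a := by
        ext x
        simp only [Finset.mem_filter, Finset.mem_erase]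
        constructor
        · rintro ⟨hx, hlt⟩; exact ⟨ne_of_gt hlt, hx⟩
        · rintro ⟨hne', hx⟩; exact ⟨hx, lt_of_le_of_ne (hmin x hx) (Ne.symm hne')⟩
      have hins : insert a (A.erase a) = A := Finset.insert_erase ha
      have hnotmem : Δ a ∉ span K (Δ '' ((A.erase a : Finset ι) : Set ι)) := by
        rw [← hfa]; exact h a ha
      have hind : Indep Δ (A.erase a) := by
        apply ih _ (Finset.erase_ssubset ha)
        intro b hb
        have hb' : b ∈ A := Finset.mem_of_mem_erase hb
        intro hmem
        exact h b hb' (span_mono_of_subset Δ (Finset.filter_subset_filter _ (Finset.erase_subset a A)) hmem)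
      unfold Indep at hind ⊢
      conv_lhs => rw [← hins]
      rw [rk_insert_of_not_mem Δ hnotmem, hind, Finset.card_erase_of_mem ha]
      have : 0 < A.card := Finset.card_pos.mpr hne
      omega

end AP
end Aux
noncomputable section Aux2
open MvPolynomial Finset Submodule
open scoped Classical
set_option linter.unusedSectionVars false

variable {K : Type*} [Field K] {ι σ : Type*} [Fintype ι] [LinearOrder ι]

namespace AP

variable (Δ : ι → MvPolynomial σ K)

lemma dep_exists {F : Finset ι} (h : ¬ Indep Δ F) :
    ∃ a ∈ F, Δ a ∈ span K (Δ '' ((F.erase a : Finset ι) : Set ι)) := by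
  by_contra hc
  push_neg at hc
  exact h (indep_of_forall_not_mem_span_gt Δ (fun a ha hmem => hc a ha
    (span_mono_of_subset Δ (fun x hx => by
      simp only [Finset.mem_filter] at hx
      exact Finset.mem_erase.mpr ⟨ne_of_gt hx.2, hx.1⟩) hmem)))

lemma span_union_eq {A B : Finset ι}
    (h : ∀ b ∈ B, Δ b ∈ span K (Δ '' (A : Set ι))) :
    span K (Δ '' ((A ∪ B : Finset ι) : Set ι)) = span K (Δ '' (A : Set ι)) := by
  apply le_antisymm
  · rw [Finset.coe_union, Set.image_union, span_union, sup_le_iff]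
    refine ⟨le_refl _, ?_⟩
    rw [span_le]
    rintro x ⟨b, hb, rfl⟩
    exact h b hb
  · exact span_mono_of_subset Δ Finset.subset_union_left

lemma clos_eq_of_span_eq {A B : Finset ι}
    (h : span K (Δ '' (A : Set ι)) = span K (Δ '' (B : Set ι))) :
    clos Δ A = clos Δ B := by
  ext a; rw [mem_clos, mem_clos, h]

/-- Minimal spanning subset. -/
lemma exists_minimal_subset {x : MvPolynomial σ K} {F0 : Finset ι}
    (h : x ∈ span K (Δ '' (F0 : Set ι))) :
    ∃ F ⊆ F0, x ∈ span K (Δ '' (F : Set ι)) ∧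
      ∀ f ∈ F, x ∉ span K (Δ '' ((F.erase f : Finset ι) : Set ι)) := by
  classical
  set 𝒞 : Finset (Finset ι) := F0.powerset.filter (fun F => x ∈ span K (Δ '' (F : Set ι))) with h𝒞
  have hne : 𝒞.Nonempty := ⟨F0, by simp [h𝒞, h]⟩
  obtain ⟨F, hF, hmin⟩ := Finset.exists_min_image 𝒞 Finset.card hne
  simp only [h𝒞, Finset.mem_filter, Finset.mem_powerset] at hF
  refine ⟨F, hF.1, hF.2, ?_⟩
  intro f hf hmem
  have hFf : F.erase f ∈ 𝒞 := by
    simp only [h𝒞, Finset.mem_filter, Finset.mem_powerset]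
    exact ⟨(Finset.erase_subset f F).trans hF.1, hmem⟩
  have := hmin _ hFf
  rw [Finset.card_erase_of_mem hf] at this
  have : 0 < F.card := Finset.card_pos.mpr ⟨f, hf⟩
  omega

/-- Fundamental circuit. -/
lemma exists_circuit {e : ι} {F0 : Finset ι} (he : e ∉ F0)
    (h : Δ e ∈ span K (Δ '' (F0 : Set ι))) :
    ∃ F ⊆ F0, IsCircuit Δ (insert e F) := by
  obtain ⟨F, hF0, hmem, hmin⟩ := exists_minimal_subset Δ h
  have heF : e ∉ F := fun hc => he (hF0 hc)
  have hFindep : Indep Δ F := by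
    by_contra hdep
    obtain ⟨a, ha, hspan⟩ := dep_exists Δ hdep
    have : span K (Δ '' (F : Set ι)) = span K (Δ '' ((F.erase a : Finset ι) : Set ι)) := by
      conv_lhs => rw [← Finset.insert_erase ha]
      rw [image_insert, span_insert_eq_span hspan]
    exact hmin a ha (this ▸ hmem)
  refine ⟨F, hF0, ?_, ?_⟩
  · unfold Indep
    have h1 : rk Δ (insert e F) = rk Δ F := rk_insert_of_mem Δ hmem
    have h2 := rk_le_card Δ F
    rw [Finset.card_insert_of_notMem heF]
    omega
  · intro i hi
    rw [decEq_norm]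
    rcases Finset.mem_insert.mp hi with rfl | hiF
    · rw [Finset.erase_insert heF]; exact hFindep
    · have hie : i ≠ e := fun hc => heF (hc ▸ hiF)
      rw [Finset.erase_insert_of_ne (Ne.symm hie)]
      have h1 : rk Δ (insert e (F.erase i)) = rk Δ (F.erase i) + 1 :=
        rk_insert_of_not_mem Δ (hmin i hiF)
      have h2 : Indep Δ (F.erase i) := indep_subset Δ hFindep (Finset.erase_subset i F)
      unfold Indep at h2 ⊢
      rw [Finset.card_insert_of_notMem (fun hc => heF (Finset.mem_of_mem_erase hc)), h1, h2]

lemma circuit_mem_span {C : Finset ι} (hC : IsCircuit Δ C) {e : ι} (he : e ∈ C) :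
    Δ e ∈ span K (Δ '' ((C.erase e : Finset ι) : Set ι)) := by
  by_contra h
  have h1 : rk Δ (insert e (C.erase e)) = rk Δ (C.erase e) + 1 := rk_insert_of_not_mem Δ h
  rw [Finset.insert_erase he] at h1
  have h2 := hC.2 e he
  rw [decEq_norm] at h2
  unfold Indep at h2
  rw [h2, Finset.card_erase_of_mem he] at h1
  have h3 : 0 < C.card := Finset.card_pos.mpr ⟨e, he⟩
  exact hC.1 (by unfold Indep; omega)

lemma circuit_not_subset_indep {C I : Finset ι} (hC : IsCircuit Δ C) (hI : Indep Δ I) :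
    ¬ C ⊆ I := fun h => hC.1 (indep_subset Δ hI h)

/-- Characterization of external activity for an independent set. -/
lemma extAct_iff {I : Finset ι} (hI : Indep Δ I) (e : ι) :
    ExtAct Δ I e ↔ e ∉ I ∧ Δ e ∈ span K (Δ '' ((I.filter (e < ·) : Finset ι) : Set ι)) := by
  constructor
  · rintro ⟨C, hC, hCsub, heC, hmin⟩
    have heI : e ∉ I := by
      intro heI
      have : C ⊆ I := fun x hx => by
        rcases Finset.mem_insert.mp (hCsub hx) with rfl | hxI
        exacts [heI, hxI]
      exact circuit_not_subset_indep Δ hC hI this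
    refine ⟨heI, ?_⟩
    have h1 : Δ e ∈ span K (Δ '' ((C.erase e : Finset ι) : Set ι)) := circuit_mem_span Δ hC heC
    apply span_mono_of_subset Δ (fun x hx => ?_) h1
    obtain ⟨hxe, hxC⟩ := Finset.mem_erase.mp hx
    rcases Finset.mem_insert.mp (hCsub hxC) with rfl | hxI
    · exact absurd rfl hxe
    · exact Finset.mem_filter.mpr ⟨hxI, lt_of_le_of_ne (hmin x hxC) (Ne.symm hxe)⟩
  · rintro ⟨heI, hmem⟩
    have he' : e ∉ I.filter (e < ·) := fun hc => heI (Finset.mem_filter.mp hc).1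
    obtain ⟨F, hF, hcirc⟩ := exists_circuit Δ he' hmem
    refine ⟨insert e F, hcirc, ?_, Finset.mem_insert_self e F, ?_⟩
    · exact Finset.insert_subset_insert e ((hF.trans (Finset.filter_subset _ I)))
    · intro f hf
      rcases Finset.mem_insert.mp hf with rfl | hfF
      · exact le_refl f
      · exact le_of_lt (Finset.mem_filter.mp (hF hfF)).2

lemma exSet_mem {I : Finset ι} (hI : Indep Δ I) (e : ι) :
    e ∈ exSet Δ I ↔ e ∉ I ∧ Δ e ∈ span K (Δ '' ((I.filter (e < ·) : Finset ι) : Set ι)) := by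
  rw [exSet, Finset.mem_filter]
  simp only [Finset.mem_univ, true_and]
  exact extAct_iff Δ hI e

end AP
end Aux2
noncomputable section Aux3
open MvPolynomial Finset Submodule
open scoped Classical
set_option linter.unusedSectionVars false

variable {K : Type*} [Field K] {ι σ : Type*} [Fintype ι] [LinearOrder ι]

namespace AP

variable (Δ : ι → MvPolynomial σ K)

/-- The greedy (reverse-lexicographically first) basis of `T`. -/
def greedy (T : Finset ι) : Finset ι :=
  T.filter (fun t => Δ t ∉ span K (Δ '' ((T.filter (t < ·) : Finset ι) : Set ι)))

lemma greedy_subset (T : Finset ι) : greedy Δ T ⊆ T := Finset.filter_subset _ T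

lemma mem_greedy {T : Finset ι} {t : ι} :
    t ∈ greedy Δ T ↔ t ∈ T ∧ Δ t ∉ span K (Δ '' ((T.filter (t < ·) : Finset ι) : Set ι)) :=
  Finset.mem_filter

lemma greedy_indep (T : Finset ι) : Indep Δ (greedy Δ T) := by
  apply indep_of_forall_not_mem_span_gt
  intro a ha hmem
  exact (mem_greedy Δ |>.mp ha).2
    (span_mono_of_subset Δ (Finset.filter_subset_filter _ (greedy_subset Δ T)) hmem)

lemma greedy_span_ge (T : Finset ι) :
    ∀ N t, t ∈ T → (T.filter (t < ·)).card ≤ N →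
      Δ t ∈ span K (Δ '' (((greedy Δ T).filter (t ≤ ·) : Finset ι) : Set ι)) := by
  intro N
  induction N using Nat.strong_induction_on with
  | _ N ih =>
    intro t ht hcard
    by_cases hg : t ∈ greedy Δ T
    · exact subset_span ⟨t, by simp [hg], rfl⟩
    · have hmem : Δ t ∈ span K (Δ '' ((T.filter (t < ·) : Finset ι) : Set ι)) := by
        by_contra hc
        exact hg ((mem_greedy Δ).mpr ⟨ht, hc⟩)
      refine SetLike.le_def.mp ?_ hmem
      rw [span_le]
      rintro x ⟨u, hu, rfl⟩
      have hu' := Finset.mem_coe.mp hu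
      obtain ⟨huT, htu⟩ := Finset.mem_filter.mp hu'
      have hlt : (T.filter (u < ·)).card < (T.filter (t < ·)).card := by
        apply Finset.card_lt_card
        refine ⟨fun x hx => ?_, fun hsub => ?_⟩
        · obtain ⟨hx1, hx2⟩ := Finset.mem_filter.mp hx
          exact Finset.mem_filter.mpr ⟨hx1, lt_trans htu hx2⟩
        · have : u ∈ T.filter (u < ·) := hsub hu'
          simp at this
      have hN : (T.filter (u < ·)).card < N := lt_of_lt_of_le hlt hcard
      have hu2 := ih _ hN u huT (le_refl _)
      refine SetLike.le_def.mp (span_mono_of_subset Δ ?_) hu2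
      intro s hs
      obtain ⟨hs1, hs2⟩ := Finset.mem_filter.mp hs
      exact Finset.mem_filter.mpr ⟨hs1, le_of_lt (lt_of_lt_of_le htu hs2)⟩

lemma greedy_mem_span_of_mem {T : Finset ι} {t : ι} (ht : t ∈ T) :
    Δ t ∈ span K (Δ '' (((greedy Δ T).filter (t ≤ ·) : Finset ι) : Set ι)) :=
  greedy_span_ge Δ T _ t ht (le_refl _)

lemma greedy_span_eq (T : Finset ι) :
    span K (Δ '' ((greedy Δ T : Finset ι) : Set ι)) = span K (Δ '' (T : Set ι)) := by
  apply le_antisymm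
  · exact span_mono_of_subset Δ (greedy_subset Δ T)
  · rw [span_le]
    rintro x ⟨t, ht, rfl⟩
    refine SetLike.le_def.mp (span_mono_of_subset Δ (Finset.filter_subset _ _))
      (greedy_mem_span_of_mem Δ (Finset.mem_coe.mp ht))

lemma greedy_mem_span_gt {T : Finset ι} {t : ι} (ht : t ∈ T) (hg : t ∉ greedy Δ T) :
    Δ t ∈ span K (Δ '' (((greedy Δ T).filter (t < ·) : Finset ι) : Set ι)) := by
  have hmem : Δ t ∈ span K (Δ '' ((T.filter (t < ·) : Finset ι) : Set ι)) := by
    by_contra hc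
    exact hg ((mem_greedy Δ).mpr ⟨ht, hc⟩)
  refine SetLike.le_def.mp ?_ hmem
  rw [span_le]
  rintro x ⟨u, hu, rfl⟩
  obtain ⟨huT, htu⟩ := Finset.mem_filter.mp (Finset.mem_coe.mp hu)
  refine SetLike.le_def.mp (span_mono_of_subset Δ ?_) (greedy_mem_span_of_mem Δ huT)
  intro s hs
  obtain ⟨hs1, hs2⟩ := Finset.mem_filter.mp hs
  exact Finset.mem_filter.mpr ⟨hs1, lt_of_lt_of_le htu hs2⟩

lemma greedy_ext {T : Finset ι} {t : ι} (ht : t ∈ T) (hg : t ∉ greedy Δ T) :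
    t ∈ exSet Δ (greedy Δ T) :=
  (exSet_mem Δ (greedy_indep Δ T) t).mpr ⟨hg, greedy_mem_span_gt Δ ht hg⟩

lemma exSet_mem_span {I : Finset ι} (hI : Indep Δ I) {e : ι} (he : e ∈ exSet Δ I) :
    Δ e ∈ span K (Δ '' (I : Set ι)) := by
  obtain ⟨-, h⟩ := (exSet_mem Δ hI e).mp he
  exact span_mono_of_subset Δ (Finset.filter_subset _ I) h

lemma span_union_exSet {I : Finset ι} (hI : Indep Δ I) :
    span K (Δ '' ((I ∪ exSet Δ I : Finset ι) : Set ι)) = span K (Δ '' (I : Set ι)) :=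
  span_union_eq Δ (fun b hb => exSet_mem_span Δ hI hb)

lemma loop_not_mem_indep' {I : Finset ι} (hI : Indep Δ I) {i : ι}
    (h0 : Δ i = 0) : i ∉ I := by
  intro hi
  have h1 : rk Δ I = rk Δ (I.erase i) := by
    conv_lhs => rw [← Finset.insert_erase hi]
    exact rk_insert_of_mem Δ (h0 ▸ Submodule.zero_mem _)
  have h2 := rk_le_card Δ (I.erase i)
  have h3 : (I.erase i).card = I.card - 1 := Finset.card_erase_of_mem hi
  have h4 : 0 < I.card := Finset.card_pos.mpr ⟨i, hi⟩
  unfold Indep at hI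
  omega

lemma greedy_unique {I T : Finset ι} (hI : Indep Δ I) (hT : T = I ∪ exSet Δ I) :
    greedy Δ T = I := by
  have hIT : I ⊆ T := hT ▸ Finset.subset_union_left
  have hsplit : ∀ u ∈ T, u ∈ I ∨ u ∈ exSet Δ I := by
    intro u hu
    rw [hT] at hu
    exact Finset.mem_union.mp hu
  have hTle : ∀ t : ι, span K (Δ '' ((T.filter (t < ·) : Finset ι) : Set ι)) ≤
      span K (Δ '' ((I.filter (t < ·) : Finset ι) : Set ι)) := by
    intro t
    rw [span_le]
    rintro x ⟨u, hu, rfl⟩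
    obtain ⟨huT, htu⟩ := Finset.mem_filter.mp (Finset.mem_coe.mp hu)
    rcases hsplit u huT with huI | huE
    · exact subset_span ⟨u, by simp [huI, htu], rfl⟩
    · obtain ⟨-, h⟩ := (exSet_mem Δ hI u).mp huE
      refine SetLike.le_def.mp (span_mono_of_subset Δ ?_) h
      intro s hs
      obtain ⟨hs1, hs2⟩ := Finset.mem_filter.mp hs
      exact Finset.mem_filter.mpr ⟨hs1, lt_trans htu hs2⟩
  apply Finset.Subset.antisymm
  · intro t htg
    obtain ⟨htT, hnot⟩ := (mem_greedy Δ).mp htg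
    rcases hsplit t htT with htI | htE
    · exact htI
    · obtain ⟨-, h⟩ := (exSet_mem Δ hI t).mp htE
      exact absurd (SetLike.le_def.mp (span_mono_of_subset Δ
        (Finset.filter_subset_filter _ hIT)) h) hnot
  · intro t htI
    rw [mem_greedy]
    refine ⟨hIT htI, fun hmem => ?_⟩
    have h1 : Δ t ∈ span K (Δ '' ((I.filter (t < ·) : Finset ι) : Set ι)) := hTle t hmem
    have h2 : I.filter (t < ·) ⊆ I.erase t := by
      intro s hs
      obtain ⟨hs1, hs2⟩ := Finset.mem_filter.mp hs
      exact Finset.mem_erase.mpr ⟨ne_of_gt hs2, hs1⟩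
    exact indep_not_mem_span_erase Δ hI htI (span_mono_of_subset Δ h2 h1)

end AP
end Aux3
noncomputable section Aux4
open MvPolynomial Finset Submodule
open scoped Classical
set_option linter.unusedSectionVars false

variable {K : Type*} [Field K] {ι σ : Type*} [Fintype ι] [LinearOrder ι]

namespace AP

variable (Δ : ι → MvPolynomial σ K)

/-- The index family: independent sets with closure `Y` and `|I ∪ ex(I)| = k`. -/
def idx (Y : Finset ι) (k : ℕ) : Finset (Finset ι) :=
  Finset.univ.filter (fun I => Indep Δ I ∧ clos Δ I = Y ∧ (I ∪ exSet Δ I).card = k)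

lemma mem_idx {Y : Finset ι} {k : ℕ} {I : Finset ι} :
    I ∈ idx Δ Y k ↔ Indep Δ I ∧ clos Δ I = Y ∧ (I ∪ exSet Δ I).card = k := by
  simp [idx]

/-- The claimed basis vector associated to an independent set. -/
def bvec (I : Finset ι) : MvPolynomial σ K :=
  prodForms Δ (Finset.univ \ (I ∪ exSet Δ I))

/-- exchange lemma -/
lemma exchange {x y : MvPolynomial σ K} {s : Set (MvPolynomial σ K)}
    (h1 : x ∈ span K (insert y s)) (h2 : x ∉ span K s) :
    y ∈ span K (insert x s) := by
  rw [span_insert] at h1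
  obtain ⟨z, hz, w, hw, hx⟩ := Submodule.mem_sup.mp h1
  obtain ⟨c, rfl⟩ := Submodule.mem_span_singleton.mp hz
  have hc : c ≠ 0 := by
    rintro rfl
    rw [zero_smul, zero_add] at hx
    exact h2 (hx ▸ hw)
  have hy : y = c⁻¹ • (x - w) := by
    rw [← hx, add_sub_cancel_right, smul_smul, inv_mul_cancel₀ hc, one_smul]
  rw [hy, span_insert]
  refine Submodule.smul_mem _ _ (Submodule.sub_mem _ ?_ ?_)
  · exact Submodule.mem_sup_left (subset_span rfl)
  · exact Submodule.mem_sup_right hw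

/-- weight function for termination -/
def wt (i : ι) : ℕ := (Finset.univ.filter (· < i)).card

lemma wt_lt {i j : ι} (h : i < j) : wt (ι := ι) i < wt j := by
  apply Finset.card_lt_card
  refine ⟨fun x hx => ?_, fun hsub => ?_⟩
  · simp only [Finset.mem_filter, Finset.mem_univ, true_and] at hx ⊢
    exact lt_trans hx h
  · have : i ∈ Finset.univ.filter (· < i) := hsub (by simp [h])
    simp at this

lemma key_span (Y : Finset ι) (k : ℕ) :
    ∀ N, ∀ T : Finset ι, (∑ i ∈ T, wt i) ≤ N → clos Δ T = Y → T.card = k →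
      prodForms Δ (Finset.univ \ T) ∈ span K (bvec Δ '' ((idx Δ Y k : Finset (Finset ι)) : Set (Finset ι))) := by
  intro N
  induction N using Nat.strong_induction_on with
  | _ N ih =>
    intro T hμ hcl hcard
    by_cases hR : ∃ e, e ∉ T ∧ Δ e ∈ span K (Δ '' ((T.filter (e < ·) : Finset ι) : Set ι))
    · -- rewriting step
      obtain ⟨e, heT, hmem⟩ := hR
      obtain ⟨F, hFsub, hFmem, hFmin⟩ := exists_minimal_subset Δ hmem
      have heU : e ∈ Finset.univ \ T := Finset.mem_sdiff.mpr ⟨Finset.mem_univ e, heT⟩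
      rcases F.eq_empty_or_nonempty with rfl | hFne
      · -- Δ e = 0, the product vanishes
        have h0 : Δ e = 0 := by
          simpa using hFmem
        have : prodForms Δ (Finset.univ \ T) = 0 := by
          unfold prodForms
          exact Finset.prod_eq_zero heU h0
        rw [this]
        exact Submodule.zero_mem _
      -- nonempty minimal F
      have hq : prodForms Δ (Finset.univ \ T) =
          Δ e * prodForms Δ ((Finset.univ \ T).erase e) := by
        unfold prodForms
        exact (Finset.mul_prod_erase _ Δ heU).symm
      set q := prodForms Δ ((Finset.univ \ T).erase e) with hqdef
      -- the multiplication-by-q map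
      have hmul : Δ e * q ∈ span K (⇑(LinearMap.mulRight K q) '' (Δ '' ((F : Finset ι) : Set ι))) := by
        have := Submodule.mem_map_of_mem (f := LinearMap.mulRight K q) hFmem
        rw [Submodule.map_span] at this
        exact this
      rw [hq]
      refine SetLike.le_def.mp ?_ hmul
      rw [span_le]
      rintro x ⟨y, ⟨f, hf, rfl⟩, rfl⟩
      have hfF : f ∈ F := Finset.mem_coe.mp hf
      have hfT : f ∈ T := (Finset.mem_filter.mp (hFsub hfF)).1
      have hef : e < f := (Finset.mem_filter.mp (hFsub hfF)).2
      -- T' = insert e (T.erase f)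
      set T' : Finset ι := insert e (T.erase f) with hT'def
      have hsets : insert f ((Finset.univ \ T).erase e) = Finset.univ \ T' := by
        ext x
        simp only [Finset.mem_insert, Finset.mem_erase, Finset.mem_sdiff, Finset.mem_univ,
          true_and, hT'def]
        constructor
        · rintro (rfl | ⟨hxe, hxT⟩)
          · rintro (h | h)
            · exact (ne_of_lt hef) h.symm
            · exact h.1 rfl
          · rintro (rfl | h)
            · exact hxe rfl
            · exact hxT h.2
        · intro h
          push_neg at h
          by_cases hxf : x = f
          · exact Or.inl hxf
          · exact Or.inr ⟨h.1, h.2 hxf⟩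
      have hfnm : f ∉ (Finset.univ \ T).erase e :=
        fun hc => (Finset.mem_sdiff.mp (Finset.mem_of_mem_erase hc)).2 hfT
      have hprod : Δ f * q = prodForms Δ (Finset.univ \ T') := by
        rw [← hsets]
        unfold prodForms
        rw [Finset.prod_insert hfnm, hqdef]
        rfl
      show Δ f * q ∈ (span K (bvec Δ '' ((idx Δ Y k : Finset (Finset ι)) : Set (Finset ι))) : Set (MvPolynomial σ K))
      rw [hprod]
      have hxch : Δ f ∈ span K (insert (Δ e) (Δ '' ((F.erase f : Finset ι) : Set ι))) := by
        apply exchange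
        · have himg : (insert (Δ f) (Δ '' ((F.erase f : Finset ι) : Set ι)))
              = Δ '' ((F : Finset ι) : Set ι) := by
            rw [← image_insert, Finset.insert_erase hfF]
          rw [himg]
          exact hFmem
        · exact hFmin f hfF
      have hspanT' : span K (Δ '' (T' : Set ι)) = span K (Δ '' (T : Set ι)) := by
        apply le_antisymm
        · rw [span_le]
          rintro x ⟨u, hu, rfl⟩
          rcases Finset.mem_insert.mp (Finset.mem_coe.mp hu) with rfl | huT
          · exact span_mono_of_subset Δ (hFsub.trans (Finset.filter_subset _ T)) hFmem
          · exact subset_span ⟨u, Finset.mem_coe.mpr (Finset.mem_of_mem_erase huT), rfl⟩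
        · rw [span_le]
          rintro x ⟨u, hu, rfl⟩
          by_cases huf : u = f
          · subst huf
            refine SetLike.le_def.mp ?_ hxch
            have himg2 : insert (Δ e) (Δ '' ((F.erase u : Finset ι) : Set ι))
                = Δ '' ((insert e (F.erase u) : Finset ι) : Set ι) := (image_insert Δ e (F.erase u)).symm
            rw [himg2]
            apply span_mono_of_subset
            intro g hg
            rcases Finset.mem_insert.mp hg with rfl | hg'
            · exact Finset.mem_insert_self _ _
            · exact Finset.mem_insert_of_mem (Finset.mem_erase.mpr
                ⟨(Finset.mem_erase.mp hg').1,
                  (Finset.mem_filter.mp (hFsub (Finset.mem_of_mem_erase hg'))).1⟩)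
          · exact subset_span ⟨u, Finset.mem_coe.mpr (Finset.mem_insert_of_mem
              (Finset.mem_erase.mpr ⟨huf, Finset.mem_coe.mp hu⟩)), rfl⟩
      have hclT' : clos Δ T' = Y := by
        rw [← hcl]
        exact clos_eq_of_span_eq Δ hspanT'
      have heTf : e ∉ T.erase f := fun hc => heT (Finset.mem_of_mem_erase hc)
      have hcardT' : T'.card = k := by
        rw [hT'def, Finset.card_insert_of_notMem heTf, Finset.card_erase_of_mem hfT]
        have : 0 < T.card := Finset.card_pos.mpr ⟨f, hfT⟩
        omega
      have hμ' : (∑ i ∈ T', wt i) < (∑ i ∈ T, wt i) := by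
        rw [hT'def, Finset.sum_insert heTf]
        have h1 : ∑ i ∈ T, wt i = wt f + ∑ i ∈ T.erase f, wt i :=
          (Finset.add_sum_erase T wt hfT).symm
        rw [h1]
        have := wt_lt (ι := ι) hef
        omega
      exact ih (∑ i ∈ T', wt i) (lt_of_lt_of_le hμ' hμ) T' (le_refl _) hclT' hcardT'
    · -- terminal case
      push_neg at hR
      set I := greedy Δ T with hIdef
      have hIindep : Indep Δ I := greedy_indep Δ T
      have hIT : I ⊆ T := greedy_subset Δ T
      have hTsub : T ⊆ I ∪ exSet Δ I := by
        intro t ht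
        by_cases hg : t ∈ I
        · exact Finset.mem_union_left _ hg
        · exact Finset.mem_union_right _ (greedy_ext Δ ht hg)
      have hEsub : exSet Δ I ⊆ T := by
        intro e he
        obtain ⟨heI, hmem⟩ := (exSet_mem Δ hIindep e).mp he
        by_contra heT
        exact (hR e heT) (span_mono_of_subset Δ (Finset.filter_subset_filter _ hIT) hmem)
      have hTeq : I ∪ exSet Δ I = T := by
        apply Finset.Subset.antisymm
        · exact Finset.union_subset hIT hEsub
        · exact hTsub
      have hIcl : clos Δ I = Y := by
        rw [← hcl]
        exact clos_eq_of_span_eq Δ (greedy_span_eq Δ T)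
      have hIidx : I ∈ idx Δ Y k := mem_idx Δ |>.mpr ⟨hIindep, hIcl, by rw [hTeq]; exact hcard⟩
      have : bvec Δ I = prodForms Δ (Finset.univ \ T) := by rw [bvec, hTeq]
      rw [← this]
      exact subset_span ⟨I, hIidx, rfl⟩

end AP
end Aux4
noncomputable section Aux5
open MvPolynomial Finset Submodule
open scoped Classical
set_option linter.unusedSectionVars false

variable {K : Type*} [Field K] {ι σ : Type*} [Fintype ι] [LinearOrder ι]

namespace AP

variable (Δ : ι → MvPolynomial σ K)

lemma clos_union_exSet {I : Finset ι} (hI : Indep Δ I) :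
    clos Δ (I ∪ exSet Δ I) = clos Δ I :=
  clos_eq_of_span_eq Δ (span_union_exSet Δ hI)

lemma PXk_eq (Y : Finset ι) (k : ℕ) :
    PXk Δ Y k = span K (bvec Δ '' ((idx Δ Y k : Finset (Finset ι)) : Set (Finset ι))) := by
  apply le_antisymm
  · rw [PXk, span_le]
    rintro p ⟨S, hclS, hcardS, rfl⟩
    rw [decEq_norm] at hclS hcardS
    have h2 : Finset.univ \ (Finset.univ \ S) = S := by
      rw [Finset.sdiff_sdiff_self_left, Finset.univ_inter]
    have h3 := key_span Δ Y k (∑ i ∈ (Finset.univ \ S), wt i) (Finset.univ \ S)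
      (le_refl _) hclS hcardS
    rw [h2] at h3
    exact h3
  · rw [span_le]
    rintro p ⟨I, hI, rfl⟩
    obtain ⟨hind, hcl, hcard⟩ := (mem_idx Δ).mp (Finset.mem_coe.mp hI)
    apply subset_span
    refine ⟨Finset.univ \ (I ∪ exSet Δ I), ?_, ?_, rfl⟩
    · rw [decEq_norm]
      rw [Finset.sdiff_sdiff_self_left, Finset.univ_inter, clos_union_exSet Δ hind, hcl]
    · rw [decEq_norm]
      rw [Finset.sdiff_sdiff_self_left, Finset.univ_inter, hcard]

lemma finrank_PXk (Y : Finset ι) (k : ℕ)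
    (hLI : LinearIndependent K (fun I : {x // x ∈ ((idx Δ Y k : Finset (Finset ι)) : Set (Finset ι))} => bvec Δ (I : Finset ι))) :
    Module.finrank K (PXk Δ Y k) = (idx Δ Y k).card := by
  rw [PXk_eq, Set.image_eq_range (bvec Δ) ((idx Δ Y k : Finset (Finset ι)) : Set (Finset ι))]
  rw [finrank_span_eq_card hLI]
  simpa using Fintype.card_coe (idx Δ Y k)

end AP
end Aux5
noncomputable section Aux6
open MvPolynomial Finset Submodule
open scoped Classical
set_option linter.unusedSectionVars false

variable {K : Type*} [Field K] {σ : Type*}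

namespace AP

lemma degree_one_classify (d : σ →₀ ℕ) (h : d.degree = 1) :
    ∃ j, d = Finsupp.single j 1 := by
  rw [Finsupp.degree_apply] at h
  have hne : d.support.Nonempty := by
    rw [Finsupp.support_nonempty_iff]
    rintro rfl
    simp at h
  obtain ⟨j, hj⟩ := hne
  have hj1 : 1 ≤ d j := Nat.one_le_iff_ne_zero.mpr (Finsupp.mem_support_iff.mp hj)
  have hsupp : d.support ⊆ {j} := by
    intro i hi
    rw [Finset.mem_singleton]
    by_contra hij
    have hi1 : 1 ≤ d i := Nat.one_le_iff_ne_zero.mpr (Finsupp.mem_support_iff.mp hi)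
    have hsub : ({i, j} : Finset σ) ⊆ d.support := by
      intro x hx
      rcases Finset.mem_insert.mp hx with rfl | hx
      · exact hi
      · exact (Finset.mem_singleton.mp hx) ▸ hj
    have hle := Finset.sum_le_sum_of_subset (f := d) hsub
    rw [Finset.sum_pair hij, h] at hle
    omega
  refine ⟨j, Finsupp.eq_single_iff.mpr ⟨hsupp, ?_⟩⟩
  have : d.support = {j} := Finset.Subset.antisymm hsupp (Finset.singleton_subset_iff.mpr hj)
  rw [this, Finset.sum_singleton] at h
  exact h

lemma homoOne_le_spanX :
    (homogeneousSubmodule σ K 1 : Submodule K (MvPolynomial σ K)) ≤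
      span K (Set.range (X : σ → MvPolynomial σ K)) := by
  intro p hp
  rw [mem_homogeneousSubmodule] at hp
  nth_rewrite 1 [p.as_sum]
  apply Submodule.sum_mem
  intro d hd
  have hc : coeff d p ≠ 0 := mem_support_iff.mp hd
  have hdeg : d.degree = 1 := by
    by_contra h
    exact hc (hp.coeff_eq_zero h)
  obtain ⟨j, rfl⟩ := degree_one_classify d hdeg
  have : (monomial (Finsupp.single j 1)) (coeff (Finsupp.single j 1) p)
      = (coeff (Finsupp.single j 1) p) • X j := by
    rw [X, smul_monomial, smul_eq_mul, mul_one]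
  rw [this]
  exact Submodule.smul_mem _ _ (subset_span ⟨j, rfl⟩)

section Phi

variable (m : MvPolynomial σ K) (j0 : σ)

/-- the contraction substitution -/
def phi : MvPolynomial σ K →ₐ[K] MvPolynomial σ K :=
  aeval (fun j => if j = j0 then X j0 - (coeff (Finsupp.single j0 1) m)⁻¹ • m else X j)

lemma phi_X (j : σ) : phi m j0 (X j) =
    if j = j0 then X j0 - (coeff (Finsupp.single j0 1) m)⁻¹ • m else X j := by
  unfold phi
  rw [aeval_X]

lemma phi_formula {p : MvPolynomial σ K} (hp : p ∈ homogeneousSubmodule σ K 1) :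
    phi m j0 p = p - ((coeff (Finsupp.single j0 1) m)⁻¹ * coeff (Finsupp.single j0 1) p) • m := by
  have hsp : p ∈ span K (Set.range (X : σ → MvPolynomial σ K)) := homoOne_le_spanX hp
  clear hp
  induction hsp using Submodule.span_induction with
  | mem x h =>
      obtain ⟨j, rfl⟩ := h
      rw [phi_X]
      rcases eq_or_ne j j0 with rfl | hj
      · rw [if_pos rfl, coeff_X', if_pos rfl, mul_one]
      · rw [if_neg hj, coeff_X',
          if_neg (fun hcontra => hj ((Finsupp.single_left_inj (one_ne_zero)).mp hcontra)),
          mul_zero, zero_smul, sub_zero]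
  | zero => simp
  | add x y hx hy ihx ihy =>
      rw [map_add, ihx, ihy, coeff_add, mul_add, add_smul]
      abel
  | smul a x hx ihx =>
      rw [map_smul, ihx, coeff_smul, smul_eq_mul, smul_sub, smul_smul, mul_left_comm]

lemma phi_mem_H1 (hm : m ∈ homogeneousSubmodule σ K 1) {p : MvPolynomial σ K}
    (hp : p ∈ homogeneousSubmodule σ K 1) : phi m j0 p ∈ homogeneousSubmodule σ K 1 := by
  rw [phi_formula m j0 hp]
  exact sub_mem hp (Submodule.smul_mem _ _ hm)

lemma phi_m_eq_zero (hm : m ∈ homogeneousSubmodule σ K 1)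
    (hc : coeff (Finsupp.single j0 1) m ≠ 0) : phi m j0 m = 0 := by
  rw [phi_formula m j0 hm, inv_mul_cancel₀ hc, one_smul, sub_self]

lemma phi_ker {p : MvPolynomial σ K} (hp : p ∈ homogeneousSubmodule σ K 1)
    (h0 : phi m j0 p = 0) :
    p = ((coeff (Finsupp.single j0 1) m)⁻¹ * coeff (Finsupp.single j0 1) p) • m := by
  have := phi_formula m j0 hp
  rw [h0] at this
  exact (sub_eq_zero.mp this.symm)

lemma map_phi_span_insert (s : Set (MvPolynomial σ K))
    (hm : m ∈ homogeneousSubmodule σ K 1) (hc : coeff (Finsupp.single j0 1) m ≠ 0) :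
    Submodule.map (phi m j0).toLinearMap (span K (insert m s))
      = span K (⇑(phi m j0) '' s) := by
  rw [Submodule.map_span, Set.image_insert_eq]
  have h0 : (phi m j0).toLinearMap m = 0 := phi_m_eq_zero m j0 hm hc
  rw [show ⇑(phi m j0).toLinearMap = ⇑(phi m j0) from rfl] at h0 ⊢
  rw [h0, span_insert_eq_span (Submodule.zero_mem _)]

lemma phi_mem_span_iff (s : Set (MvPolynomial σ K))
    (hm : m ∈ homogeneousSubmodule σ K 1) (hc : coeff (Finsupp.single j0 1) m ≠ 0)
    (hs : s ⊆ (homogeneousSubmodule σ K 1 : Set (MvPolynomial σ K)))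
    {v : MvPolynomial σ K} (hv : v ∈ homogeneousSubmodule σ K 1) :
    phi m j0 v ∈ Submodule.map (phi m j0).toLinearMap (span K (insert m s))
      ↔ v ∈ span K (insert m s) := by
  have hU : span K (insert m s) ≤ homogeneousSubmodule σ K 1 := by
    rw [span_le]
    exact Set.insert_subset hm hs
  constructor
  · rintro ⟨u, hu, hphi⟩
    have hphi' : phi m j0 u = phi m j0 v := hphi
    have hdiff : phi m j0 (v - u) = 0 := by
      rw [map_sub, hphi', sub_self]
    have hvu : v - u ∈ homogeneousSubmodule σ K 1 := sub_mem hv (hU hu)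
    have := phi_ker m j0 hvu hdiff
    have hmem : v - u ∈ span K (insert m s) :=
      this ▸ Submodule.smul_mem _ _ (subset_span (Set.mem_insert m s))
    have := Submodule.add_mem _ hmem hu
    rwa [sub_add_cancel] at this
  · intro hv'
    exact Submodule.mem_map_of_mem hv'

lemma finrank_map_phi_insert (s : Set (MvPolynomial σ K)) (hsf : s.Finite)
    (hm : m ∈ homogeneousSubmodule σ K 1) (hc : coeff (Finsupp.single j0 1) m ≠ 0)
    (hs : s ⊆ (homogeneousSubmodule σ K 1 : Set (MvPolynomial σ K))) :
    Module.finrank K (Submodule.map (phi m j0).toLinearMap (span K (insert m s))) + 1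
      = Module.finrank K (span K (insert m s)) := by
  have hU : span K (insert m s) ≤ homogeneousSubmodule σ K 1 := by
    rw [span_le]
    exact Set.insert_subset hm hs
  haveI : FiniteDimensional K (span K (insert m s)) :=
    FiniteDimensional.span_of_finite K (hsf.insert m)
  set U := span K (insert m s) with hUdef
  set f := (phi m j0).toLinearMap.domRestrict U with hfdef
  have hrank := LinearMap.finrank_range_add_finrank_ker f
  have hrange : LinearMap.range f = Submodule.map (phi m j0).toLinearMap U := by
    rw [hfdef, LinearMap.range_domRestrict]
  have hmU : m ∈ U := subset_span (Set.mem_insert m s)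
  have hmne : m ≠ 0 := fun h => hc (by rw [h, coeff_zero])
  have hker : LinearMap.ker f = span K {(⟨m, hmU⟩ : U)} := by
    apply le_antisymm
    · rintro ⟨u, hu⟩ hk
      have h0 : phi m j0 u = 0 := hk
      have hu1 : u ∈ homogeneousSubmodule σ K 1 := hU hu
      have := phi_ker m j0 hu1 h0
      rw [Submodule.mem_span_singleton]
      refine ⟨(coeff (Finsupp.single j0 1) m)⁻¹ * coeff (Finsupp.single j0 1) u, ?_⟩
      apply Subtype.ext
      exact this.symm
    · rw [span_le, Set.singleton_subset_iff]
      show f ⟨m, hmU⟩ = 0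
      exact phi_m_eq_zero m j0 hm hc
  have hkerrank : Module.finrank K (LinearMap.ker f) = 1 := by
    rw [hker]
    apply finrank_span_singleton
    simp only [ne_eq, Submodule.mk_eq_zero]
    exact hmne
  rw [hrange, hkerrank] at hrank
  exact hrank

end Phi

end AP
end Aux6
noncomputable section Aux7
open MvPolynomial Finset Submodule
open scoped Classical
set_option linter.unusedSectionVars false
attribute [local instance 2000] LinearOrder.toDecidableEq

namespace AP

variable {K : Type*} [Field K] {σ : Type*} {n : ℕ}

/-- push a finset along `Fin.castSucc` -/
def push (A : Finset (Fin n)) : Finset (Fin (n+1)) :=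
  A.map ⟨Fin.castSucc, Fin.castSucc_injective n⟩

/-- pull a finset back along `Fin.castSucc` -/
def pull (B : Finset (Fin (n+1))) : Finset (Fin n) :=
  B.preimage Fin.castSucc (Set.injOn_of_injective (Fin.castSucc_injective n))

@[simp] lemma mem_push {A : Finset (Fin n)} {x : Fin (n+1)} :
    x ∈ push A ↔ ∃ a ∈ A, Fin.castSucc a = x := Finset.mem_map

@[simp] lemma castSucc_mem_push {A : Finset (Fin n)} {a : Fin n} :
    Fin.castSucc a ∈ push A ↔ a ∈ A := by
  simp only [mem_push]
  constructor
  · rintro ⟨b, hb, hba⟩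
    rwa [← Fin.castSucc_injective n hba]
  · intro h; exact ⟨a, h, rfl⟩

@[simp] lemma mem_pull {B : Finset (Fin (n+1))} {j : Fin n} :
    j ∈ pull B ↔ Fin.castSucc j ∈ B := Finset.mem_preimage

lemma last_not_mem_push (A : Finset (Fin n)) : Fin.last n ∉ push A := by
  rw [mem_push]
  rintro ⟨a, -, ha⟩
  exact absurd ha (ne_of_lt (Fin.castSucc_lt_last a))

lemma pull_push (A : Finset (Fin n)) : pull (push A) = A := by
  ext j; simp

lemma push_pull {B : Finset (Fin (n+1))} (h : Fin.last n ∉ B) : push (pull B) = B := by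
  ext x
  rcases Fin.eq_castSucc_or_eq_last x with ⟨y, rfl⟩ | rfl
  · simp
  · simp only [mem_push, mem_pull]
    constructor
    · rintro ⟨a, ha, hc⟩
      exact absurd hc (ne_of_lt (Fin.castSucc_lt_last a))
    · intro hx; exact absurd hx h

lemma push_card (A : Finset (Fin n)) : (push A).card = A.card := Finset.card_map _

lemma push_subset {A B : Finset (Fin n)} (h : A ⊆ B) : push A ⊆ push B := by
  intro x hx
  rw [mem_push] at hx ⊢
  obtain ⟨a, ha, rfl⟩ := hx
  exact ⟨a, h ha, rfl⟩

lemma coe_push (A : Finset (Fin n)) :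
    ((push A : Finset (Fin (n+1))) : Set (Fin (n+1))) = Fin.castSucc '' (A : Set (Fin n)) := by
  ext x; simp [push]

lemma push_filter_lt (A : Finset (Fin n)) (e : Fin n) :
    push (A.filter (e < ·)) = (push A).filter (Fin.castSucc e < ·) := by
  ext x
  simp only [mem_push, Finset.mem_filter]
  constructor
  · rintro ⟨a, ⟨ha, hlt⟩, rfl⟩
    exact ⟨⟨a, ha, rfl⟩, by rwa [Fin.castSucc_lt_castSucc_iff]⟩
  · rintro ⟨⟨a, ha, rfl⟩, hlt⟩
    exact ⟨a, ⟨ha, by rwa [Fin.castSucc_lt_castSucc_iff] at hlt⟩, rfl⟩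

section Minors

variable (Δ : Fin (n+1) → MvPolynomial σ K)

/-- deletion of the last element -/
def del : Fin n → MvPolynomial σ K := fun i => Δ (Fin.castSucc i)

lemma image_del (A : Finset (Fin n)) :
    del Δ '' (A : Set (Fin n)) = Δ '' ((push A : Finset (Fin (n+1))) : Set (Fin (n+1))) := by
  rw [coe_push, Set.image_image]
  rfl

lemma rk_del (A : Finset (Fin n)) : rk (del Δ) A = rk Δ (push A) := by
  unfold rk
  rw [image_del]

lemma indep_del {A : Finset (Fin n)} : Indep (del Δ) A ↔ Indep Δ (push A) := by
  unfold Indep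
  rw [rk_del, push_card]

lemma mem_clos_del {A : Finset (Fin n)} {j : Fin n} :
    j ∈ clos (del Δ) A ↔ Fin.castSucc j ∈ clos Δ (push A) := by
  rw [mem_clos, mem_clos, image_del]
  rfl

lemma exSet_del {A : Finset (Fin n)} (hA : Indep (del Δ) A) {e : Fin n} :
    e ∈ exSet (del Δ) A ↔ Fin.castSucc e ∈ exSet Δ (push A) := by
  rw [exSet_mem _ hA, exSet_mem Δ (indep_del Δ |>.mp hA)]
  rw [← push_filter_lt]
  constructor
  · rintro ⟨h1, h2⟩
    refine ⟨fun hc => h1 (castSucc_mem_push.mp hc), ?_⟩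
    rw [← image_del]
    exact h2
  · rintro ⟨h1, h2⟩
    refine ⟨fun hc => h1 (castSucc_mem_push.mpr hc), ?_⟩
    rw [← image_del] at h2
    exact h2

section Contraction

variable (j0 : σ)

/-- contraction of the last element -/
def contr : Fin n → MvPolynomial σ K :=
  fun i => phi (Δ (Fin.last n)) j0 (Δ (Fin.castSucc i))

variable (hdeg : ∀ i, Δ i ∈ homogeneousSubmodule σ K 1)
  (hc : coeff (Finsupp.single j0 1) (Δ (Fin.last n)) ≠ 0)
lemma image_contr (A : Finset (Fin n)) :
    contr Δ j0 '' (A : Set (Fin n)) = ⇑(phi (Δ (Fin.last n)) j0) '' (Δ '' ((push A : Finset (Fin (n+1))) : Set (Fin (n+1)))) := by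
  rw [← image_del, Set.image_image]
  rfl

lemma image_insert_last (A : Finset (Fin n)) :
    Δ '' ((insert (Fin.last n) (push A) : Finset (Fin (n+1))) : Set (Fin (n+1)))
      = insert (Δ (Fin.last n)) (Δ '' ((push A : Finset (Fin (n+1))) : Set (Fin (n+1)))) := by
  simp [Set.image_insert_eq]

include hdeg hc

lemma span_contr (A : Finset (Fin n)) :
    span K (contr Δ j0 '' (A : Set (Fin n)))
      = Submodule.map (phi (Δ (Fin.last n)) j0).toLinearMap
          (span K (Δ '' ((insert (Fin.last n) (push A) : Finset (Fin (n+1))) : Set (Fin (n+1))))) := by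
  rw [image_insert_last, map_phi_span_insert _ _ _ (hdeg _) hc, image_contr]

lemma rk_contr (A : Finset (Fin n)) :
    rk (contr Δ j0) A + 1 = rk Δ (insert (Fin.last n) (push A)) := by
  unfold rk
  rw [span_contr Δ j0 hdeg hc, image_insert_last]
  refine finrank_map_phi_insert _ _ _ (((push A).finite_toSet).image Δ) (hdeg _) hc ?_
  rintro x ⟨i, -, rfl⟩
  exact hdeg i

lemma indep_contr {A : Finset (Fin n)} :
    Indep (contr Δ j0) A ↔ Indep Δ (insert (Fin.last n) (push A)) := by
  unfold Indep
  rw [Finset.card_insert_of_notMem (last_not_mem_push A), push_card]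
  have := rk_contr Δ j0 hdeg hc A
  omega

lemma mem_span_contr {A : Finset (Fin n)} {j : Fin n} :
    contr Δ j0 j ∈ span K (contr Δ j0 '' (A : Set (Fin n)))
      ↔ Δ (Fin.castSucc j) ∈ span K (Δ '' ((insert (Fin.last n) (push A) : Finset (Fin (n+1))) : Set (Fin (n+1)))) := by
  rw [span_contr Δ j0 hdeg hc, image_insert_last]
  refine phi_mem_span_iff _ _ _ (hdeg _) hc ?_ (hdeg _)
  rintro x ⟨i, -, rfl⟩
  exact hdeg i

lemma mem_clos_contr {A : Finset (Fin n)} {j : Fin n} :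
    j ∈ clos (contr Δ j0) A ↔ Fin.castSucc j ∈ clos Δ (insert (Fin.last n) (push A)) := by
  rw [mem_clos, mem_clos]
  exact mem_span_contr Δ j0 hdeg hc

omit hdeg hc in
lemma filter_insert_last (I' : Finset (Fin n)) (e : Fin n) :
    (insert (Fin.last n) (push I')).filter (Fin.castSucc e < ·)
      = insert (Fin.last n) (push (I'.filter (e < ·))) := by
  ext x
  simp only [Finset.mem_filter, Finset.mem_insert, mem_push]
  rcases Fin.eq_castSucc_or_eq_last x with ⟨y, rfl⟩ | rfl
  · constructor
    · rintro ⟨h1 | ⟨a, ha, hay⟩, h2⟩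
      · exact absurd h1 (ne_of_lt (Fin.castSucc_lt_last y))
      · obtain rfl : a = y := Fin.castSucc_injective n hay
        exact Or.inr ⟨a, ⟨ha, by rwa [Fin.castSucc_lt_castSucc_iff] at h2⟩, rfl⟩
    · rintro (habs | ⟨a, ⟨ha, hlt⟩, hay⟩)
      · exact absurd habs (ne_of_lt (Fin.castSucc_lt_last y))
      · obtain rfl : a = y := Fin.castSucc_injective n hay
        exact ⟨Or.inr ⟨a, ha, rfl⟩, by rwa [Fin.castSucc_lt_castSucc_iff]⟩
  · constructor
    · rintro ⟨-, -⟩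
      exact Or.inl rfl
    · rintro -
      exact ⟨Or.inl rfl, Fin.castSucc_lt_last e⟩

lemma exSet_contr {I' : Finset (Fin n)} (hI' : Indep (contr Δ j0) I') {e : Fin n} :
    e ∈ exSet (contr Δ j0) I' ↔ Fin.castSucc e ∈ exSet Δ (insert (Fin.last n) (push I')) := by
  rw [exSet_mem _ hI', exSet_mem Δ ((indep_contr Δ j0 hdeg hc).mp hI')]
  rw [filter_insert_last]
  constructor
  · rintro ⟨h1, h2⟩
    refine ⟨?_, (mem_span_contr Δ j0 hdeg hc).mp h2⟩
    simp only [Finset.mem_insert, castSucc_mem_push]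
    rintro (h | h)
    · exact absurd h (ne_of_lt (Fin.castSucc_lt_last e))
    · exact h1 h
  · rintro ⟨h1, h2⟩
    refine ⟨fun hc' => h1 ?_, (mem_span_contr Δ j0 hdeg hc).mpr h2⟩
    simp only [Finset.mem_insert, castSucc_mem_push]
    exact Or.inr hc'

end Contraction
end Minors
end AP
end Aux7
noncomputable section Aux8
open MvPolynomial Finset Submodule
open scoped Classical
set_option linter.unusedSectionVars false
attribute [local instance 2000] LinearOrder.toDecidableEq

namespace AP

variable {K : Type*} [Field K] {σ : Type*} {n : ℕ}

lemma pull_union (A B : Finset (Fin (n+1))) : pull (A ∪ B) = pull A ∪ pull B := by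
  ext x; simp [Finset.mem_union]

lemma pull_sdiff (A B : Finset (Fin (n+1))) : pull (A \ B) = pull A \ pull B := by
  ext x; simp [Finset.mem_sdiff]

lemma pull_univ : pull (Finset.univ : Finset (Fin (n+1))) = Finset.univ := by
  ext x; simp

lemma pull_insert_last (B : Finset (Fin (n+1))) :
    pull (insert (Fin.last n) B) = pull B := by
  ext x
  simp only [mem_pull, Finset.mem_insert]
  constructor
  · rintro (h | h)
    · exact absurd h (ne_of_lt (Fin.castSucc_lt_last x))
    · exact h
  · exact Or.inr

lemma pull_erase_last (B : Finset (Fin (n+1))) :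
    pull (B.erase (Fin.last n)) = pull B := by
  ext x
  simp only [mem_pull, Finset.mem_erase]
  exact ⟨fun h => h.2, fun h => ⟨ne_of_lt (Fin.castSucc_lt_last x), h⟩⟩

lemma pull_card_of_not_mem {B : Finset (Fin (n+1))} (h : Fin.last n ∉ B) :
    (pull B).card = B.card := by
  rw [← push_card (pull B), push_pull h]

lemma pull_card_of_mem {B : Finset (Fin (n+1))} (h : Fin.last n ∈ B) :
    (pull B).card + 1 = B.card := by
  have h1 : pull (B.erase (Fin.last n)) = pull B := pull_erase_last B
  have h2 : (pull (B.erase (Fin.last n))).card = (B.erase (Fin.last n)).card :=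
    pull_card_of_not_mem (Finset.notMem_erase _ _)
  have h3 : (B.erase (Fin.last n)).card = B.card - 1 := Finset.card_erase_of_mem h
  have h4 : 0 < B.card := Finset.card_pos.mpr ⟨_, h⟩
  have h5 : (pull (B.erase (Fin.last n))).card = (pull B).card := by rw [h1]
  omega

lemma insert_last_push_pull {I : Finset (Fin (n+1))} (h : Fin.last n ∈ I) :
    insert (Fin.last n) (push (pull I)) = I := by
  have h1 : pull I = pull (I.erase (Fin.last n)) := (pull_erase_last I).symm
  rw [h1, push_pull (Finset.notMem_erase _ _), Finset.insert_erase h]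

variable (Δ : Fin (n+1) → MvPolynomial σ K)

lemma subset_clos (S : Finset (Fin (n+1))) : S ⊆ clos Δ S := by
  intro x hx
  rw [mem_clos]
  exact subset_span ⟨x, hx, rfl⟩

lemma loop_not_mem_indep {I : Finset (Fin (n+1))} (hI : Indep Δ I) {i : Fin (n+1)}
    (h0 : Δ i = 0) : i ∉ I := loop_not_mem_indep' Δ hI h0

lemma filter_last_lt_empty (I : Finset (Fin (n+1))) :
    I.filter (Fin.last n < ·) = ∅ := by
  apply Finset.filter_false_of_mem
  intro x _
  exact not_lt_of_ge (Fin.le_last x)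

lemma last_not_mem_exSet (hne : Δ (Fin.last n) ≠ 0) {I : Finset (Fin (n+1))}
    (hI : Indep Δ I) : Fin.last n ∉ exSet Δ I := by
  rw [exSet_mem Δ hI]
  rintro ⟨-, h⟩
  rw [filter_last_lt_empty] at h
  simp only [Finset.coe_empty, Set.image_empty, span_empty, Submodule.mem_bot] at h
  exact hne h

lemma last_mem_exSet (h0 : Δ (Fin.last n) = 0) {I : Finset (Fin (n+1))}
    (hI : Indep Δ I) : Fin.last n ∈ exSet Δ I := by
  rw [exSet_mem Δ hI]
  exact ⟨loop_not_mem_indep Δ hI h0, h0 ▸ Submodule.zero_mem _⟩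

lemma prodForms_push (B : Finset (Fin n)) :
    prodForms Δ (push B) = prodForms (del Δ) B := by
  unfold prodForms push
  rw [Finset.prod_map]
  rfl

section ContrTrans

variable (j0 : σ)
variable (hdeg : ∀ i, Δ i ∈ homogeneousSubmodule σ K 1)
  (hc : coeff (Finsupp.single j0 1) (Δ (Fin.last n)) ≠ 0)
include hdeg hc

omit hdeg hc in
lemma phi_prodForms_push (B : Finset (Fin n)) :
    phi (Δ (Fin.last n)) j0 (prodForms Δ (push B)) = prodForms (contr Δ j0) B := by
  unfold prodForms push
  rw [map_prod, Finset.prod_map]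
  rfl

lemma exSet_pull_contr {I : Finset (Fin (n+1))} (hIm : Fin.last n ∈ I) (hI : Indep Δ I) :
    exSet (contr Δ j0) (pull I) = pull (exSet Δ I) := by
  have hins := insert_last_push_pull hIm
  have hI' : Indep (contr Δ j0) (pull I) := by
    rw [indep_contr Δ j0 hdeg hc, hins]
    exact hI
  ext e
  rw [mem_pull, exSet_contr Δ j0 hdeg hc hI', hins]

lemma pull_T_contr {I : Finset (Fin (n+1))} (hIm : Fin.last n ∈ I) (hI : Indep Δ I) :
    pull (I ∪ exSet Δ I) = pull I ∪ exSet (contr Δ j0) (pull I) := by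
  rw [pull_union, exSet_pull_contr Δ j0 hdeg hc hIm hI]

lemma clos_pull_contr {I : Finset (Fin (n+1))} (hIm : Fin.last n ∈ I) :
    clos (contr Δ j0) (pull I) = pull (clos Δ I) := by
  ext x
  rw [mem_pull, mem_clos_contr Δ j0 hdeg hc, insert_last_push_pull hIm]

lemma phi_bvec_contr {I : Finset (Fin (n+1))} (hIm : Fin.last n ∈ I) (hI : Indep Δ I) :
    phi (Δ (Fin.last n)) j0 (bvec Δ I) = bvec (contr Δ j0) (pull I) := by
  have hne : Δ (Fin.last n) ≠ 0 := fun h => hc (by rw [h, coeff_zero])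
  have hmT : Fin.last n ∈ I ∪ exSet Δ I := Finset.mem_union_left _ hIm
  have hmS : Fin.last n ∉ Finset.univ \ (I ∪ exSet Δ I) := by
    rw [Finset.mem_sdiff]
    rintro ⟨-, h⟩
    exact h hmT
  have hS : push (pull (Finset.univ \ (I ∪ exSet Δ I))) = Finset.univ \ (I ∪ exSet Δ I) :=
    push_pull hmS
  unfold bvec
  rw [show phi (Δ (Fin.last n)) j0 (prodForms Δ (Finset.univ \ (I ∪ exSet Δ I)))
      = prodForms (contr Δ j0) (pull (Finset.univ \ (I ∪ exSet Δ I))) from ?_]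
  · congr 1
    rw [pull_sdiff, pull_univ, pull_T_contr Δ j0 hdeg hc hIm hI]
  · conv_lhs => rw [← hS]
    exact phi_prodForms_push Δ j0 _

lemma phi_bvec_zero {I : Finset (Fin (n+1))} (hI : Indep Δ I)
    (hIm : Fin.last n ∉ I) :
    phi (Δ (Fin.last n)) j0 (bvec Δ I) = 0 := by
  have hne : Δ (Fin.last n) ≠ 0 := fun h => hc (by rw [h, coeff_zero])
  have hmE : Fin.last n ∉ exSet Δ I := last_not_mem_exSet Δ hne hI
  have hmS : Fin.last n ∈ Finset.univ \ (I ∪ exSet Δ I) := by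
    rw [Finset.mem_sdiff]
    exact ⟨Finset.mem_univ _, fun h => (Finset.mem_union.mp h).elim hIm hmE⟩
  unfold bvec prodForms
  rw [map_prod]
  apply Finset.prod_eq_zero hmS
  exact phi_m_eq_zero _ _ (hdeg _) hc

end ContrTrans

section DelTrans

lemma exSet_pull_del {I : Finset (Fin (n+1))} (hIm : Fin.last n ∉ I) (hI : Indep Δ I) :
    exSet (del Δ) (pull I) = pull (exSet Δ I) := by
  have hps := push_pull hIm
  have hI' : Indep (del Δ) (pull I) := by
    rw [indep_del Δ, hps]
    exact hI
  ext e
  rw [mem_pull, exSet_del Δ hI', hps]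

lemma clos_pull_del {I : Finset (Fin (n+1))} (hIm : Fin.last n ∉ I) :
    clos (del Δ) (pull I) = pull (clos Δ I) := by
  ext x
  rw [mem_pull, mem_clos_del Δ, push_pull hIm]

lemma bvec_del_loop {I : Finset (Fin (n+1))} (h0 : Δ (Fin.last n) = 0) (hI : Indep Δ I) :
    bvec Δ I = bvec (del Δ) (pull I) := by
  have hIm : Fin.last n ∉ I := loop_not_mem_indep Δ hI h0
  have hmT : Fin.last n ∈ I ∪ exSet Δ I :=
    Finset.mem_union_right _ (last_mem_exSet Δ h0 hI)
  have hmS : Fin.last n ∉ Finset.univ \ (I ∪ exSet Δ I) := by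
    rw [Finset.mem_sdiff]; rintro ⟨-, h⟩; exact h hmT
  unfold bvec
  rw [show Finset.univ \ (I ∪ exSet Δ I) = push (pull (Finset.univ \ (I ∪ exSet Δ I))) from
    (push_pull hmS).symm, prodForms_push]
  congr 1
  rw [pull_sdiff, pull_univ, pull_union, exSet_pull_del Δ hIm hI]

lemma bvec_del_nonloop {I : Finset (Fin (n+1))} (hne : Δ (Fin.last n) ≠ 0) (hI : Indep Δ I)
    (hIm : Fin.last n ∉ I) :
    bvec Δ I = Δ (Fin.last n) * bvec (del Δ) (pull I) := by
  have hmE : Fin.last n ∉ exSet Δ I := last_not_mem_exSet Δ hne hI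
  have hmS : Fin.last n ∈ Finset.univ \ (I ∪ exSet Δ I) := by
    rw [Finset.mem_sdiff]
    exact ⟨Finset.mem_univ _, fun h => (Finset.mem_union.mp h).elim hIm hmE⟩
  have herase : (Finset.univ \ (I ∪ exSet Δ I)).erase (Fin.last n)
      = push (pull (Finset.univ \ (I ∪ exSet Δ I))) := by
    rw [← pull_erase_last]
    exact (push_pull (Finset.notMem_erase _ _)).symm
  unfold bvec
  conv_lhs => rw [show prodForms Δ (Finset.univ \ (I ∪ exSet Δ I))
    = Δ (Fin.last n) * ∏ x ∈ (Finset.univ \ (I ∪ exSet Δ I)).erase (Fin.last n), Δ x from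
      (Finset.mul_prod_erase _ Δ hmS).symm]
  congr 1
  rw [show (∏ x ∈ (Finset.univ \ (I ∪ exSet Δ I)).erase (Fin.last n), Δ x)
      = prodForms Δ ((Finset.univ \ (I ∪ exSet Δ I)).erase (Fin.last n)) from rfl,
    herase, prodForms_push]
  congr 1
  rw [pull_sdiff, pull_univ, pull_union, exSet_pull_del Δ hIm hI]

end DelTrans

end AP
end Aux8
noncomputable section Aux9
open MvPolynomial Finset Submodule
open scoped Classical
set_option linter.unusedSectionVars false
set_option maxHeartbeats 1000000

namespace AP

variable {K : Type*} [Field K] {σ : Type*}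

attribute [local instance 2000] LinearOrder.toDecidableEq

lemma exists_coeff_ne {m : MvPolynomial σ K} (hm : m ∈ homogeneousSubmodule σ K 1)
    (hne : m ≠ 0) : ∃ j0, coeff (Finsupp.single j0 1) m ≠ 0 := by
  have hsupp : m.support.Nonempty := by
    rw [Finset.nonempty_iff_ne_empty, ne_eq, MvPolynomial.support_eq_empty]
    exact hne
  obtain ⟨d, hd⟩ := hsupp
  have hcd : coeff d m ≠ 0 := mem_support_iff.mp hd
  have hdeg : d.degree = 1 := by
    by_contra h
    exact hcd (((mem_homogeneousSubmodule 1 m).mp hm).coeff_eq_zero h)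
  obtain ⟨j, rfl⟩ := degree_one_classify d hdeg
  exact ⟨j, hcd⟩

section Facts

variable {n : ℕ} (Δ : Fin (n+1) → MvPolynomial σ K) {Y : Finset (Fin (n+1))} {k : ℕ}

/-- deletion facts for a loop -/
lemma loop_facts (h0 : Δ (Fin.last n) = 0) {I : Finset (Fin (n+1))}
    (hI : I ∈ idx Δ Y k) :
    Fin.last n ∉ I ∧ push (pull I) = I ∧ pull I ∈ idx (del Δ) (pull Y) (k-1) ∧
      bvec Δ I = bvec (del Δ) (pull I) := by
  obtain ⟨hind, hcl, hcard⟩ := (mem_idx Δ).mp hI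
  have hm0 : Fin.last n ∉ I := loop_not_mem_indep Δ hind h0
  have hpp : push (pull I) = I := push_pull hm0
  refine ⟨hm0, hpp, ?_, bvec_del_loop Δ h0 hind⟩
  rw [mem_idx]
  refine ⟨?_, ?_, ?_⟩
  · rw [indep_del Δ, hpp]; exact hind
  · rw [clos_pull_del Δ hm0, hcl]
  · rw [exSet_pull_del Δ hm0 hind, ← pull_union]
    have hmem : Fin.last n ∈ I ∪ exSet Δ I :=
      Finset.mem_union_right _ (last_mem_exSet Δ h0 hind)
    have := pull_card_of_mem hmem
    omega

/-- deletion facts for a non-loop, `m ∉ I` -/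
lemma del_facts (hne : Δ (Fin.last n) ≠ 0) {I : Finset (Fin (n+1))}
    (hI : I ∈ idx Δ Y k) (hm0 : Fin.last n ∉ I) :
    push (pull I) = I ∧ pull I ∈ idx (del Δ) (pull Y) k ∧
      bvec Δ I = Δ (Fin.last n) * bvec (del Δ) (pull I) := by
  obtain ⟨hind, hcl, hcard⟩ := (mem_idx Δ).mp hI
  have hpp : push (pull I) = I := push_pull hm0
  refine ⟨hpp, ?_, bvec_del_nonloop Δ hne hind hm0⟩
  rw [mem_idx]
  refine ⟨?_, ?_, ?_⟩
  · rw [indep_del Δ, hpp]; exact hind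
  · rw [clos_pull_del Δ hm0, hcl]
  · rw [exSet_pull_del Δ hm0 hind, ← pull_union]
    have hmem : Fin.last n ∉ I ∪ exSet Δ I := by
      rw [Finset.mem_union]
      rintro (h | h)
      · exact hm0 h
      · exact last_not_mem_exSet Δ hne hind h
    rw [pull_card_of_not_mem hmem]
    exact hcard

/-- contraction facts, `m ∈ I` -/
lemma contr_facts (j0 : σ) (hdeg : ∀ i, Δ i ∈ homogeneousSubmodule σ K 1)
    (hc : coeff (Finsupp.single j0 1) (Δ (Fin.last n)) ≠ 0)
    {I : Finset (Fin (n+1))} (hI : I ∈ idx Δ Y k) (hm0 : Fin.last n ∈ I) :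
    insert (Fin.last n) (push (pull I)) = I ∧ pull I ∈ idx (contr Δ j0) (pull Y) (k-1) ∧
      phi (Δ (Fin.last n)) j0 (bvec Δ I) = bvec (contr Δ j0) (pull I) := by
  obtain ⟨hind, hcl, hcard⟩ := (mem_idx Δ).mp hI
  have hins : insert (Fin.last n) (push (pull I)) = I := insert_last_push_pull hm0
  refine ⟨hins, ?_, phi_bvec_contr Δ j0 hdeg hc hm0 hind⟩
  rw [mem_idx]
  refine ⟨?_, ?_, ?_⟩
  · rw [indep_contr Δ j0 hdeg hc, hins]; exact hind
  · rw [clos_pull_contr Δ j0 hdeg hc hm0, hcl]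
  · rw [← pull_T_contr Δ j0 hdeg hc hm0 hind]
    have hmem : Fin.last n ∈ I ∪ exSet Δ I := Finset.mem_union_left _ hm0
    have := pull_card_of_mem hmem
    omega

end Facts

theorem key_li (n : ℕ) :
    ∀ (Δ : Fin n → MvPolynomial σ K), (∀ i, Δ i ∈ homogeneousSubmodule σ K 1) →
    ∀ (Y : Finset (Fin n)) (k : ℕ) (G : Finset (Fin n) → K),
      (∑ I ∈ idx Δ Y k, G I • bvec Δ I) = 0 → ∀ I ∈ idx Δ Y k, G I = 0 := by
  induction n with
  | zero =>
      intro Δ hdeg Y k G hsum I hI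
      have hIe : ∀ J : Finset (Fin 0), J = I := by
        intro J
        have h1 : J = ∅ := Finset.eq_empty_of_forall_notMem (fun x _ => Fin.elim0 x)
        have h2 : I = ∅ := Finset.eq_empty_of_forall_notMem (fun x _ => Fin.elim0 x)
        rw [h1, h2]
      have hidx : idx Δ Y k = {I} :=
        Finset.eq_singleton_iff_unique_mem.mpr ⟨hI, fun J _ => hIe J⟩
      rw [hidx, Finset.sum_singleton] at hsum
      have hb : bvec Δ I = 1 := by
        unfold bvec prodForms
        rw [show (Finset.univ \ (I ∪ exSet Δ I)) = (∅ : Finset (Fin 0)) from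
          Finset.eq_empty_of_forall_notMem (fun x _ => Fin.elim0 x), Finset.prod_empty]
      rw [hb] at hsum
      rcases smul_eq_zero.mp hsum with h | h
      · exact h
      · exact absurd h one_ne_zero
  | succ n ih =>
      intro Δ hdeg Y k G hsum I0 hI0
      by_cases h0 : Δ (Fin.last n) = 0
      · -- loop case
        have hGd : ∑ J ∈ idx (del Δ) (pull Y) (k-1),
            (if push J ∈ idx Δ Y k then G (push J) else 0) • bvec (del Δ) J = 0 := by
          have hstep : ∑ J ∈ idx (del Δ) (pull Y) (k-1),
              (if push J ∈ idx Δ Y k then G (push J) else 0) • bvec (del Δ) J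
              = ∑ J ∈ (idx (del Δ) (pull Y) (k-1)).filter (fun J => push J ∈ idx Δ Y k),
                  G (push J) • bvec (del Δ) J := by
            rw [Finset.sum_filter]
            apply Finset.sum_congr rfl
            intro J _
            by_cases h : push J ∈ idx Δ Y k <;> simp [h]
          rw [hstep, ← hsum]
          apply Finset.sum_bij' (i := fun J _ => push J) (j := fun I _ => pull I)
          · intro J hJ
            exact (Finset.mem_filter.mp hJ).2
          · intro I hI
            rw [Finset.mem_filter]
            obtain ⟨-, hpp, hpidx, -⟩ := loop_facts Δ h0 hI
            exact ⟨hpidx, by rw [hpp]; exact hI⟩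
          · intro J hJ
            exact pull_push J
          · intro I hI
            obtain ⟨-, hpp, -, -⟩ := loop_facts Δ h0 hI
            exact hpp
          · intro J hJ
            have hJ2 := (Finset.mem_filter.mp hJ).2
            obtain ⟨-, -, -, hbv⟩ := loop_facts Δ h0 hJ2
            rw [hbv, pull_push]
        have hall := ih (del Δ) (fun i => hdeg _) (pull Y) (k-1)
          (fun J => if push J ∈ idx Δ Y k then G (push J) else 0) hGd
        obtain ⟨-, hpp, hpidx, -⟩ := loop_facts Δ h0 hI0
        have h2 : (if push (pull I0) ∈ idx Δ Y k then G (push (pull I0)) else 0) = 0 :=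
          hall (pull I0) hpidx
        rwa [hpp, if_pos hI0] at h2
      · -- non-loop case
        obtain ⟨j0, hc⟩ := exists_coeff_ne (hdeg (Fin.last n)) h0
        -- Step 1: coefficients of sets containing the last element vanish
        have hstep1 : ∀ I ∈ idx Δ Y k, Fin.last n ∈ I → G I = 0 := by
          have hφ : ∑ I ∈ idx Δ Y k,
              G I • phi (Δ (Fin.last n)) j0 (bvec Δ I) = 0 := by
            have h := congrArg (phi (Δ (Fin.last n)) j0) hsum
            rw [map_sum, map_zero] at h
            rw [← h]
            exact Finset.sum_congr rfl (fun I _ => (map_smul _ _ _).symm)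
          rw [← Finset.sum_filter_add_sum_filter_not (idx Δ Y k)
            (fun I => Fin.last n ∈ I)] at hφ
          have hz : ∑ I ∈ (idx Δ Y k).filter (fun I => ¬ Fin.last n ∈ I),
              G I • phi (Δ (Fin.last n)) j0 (bvec Δ I) = 0 := by
            apply Finset.sum_eq_zero
            intro I hI
            obtain ⟨hI1, hI2⟩ := Finset.mem_filter.mp hI
            obtain ⟨hind, -, -⟩ := (mem_idx Δ).mp hI1
            rw [phi_bvec_zero Δ j0 hdeg hc hind hI2, smul_zero]
          rw [hz, add_zero] at hφ
          -- reindex via contraction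
          have hGc : ∑ J ∈ idx (contr Δ j0) (pull Y) (k-1),
              (if insert (Fin.last n) (push J) ∈ idx Δ Y k
                then G (insert (Fin.last n) (push J)) else 0) • bvec (contr Δ j0) J = 0 := by
            have hstep : ∑ J ∈ idx (contr Δ j0) (pull Y) (k-1),
                (if insert (Fin.last n) (push J) ∈ idx Δ Y k
                  then G (insert (Fin.last n) (push J)) else 0) • bvec (contr Δ j0) J
                = ∑ J ∈ (idx (contr Δ j0) (pull Y) (k-1)).filter
                    (fun J => insert (Fin.last n) (push J) ∈ idx Δ Y k),
                    G (insert (Fin.last n) (push J)) • bvec (contr Δ j0) J := by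
              rw [Finset.sum_filter]
              apply Finset.sum_congr rfl
              intro J _
              by_cases h : insert (Fin.last n) (push J) ∈ idx Δ Y k <;> simp [h]
            rw [hstep, ← hφ]
            apply Finset.sum_bij' (i := fun J _ => insert (Fin.last n) (push J))
              (j := fun I _ => pull I)
            · intro J hJ
              rw [Finset.mem_filter]
              exact ⟨(Finset.mem_filter.mp hJ).2, Finset.mem_insert_self _ _⟩
            · intro I hI
              obtain ⟨hI1, hI2⟩ := Finset.mem_filter.mp hI
              rw [Finset.mem_filter]
              obtain ⟨hins, hpidx, -⟩ := contr_facts Δ j0 hdeg hc hI1 hI2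
              exact ⟨hpidx, by rw [hins]; exact hI1⟩
            · intro J hJ
              rw [pull_insert_last, pull_push]
            · intro I hI
              obtain ⟨hI1, hI2⟩ := Finset.mem_filter.mp hI
              obtain ⟨hins, -, -⟩ := contr_facts Δ j0 hdeg hc hI1 hI2
              exact hins
            · intro J hJ
              have hJ2 := (Finset.mem_filter.mp hJ).2
              have hm : Fin.last n ∈ insert (Fin.last n) (push J) :=
                Finset.mem_insert_self _ _
              obtain ⟨-, -, hbv⟩ := contr_facts Δ j0 hdeg hc hJ2 hm
              rw [hbv, pull_insert_last, pull_push]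
          have hall := ih (contr Δ j0)
            (fun i => phi_mem_H1 _ _ (hdeg (Fin.last n)) (hdeg _)) (pull Y) (k-1)
            (fun J => if insert (Fin.last n) (push J) ∈ idx Δ Y k
              then G (insert (Fin.last n) (push J)) else 0) hGc
          intro I hI hmI
          obtain ⟨hins, hpidx, -⟩ := contr_facts Δ j0 hdeg hc hI hmI
          have h2 : (if insert (Fin.last n) (push (pull I)) ∈ idx Δ Y k
              then G (insert (Fin.last n) (push (pull I))) else 0) = 0 :=
            hall (pull I) hpidx
          rwa [hins, if_pos hI] at h2
        -- Step 2
        by_cases hm0 : Fin.last n ∈ I0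
        · exact hstep1 I0 hI0 hm0
        · have hsum2 : ∑ I ∈ (idx Δ Y k).filter (fun I => ¬ Fin.last n ∈ I),
              G I • bvec Δ I = 0 := by
            rw [← Finset.sum_filter_add_sum_filter_not (idx Δ Y k)
              (fun I => Fin.last n ∈ I)] at hsum
            have hz : ∑ I ∈ (idx Δ Y k).filter (fun I => Fin.last n ∈ I),
                G I • bvec Δ I = 0 := by
              apply Finset.sum_eq_zero
              intro I hI
              obtain ⟨hI1, hI2⟩ := Finset.mem_filter.mp hI
              rw [hstep1 I hI1 hI2, zero_smul]
            rw [hz, zero_add] at hsum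
            exact hsum
          have hfac : Δ (Fin.last n) *
              (∑ I ∈ (idx Δ Y k).filter (fun I => ¬ Fin.last n ∈ I),
                G I • bvec (del Δ) (pull I)) = 0 := by
            rw [Finset.mul_sum, ← hsum2]
            apply Finset.sum_congr rfl
            intro I hI
            obtain ⟨hI1, hI2⟩ := Finset.mem_filter.mp hI
            obtain ⟨-, -, hbv⟩ := del_facts Δ h0 hI1 hI2
            rw [hbv, mul_smul_comm]
          have hsum3 : ∑ I ∈ (idx Δ Y k).filter (fun I => ¬ Fin.last n ∈ I),
              G I • bvec (del Δ) (pull I) = 0 := by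
            rcases mul_eq_zero.mp hfac with h | h
            · exact absurd h h0
            · exact h
          have hGd : ∑ J ∈ idx (del Δ) (pull Y) k,
              (if push J ∈ idx Δ Y k then G (push J) else 0) • bvec (del Δ) J = 0 := by
            have hstep : ∑ J ∈ idx (del Δ) (pull Y) k,
                (if push J ∈ idx Δ Y k then G (push J) else 0) • bvec (del Δ) J
                = ∑ J ∈ (idx (del Δ) (pull Y) k).filter (fun J => push J ∈ idx Δ Y k),
                    G (push J) • bvec (del Δ) J := by
              rw [Finset.sum_filter]
              apply Finset.sum_congr rfl
              intro J _
              by_cases h : push J ∈ idx Δ Y k <;> simp [h]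
            rw [hstep, ← hsum3]
            apply Finset.sum_bij' (i := fun J _ => push J) (j := fun I _ => pull I)
            · intro J hJ
              rw [Finset.mem_filter]
              exact ⟨(Finset.mem_filter.mp hJ).2, last_not_mem_push J⟩
            · intro I hI
              obtain ⟨hI1, hI2⟩ := Finset.mem_filter.mp hI
              rw [Finset.mem_filter]
              obtain ⟨hpp, hpidx, -⟩ := del_facts Δ h0 hI1 hI2
              exact ⟨hpidx, by rw [hpp]; exact hI1⟩
            · intro J hJ
              exact pull_push J
            · intro I hI
              obtain ⟨hI1, hI2⟩ := Finset.mem_filter.mp hI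
              obtain ⟨hpp, -, -⟩ := del_facts Δ h0 hI1 hI2
              exact hpp
            · intro J hJ
              rw [pull_push]
          have hall := ih (del Δ) (fun i => hdeg _) (pull Y) k
            (fun J => if push J ∈ idx Δ Y k then G (push J) else 0) hGd
          obtain ⟨hpp, hpidx, -⟩ := del_facts Δ h0 hI0 hm0
          have h2 : (if push (pull I0) ∈ idx Δ Y k then G (push (pull I0)) else 0) = 0 :=
            hall (pull I0) hpidx
          rwa [hpp, if_pos hI0] at h2

end AP
end Aux9
noncomputable section Aux10
open MvPolynomial Finset Submodule
open scoped Classical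
set_option linter.unusedSectionVars false

namespace AP

variable {K : Type*} [Field K] {σ : Type*} {n : ℕ}

lemma bvec_li (Δ : Fin n → MvPolynomial σ K)
    (hdeg : ∀ i, Δ i ∈ homogeneousSubmodule σ K 1) (Y : Finset (Fin n)) (k : ℕ) :
    LinearIndependent K
      (fun I : {x // x ∈ ((idx Δ Y k : Finset (Finset (Fin n))) : Set (Finset (Fin n)))} =>
        bvec Δ (I : Finset (Fin n))) := by
  rw [Fintype.linearIndependent_iff]
  intro g hg i
  set G : Finset (Fin n) → K := fun J => if h : J ∈ idx Δ Y k then g ⟨J, h⟩ else 0 with hG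
  have hsum : ∑ I ∈ idx Δ Y k, G I • bvec Δ I = 0 := by
    rw [Finset.sum_subtype (idx Δ Y k)
      (p := fun x => x ∈ ((idx Δ Y k : Finset (Finset (Fin n))) : Set (Finset (Fin n))))
      (fun x => (Finset.mem_coe).symm) (fun J => G J • bvec Δ J)]
    rw [← hg]
    apply Finset.sum_congr rfl
    intro a _
    congr 1
    show (if h : (a : Finset (Fin n)) ∈ idx Δ Y k then g ⟨(a : Finset (Fin n)), h⟩ else 0) = g a
    rw [dif_pos (Finset.mem_coe.mp a.2)]
  have h4 : (if h : (i : Finset (Fin n)) ∈ idx Δ Y k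
      then g ⟨(i : Finset (Fin n)), h⟩ else 0) = 0 := key_li n Δ hdeg Y k G hsum i.1 i.2
  rw [dif_pos (Finset.mem_coe.mp i.2)] at h4
  exact h4

end AP
end Aux10

theorem statement5' {K : Type*} [Field K] {ℓ n : ℕ}
    (Δ : Fin n → MvPolynomial (Fin ℓ) K)
    (hdeg : ∀ i, Δ i ∈ MvPolynomial.homogeneousSubmodule (Fin ℓ) K 1)
    (Y : Finset (Fin n)) (k : ℕ) :
    Module.finrank K (PXk Δ Y k) =
      Set.ncard {I : Finset (Fin n) |
        Indep Δ I ∧ clos Δ I = Y ∧ (I ∪ exSet Δ I).card = k} := by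
  rw [AP.finrank_PXk Δ Y k (AP.bvec_li Δ hdeg Y k)]
  rw [show {I : Finset (Fin n) |
        Indep Δ I ∧ clos Δ I = Y ∧ (I ∪ exSet Δ I).card = k}
      = ((AP.idx Δ Y k : Finset (Finset (Fin n))) : Set (Finset (Fin n))) from ?_]
  · rw [Set.ncard_coe_finset]
  · ext I
    simp only [Set.mem_setOf_eq, Finset.mem_coe, AP.mem_idx]

/-- Ardila–Postnikov: for a flat `X` and `r(X) ≤ k ≤ |X|`,
`dim P(Δ)_{X,k}` is the number of independent sets `I` with closure `X`
and `|I ∪ ex(I)| = k`. -/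
theorem statement5 {K : Type*} [Field K] {ℓ n : ℕ}
    (Δ : Fin n → MvPolynomial (Fin ℓ) K)
    (hdeg : ∀ i, Δ i ∈ homogeneousSubmodule (Fin ℓ) K 1)
    (hspan : homogeneousSubmodule (Fin ℓ) K 1 ≤ span K (Set.range Δ))
    (hne : ∀ i, Δ i ≠ 0)
    (Y : Finset (Fin n)) (k : ℕ) (hY : IsFlat Δ Y) (h1 : rk Δ Y ≤ k) (h2 : k ≤ Y.card) :
    Module.finrank K (PXk Δ Y k) =
      Set.ncard {I : Finset (Fin n) |
        Indep Δ I ∧ clos Δ I = Y ∧ (I ∪ exSet Δ I).card = k} := by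
  exact statement5' Δ hdeg Y k
end

section
/- Let Δ be a sequence of n linear forms spanning the dual of an ℓ-dimensional vector space V. Then the symmetric power Sym^d(V*) is contained in P(Δ) (the span of all subproducts of Δ) if and only if d is at most the minimum size of a cocircuit of the matroid M(Δ). -/
open MvPolynomial Finset Submodule
open scoped Classical

noncomputable section Aux

variable {K : Type*} [Field K] {ℓ n : ℕ}

/-- a finsupp of degree 1 is a single -/
lemma aux_degree_one {m : Fin ℓ →₀ ℕ} (h : m.degree = 1) :
    ∃ j, m = Finsupp.single j 1 := by
  have hne : m.support.Nonempty := by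
    rcases Finset.eq_empty_or_nonempty m.support with he | hn
    · exfalso; rw [Finsupp.degree_apply, he] at h; simp at h
    · exact hn
  obtain ⟨j, hj⟩ := hne
  have hsum : m j + ∑ i ∈ m.support.erase j, m i = 1 := by
    rw [Finset.add_sum_erase _ _ hj]; exact h
  have hjpos : 0 < m j := Nat.pos_of_ne_zero (Finsupp.mem_support_iff.mp hj)
  have hmj : m j = 1 := by omega
  have hrest : ∑ i ∈ m.support.erase j, m i = 0 := by omega
  refine ⟨j, ?_⟩
  apply Finsupp.ext
  intro i
  by_cases hij : i = j
  · subst hij; simp [hmj]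
  · rw [Finsupp.single_apply, if_neg (fun hh => hij hh.symm)]
    by_cases hi : i ∈ m.support
    · have := Finset.sum_eq_zero_iff.mp hrest i (Finset.mem_erase.mpr ⟨hij, hi⟩)
      exact this
    · exact Finsupp.notMem_support_iff.mp hi

lemma aux_hom1_eq_span :
    homogeneousSubmodule (Fin ℓ) K 1 = span K (Set.range (X : Fin ℓ → MvPolynomial (Fin ℓ) K)) := by
  apply le_antisymm
  · intro p hp
    rw [← support_sum_monomial_coeff p]
    apply Submodule.sum_mem
    intro m hm
    have hcoeff : coeff m p ≠ 0 := mem_support_iff.mp hm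
    have hdeg1 : m.degree = 1 := by
      have := (mem_homogeneousSubmodule _ _).mp hp hcoeff
      rw [Finsupp.degree_eq_weight_one]; exact this
    obtain ⟨j, rfl⟩ := aux_degree_one hdeg1
    have : (monomial (Finsupp.single j 1)) (coeff (Finsupp.single j 1) p)
        = coeff (Finsupp.single j 1) p • X j := by
      rw [smul_eq_C_mul, X, C_mul_monomial, mul_one]
    rw [this]
    exact Submodule.smul_mem _ _ (subset_span ⟨j, rfl⟩)
  · rw [span_le]
    rintro _ ⟨j, rfl⟩
    exact isHomogeneous_X _ _

lemma aux_findim_hom1 :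
    FiniteDimensional K (homogeneousSubmodule (Fin ℓ) K 1) := by
  rw [aux_hom1_eq_span]
  exact FiniteDimensional.span_of_finite K (Set.finite_range _)

lemma aux_finrank_hom1 :
    Module.finrank K (homogeneousSubmodule (Fin ℓ) K 1) = ℓ := by
  rw [aux_hom1_eq_span, finrank_span_eq_card (MvPolynomial.linearIndependent_X _ _)]
  simp


variable (Δ : Fin n → MvPolynomial (Fin ℓ) K)

lemma aux_findim_span (S : Finset (Fin n)) :
    FiniteDimensional K (span K (Δ '' (S : Set (Fin n)))) :=
  FiniteDimensional.span_of_finite K (S.finite_toSet.image Δ)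

lemma aux_subset_clos (S : Finset (Fin n)) : S ⊆ clos Δ S := by
  intro i hi
  refine Finset.mem_filter.mpr ⟨Finset.mem_univ _, ?_⟩
  exact subset_span ⟨i, hi, rfl⟩

lemma aux_span_clos (S : Finset (Fin n)) :
    span K (Δ '' ((clos Δ S : Finset (Fin n)) : Set (Fin n))) = span K (Δ '' (S : Set (Fin n))) := by
  apply le_antisymm
  · rw [span_le]
    rintro _ ⟨i, hi, rfl⟩
    exact (Finset.mem_filter.mp hi).2
  · exact span_mono (Set.image_mono (by exact_mod_cast aux_subset_clos Δ S))

lemma aux_isFlat_clos (S : Finset (Fin n)) : IsFlat Δ (clos Δ S) := by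
  unfold IsFlat
  apply Finset.ext
  intro i
  constructor
  · intro hi
    have h2 := (Finset.mem_filter.mp hi).2
    rw [aux_span_clos] at h2
    exact Finset.mem_filter.mpr ⟨Finset.mem_univ _, h2⟩
  · intro hi
    exact aux_subset_clos Δ (clos Δ S) hi

lemma aux_rk_clos (S : Finset (Fin n)) : rk Δ (clos Δ S) = rk Δ S := by
  unfold rk; rw [aux_span_clos]

lemma aux_span_le_hom1 (hdeg : ∀ i, Δ i ∈ homogeneousSubmodule (Fin ℓ) K 1)
    (s : Set (Fin n)) : span K (Δ '' s) ≤ homogeneousSubmodule (Fin ℓ) K 1 := by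
  rw [span_le]; rintro _ ⟨i, _, rfl⟩; exact hdeg i

lemma aux_rk_le (hdeg : ∀ i, Δ i ∈ homogeneousSubmodule (Fin ℓ) K 1)
    (S : Finset (Fin n)) : rk Δ S ≤ ℓ := by
  have := aux_findim_hom1 (K := K) (ℓ := ℓ)
  have h := Submodule.finrank_mono (aux_span_le_hom1 Δ hdeg (S : Set (Fin n)))
  rw [aux_finrank_hom1] at h
  exact h

/-- flat extension: any set of rank `< ℓ` lies in a flat of rank `ℓ - 1`. -/
lemma aux_exists_hyperflat (hdeg : ∀ i, Δ i ∈ homogeneousSubmodule (Fin ℓ) K 1)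
    (hspan : homogeneousSubmodule (Fin ℓ) K 1 ≤ span K (Set.range Δ)) :
    ∀ S : Finset (Fin n), rk Δ S < ℓ →
      ∃ H : Finset (Fin n), IsFlat Δ H ∧ rk Δ H = ℓ - 1 ∧ S ⊆ H := by
  have main : ∀ k : ℕ, ∀ S : Finset (Fin n), rk Δ S < ℓ → ℓ - 1 - rk Δ S ≤ k →
      ∃ H : Finset (Fin n), IsFlat Δ H ∧ rk Δ H = ℓ - 1 ∧ S ⊆ H := by
    intro k
    induction k with
    | zero =>
      intro S hS hk
      have : rk Δ S = ℓ - 1 := by omega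
      exact ⟨clos Δ S, aux_isFlat_clos Δ S, by rw [aux_rk_clos]; exact this, aux_subset_clos Δ S⟩
    | succ k ih =>
      intro S hS hk
      by_cases heq : rk Δ S = ℓ - 1
      · exact ⟨clos Δ S, aux_isFlat_clos Δ S, by rw [aux_rk_clos]; exact heq, aux_subset_clos Δ S⟩
      · have hlt : rk Δ S < ℓ - 1 := by omega
        -- find i with Δ i ∉ span
        have hex : ∃ i, Δ i ∉ span K (Δ '' (S : Set (Fin n))) := by
          by_contra hno
          push_neg at hno
          have h1 : span K (Set.range Δ) ≤ span K (Δ '' (S : Set (Fin n))) := by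
            rw [span_le]; rintro _ ⟨i, rfl⟩; exact hno i
          have h2 := le_trans hspan h1
          have := aux_findim_span Δ S
          have h3 := Submodule.finrank_mono h2
          rw [aux_finrank_hom1] at h3
          unfold rk at hS
          omega
        obtain ⟨i, hi⟩ := hex
        have hins : rk Δ (insert i S) = rk Δ S + 1 := by
          have hcoe : (Δ '' ((insert i S : Finset (Fin n)) : Set (Fin n)))
              = insert (Δ i) (Δ '' (S : Set (Fin n))) := by
            rw [Finset.coe_insert, Set.image_insert_eq]
          have hfd : FiniteDimensional K (span K (Δ '' (S : Set (Fin n)))) :=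
            aux_findim_span Δ S
          have hfd1 : FiniteDimensional K
              (span K ({Δ i} : Set (MvPolynomial (Fin ℓ) K))) :=
            FiniteDimensional.span_of_finite K (Set.finite_singleton _)
          have hfd2 : FiniteDimensional K
              ↥(span K ({Δ i} : Set (MvPolynomial (Fin ℓ) K)) ⊔ span K (Δ '' (S : Set (Fin n)))) :=
            Submodule.finiteDimensional_sup _ _
          have hlt2 : span K (Δ '' (S : Set (Fin n)))
              < span K ({Δ i} : Set (MvPolynomial (Fin ℓ) K)) ⊔ span K (Δ '' (S : Set (Fin n))) := by
            refine lt_of_le_of_ne le_sup_right fun hEq => hi ?_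
            rw [hEq]
            exact Submodule.mem_sup_left (Submodule.mem_span_singleton_self _)
          have hlow := Submodule.finrank_lt_finrank_of_lt hlt2
          have hup := Submodule.finrank_add_le_finrank_add_finrank
            (span K ({Δ i} : Set (MvPolynomial (Fin ℓ) K))) (span K (Δ '' (S : Set (Fin n))))
          have h1 : Module.finrank K (span K ({Δ i} : Set (MvPolynomial (Fin ℓ) K))) ≤ 1 := by
            simpa using finrank_span_le_card ({Δ i} : Set (MvPolynomial (Fin ℓ) K))
          unfold rk
          rw [hcoe, Submodule.span_insert]
          omega
        have h4 : rk Δ (insert i S) < ℓ := by omega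
        obtain ⟨H, hH1, hH2, hH3⟩ := ih (insert i S) h4 (by omega)
        exact ⟨H, hH1, hH2, (Finset.subset_insert i S).trans hH3⟩
  intro S hS
  exact main (ℓ - 1 - rk Δ S) S hS le_rfl

/-- if `T` is smaller than every cocircuit, `Δ` restricted to the complement of `T`
still spans. -/
lemma aux_full_of_small {d : ℕ}
    (hdeg : ∀ i, Δ i ∈ homogeneousSubmodule (Fin ℓ) K 1)
    (hspan : homogeneousSubmodule (Fin ℓ) K 1 ≤ span K (Set.range Δ))
    (hmin : ∀ H : Finset (Fin n), IsFlat Δ H → rk Δ H = ℓ - 1 →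
      d ≤ (Finset.univ \ H).card)
    {T : Finset (Fin n)} (hT : T.card < d) :
    ∀ i, Δ i ∈ span K (Δ '' ((Finset.univ \ T : Finset (Fin n)) : Set (Fin n))) := by
  intro i
  rcases lt_or_ge (rk Δ (Finset.univ \ T)) ℓ with hlt | hge
  · exfalso
    obtain ⟨H, hH1, hH2, hH3⟩ := aux_exists_hyperflat Δ hdeg hspan _ hlt
    have hsub : Finset.univ \ H ⊆ T := by
      intro j hj
      rw [Finset.mem_sdiff] at hj
      by_contra hjT
      exact hj.2 (hH3 (Finset.mem_sdiff.mpr ⟨Finset.mem_univ _, hjT⟩))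
    have := hmin H hH1 hH2
    have := Finset.card_le_card hsub
    omega
  · have hW : span K (Δ '' ((Finset.univ \ T : Finset (Fin n)) : Set (Fin n)))
        = homogeneousSubmodule (Fin ℓ) K 1 := by
      have := aux_findim_hom1 (K := K) (ℓ := ℓ)
      apply Submodule.eq_of_le_of_finrank_le (aux_span_le_hom1 Δ hdeg _)
      rw [aux_finrank_hom1]
      exact hge
    rw [hW]
    exact hdeg i

/-- span of products of `k` (with multiplicity) of the forms. -/
def Qsp (Δ : Fin n → MvPolynomial (Fin ℓ) K) (k : ℕ) : Submodule K (MvPolynomial (Fin ℓ) K) :=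
  span K {q | ∃ m : Multiset (Fin n), Multiset.card m = k ∧ q = (m.map Δ).prod}

lemma aux_mul_mem_Qsp {β q : MvPolynomial (Fin ℓ) K} {k : ℕ}
    (hβ : β ∈ span K (Set.range Δ)) (hq : q ∈ Qsp Δ k) : β * q ∈ Qsp Δ (k + 1) := by
  induction hq using Submodule.span_induction with
  | mem x hx =>
    obtain ⟨m, hm, rfl⟩ := hx
    induction hβ using Submodule.span_induction with
    | mem y hy =>
      obtain ⟨i, rfl⟩ := hy
      apply subset_span
      refine ⟨i ::ₘ m, by simp [hm], ?_⟩
      rw [Multiset.map_cons, Multiset.prod_cons]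
    | zero => rw [zero_mul]; exact Submodule.zero_mem _
    | add a b _ _ ha hb => rw [add_mul]; exact Submodule.add_mem _ ha hb
    | smul c a _ ha => rw [smul_mul_assoc]; exact Submodule.smul_mem _ _ ha
  | zero => rw [mul_zero]; exact Submodule.zero_mem _
  | add a b _ _ ha hb => rw [mul_add]; exact Submodule.add_mem _ ha hb
  | smul c a _ ha => rw [mul_smul_comm]; exact Submodule.smul_mem _ _ ha

lemma aux_pow_mul_mem_Qsp {β q : MvPolynomial (Fin ℓ) K} {k : ℕ} (e : ℕ)
    (hβ : β ∈ span K (Set.range Δ)) (hq : q ∈ Qsp Δ k) : β ^ e * q ∈ Qsp Δ (e + k) := by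
  induction e with
  | zero => simpa using hq
  | succ e ih =>
    have : β ^ (e + 1) * q = β * (β ^ e * q) := by ring
    rw [this]
    have := aux_mul_mem_Qsp Δ hβ ih
    convert this using 2
    omega

lemma aux_mon_mem_Qsp
    (hspan : homogeneousSubmodule (Fin ℓ) K 1 ≤ span K (Set.range Δ))
    (m : Fin ℓ →₀ ℕ) : (monomial m (1 : K)) ∈ Qsp Δ m.degree := by
  induction m using Finsupp.induction with
  | zero =>
    have h1 : (monomial (0 : Fin ℓ →₀ ℕ) (1 : K)) = ((0 : Multiset (Fin n)).map Δ).prod := by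
      simp [monomial_zero']
    rw [show (0 : Fin ℓ →₀ ℕ).degree = 0 from map_zero _]
    exact subset_span ⟨0, rfl, h1⟩
  | single_add a b f ha hb ih =>
    have hmon : (monomial (Finsupp.single a b + f) (1 : K))
        = X a ^ b * monomial f 1 := by
      rw [X_pow_eq_monomial, monomial_mul, one_mul]
    have hdeg : (Finsupp.single a b + f).degree = b + f.degree := by
      rw [Finsupp.degree_eq_weight_one, map_add, ← Finsupp.degree_eq_weight_one]
      congr 1
      rw [Finsupp.degree_apply]
      rw [Finsupp.support_single_ne_zero _ hb]
      simp
    rw [hmon, hdeg]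
    have hX : (X a : MvPolynomial (Fin ℓ) K) ∈ span K (Set.range Δ) :=
      hspan (isHomogeneous_X _ _)
    exact aux_pow_mul_mem_Qsp Δ b hX ih

lemma aux_nodup_prod_mem {m : Multiset (Fin n)} (hnd : m.Nodup) :
    (m.map Δ).prod ∈ Pspace Δ := by
  apply subset_span
  refine ⟨m.toFinset, ?_⟩
  show prodForms Δ m.toFinset = (Multiset.map Δ m).prod
  unfold prodForms
  rw [Finset.prod_eq_multiset_prod]
  congr 1
  rw [Multiset.toFinset_val, Multiset.dedup_eq_self.mpr hnd]

lemma aux_prod_mem {d : ℕ}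
    (hdeg : ∀ i, Δ i ∈ homogeneousSubmodule (Fin ℓ) K 1)
    (hspan : homogeneousSubmodule (Fin ℓ) K 1 ≤ span K (Set.range Δ))
    (hmin : ∀ H : Finset (Fin n), IsFlat Δ H → rk Δ H = ℓ - 1 →
      d ≤ (Finset.univ \ H).card) :
    ∀ N : ℕ, ∀ m : Multiset (Fin n), Multiset.card m ≤ d →
      Multiset.card m - m.toFinset.card ≤ N → (m.map Δ).prod ∈ Pspace Δ := by
  intro N
  induction N with
  | zero =>
    intro m hcard hex
    have hle := Multiset.toFinset_card_le m
    have : m.toFinset.card = Multiset.card m := by omega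
    exact aux_nodup_prod_mem Δ (Multiset.toFinset_card_eq_card_iff_nodup.mp this)
  | succ N ih =>
    intro m hcard hex
    by_cases hnd : m.Nodup
    · exact aux_nodup_prod_mem Δ hnd
    · -- there is a repeated element
      rw [Multiset.nodup_iff_count_le_one] at hnd
      push_neg at hnd
      obtain ⟨i, hi2⟩ := hnd
      have him : i ∈ m := Multiset.count_pos.mp (by omega)
      set m' := m.erase i with hm'
      have hcons : i ::ₘ m' = m := Multiset.cons_erase him
      have him' : i ∈ m' := by
        rw [← Multiset.count_pos, hm', Multiset.count_erase_self]
        omega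
      have hTeq : m'.toFinset = m.toFinset := by
        rw [← hcons, Multiset.toFinset_cons, Finset.insert_eq_self.mpr
          (Multiset.mem_toFinset.mpr him')]
      have hcard' : Multiset.card m' + 1 = Multiset.card m := by
        rw [← hcons]; simp
      have hTlt : m.toFinset.card < d := by
        have h1 := Multiset.toFinset_card_le m'
        rw [hTeq] at h1
        omega
      have hfull := aux_full_of_small Δ hdeg hspan hmin hTlt
      -- claim for any β in span(Δ restricted to complement)
      have hclaim : ∀ β ∈ span K (Δ '' ((Finset.univ \ m.toFinset : Finset (Fin n)) :
          Set (Fin n))), β * (m'.map Δ).prod ∈ Pspace Δ := by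
        intro β hβ
        induction hβ using Submodule.span_induction with
        | mem x hx =>
          obtain ⟨j, hj, rfl⟩ := hx
          have hjT : j ∉ m.toFinset := by
            have := Finset.mem_sdiff.mp (by exact_mod_cast hj)
            exact this.2
          have : Δ j * (m'.map Δ).prod = ((j ::ₘ m').map Δ).prod := by
            rw [Multiset.map_cons, Multiset.prod_cons]
          rw [this]
          apply ih
          · rw [Multiset.card_cons]; omega
          · have h1 : (j ::ₘ m').toFinset.card = m.toFinset.card + 1 := by
              rw [Multiset.toFinset_cons, hTeq,
                Finset.card_insert_of_notMem hjT]
            rw [Multiset.card_cons, h1]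
            omega
        | zero => rw [zero_mul]; exact Submodule.zero_mem _
        | add a b _ _ ha hb => rw [add_mul]; exact Submodule.add_mem _ ha hb
        | smul c a _ ha => rw [smul_mul_assoc]; exact Submodule.smul_mem _ _ ha
      have : (m.map Δ).prod = Δ i * (m'.map Δ).prod := by
        rw [← hcons, Multiset.map_cons, Multiset.prod_cons]
      rw [this]
      exact hclaim _ (hfull i)

lemma aux_Qsp_le_Pspace {d : ℕ}
    (hdeg : ∀ i, Δ i ∈ homogeneousSubmodule (Fin ℓ) K 1)
    (hspan : homogeneousSubmodule (Fin ℓ) K 1 ≤ span K (Set.range Δ))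
    (hmin : ∀ H : Finset (Fin n), IsFlat Δ H → rk Δ H = ℓ - 1 →
      d ≤ (Finset.univ \ H).card)
    {k : ℕ} (hk : k ≤ d) : Qsp Δ k ≤ Pspace Δ := by
  unfold Qsp
  rw [span_le]
  rintro _ ⟨m, hm, rfl⟩
  exact aux_prod_mem Δ hdeg hspan hmin (Multiset.card m) m (hm ▸ hk) (by omega)

end Aux

/-- `Sym^d(V*) ⊆ P(Δ)` iff `d` is at most the minimum size of a
cocircuit of `M(Δ)` (i.e. `d ≤ |E − H|` for every rank-`(ℓ−1)` flat `H`). -/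
theorem statement10 {K : Type*} [Field K] {ℓ n : ℕ}
    (Δ : Fin n → MvPolynomial (Fin ℓ) K)
    (hdeg : ∀ i, Δ i ∈ homogeneousSubmodule (Fin ℓ) K 1)
    (hspan : homogeneousSubmodule (Fin ℓ) K 1 ≤ span K (Set.range Δ))
    (hl : 0 < ℓ) (d : ℕ) :
    homogeneousSubmodule (Fin ℓ) K d ≤ Pspace Δ ↔
      ∀ H : Finset (Fin n), IsFlat Δ H → rk Δ H = ℓ - 1 →
        d ≤ (Finset.univ \ H).card := by
  constructor
  · -- forward direction
    intro hP H hflat hrk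
    by_contra hlt
    push_neg at hlt
    have hfd1 := aux_findim_hom1 (K := K) (ℓ := ℓ)
    have hWle : span K (Δ '' (H : Set (Fin n))) ≤ homogeneousSubmodule (Fin ℓ) K 1 :=
      aux_span_le_hom1 Δ hdeg _
    have hfdW : FiniteDimensional K (span K (Δ '' (H : Set (Fin n)))) := aux_findim_span Δ H
    have hnle : ¬ homogeneousSubmodule (Fin ℓ) K 1 ≤ span K (Δ '' (H : Set (Fin n))) := by
      intro hle
      have hmono := Submodule.finrank_mono hle
      rw [aux_finrank_hom1] at hmono
      unfold rk at hrk
      omega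
    obtain ⟨p0, hp0h, hp0W⟩ := SetLike.not_le_iff_exists.mp hnle
    have hfree : Module.Free K (MvPolynomial (Fin ℓ) K ⧸ span K (Δ '' (H : Set (Fin n)))) :=
      Module.Free.of_divisionRing _ _
    obtain ⟨f, hf0, hfW⟩ := Submodule.exists_dual_map_eq_bot_of_notMem hp0W (by infer_instance)
    have hker : ∀ w ∈ span K (Δ '' (H : Set (Fin n))), f w = 0 := by
      intro w hw
      have hmem : f w ∈ (span K (Δ '' (H : Set (Fin n)))).map f := ⟨w, hw, rfl⟩
      rw [hfW] at hmem
      exact (Submodule.mem_bot K).mp hmem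
    set v : Fin ℓ → K := fun j => f (X j) with hv
    have hev : ∀ p ∈ homogeneousSubmodule (Fin ℓ) K 1, eval v p = f p := by
      intro p hp
      rw [aux_hom1_eq_span] at hp
      induction hp using Submodule.span_induction with
      | mem x hx => obtain ⟨j, rfl⟩ := hx; rw [eval_X]
      | zero => simp
      | add a b _ _ ha hb => rw [map_add, map_add, ha, hb]
      | smul c a _ ha =>
        have h2 : f (c • a) = c * f a := by rw [map_smul, smul_eq_mul]
        have h3 : eval v (c • a) = c * eval v a := by rw [smul_eq_C_mul, map_mul, eval_C]
        rw [h2, h3, ha]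
    have hevp0 : eval v p0 ≠ 0 := by rw [hev p0 hp0h]; exact hf0
    have hexists : ∃ i, eval v (Δ i) ≠ 0 := by
      by_contra hno
      push_neg at hno
      apply hevp0
      have hall : ∀ p ∈ span K (Set.range Δ), eval v p = 0 := by
        intro p hp
        induction hp using Submodule.span_induction with
        | mem x hx => obtain ⟨i, rfl⟩ := hx; exact hno i
        | zero => simp
        | add a b _ _ ha hb => rw [map_add, ha, hb, add_zero]
        | smul c a _ ha => rw [smul_eq_C_mul, map_mul, eval_C, ha, mul_zero]
      exact hall p0 (hspan hp0h)
    obtain ⟨i0, hi0⟩ := hexists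
    have hvanish : ∀ q ∈ Pspace Δ, eval v (homogeneousComponent d q) = 0 := by
      intro q hq
      induction hq using Submodule.span_induction with
      | mem x hx =>
        obtain ⟨S, rfl⟩ := hx
        show eval v (homogeneousComponent d (prodForms Δ S)) = 0
        have hhom : (prodForms Δ S).IsHomogeneous S.card := by
          have := MvPolynomial.IsHomogeneous.prod S Δ (fun _ => 1) (fun i _ => hdeg i)
          simpa [prodForms] using this
        rw [homogeneousComponent_of_mem hhom]
        by_cases hdS : d = S.card
        · rw [if_pos hdS]
          have hnsub : ¬ S ⊆ Finset.univ \ H := by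
            intro hsub
            have := Finset.card_le_card hsub
            omega
          obtain ⟨i, hiS, hiH⟩ := Finset.not_subset.mp hnsub
          have hiH' : i ∈ H := by
            by_contra h
            exact hiH (Finset.mem_sdiff.mpr ⟨Finset.mem_univ _, h⟩)
          unfold prodForms
          rw [map_prod]
          apply Finset.prod_eq_zero hiS
          have hm : Δ i ∈ span K (Δ '' (H : Set (Fin n))) := subset_span ⟨i, hiH', rfl⟩
          rw [hev _ (hdeg i)]
          exact hker _ hm
        · rw [if_neg hdS, map_zero]
      | zero => rw [map_zero, map_zero]
      | add a b _ _ ha hb => rw [map_add, map_add, ha, hb, add_zero]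
      | smul c a _ ha => rw [map_smul, smul_eq_C_mul, map_mul, eval_C, ha, mul_zero]
    have hpow : ((Δ i0) ^ d) ∈ homogeneousSubmodule (Fin ℓ) K d := by
      have := MvPolynomial.IsHomogeneous.pow (hdeg i0) d
      simpa using this
    have h1 := hvanish _ (hP hpow)
    rw [homogeneousComponent_of_mem hpow, if_pos rfl, map_pow] at h1
    have hd0 : d ≠ 0 := by omega
    exact hi0 (pow_eq_zero_iff hd0 |>.mp h1)
  · -- backward direction
    intro hmin p hp
    rw [← support_sum_monomial_coeff p]
    apply Submodule.sum_mem
    intro m hm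
    have hdm : m.degree = d := by
      have := (mem_homogeneousSubmodule _ _).mp hp (mem_support_iff.mp hm)
      rw [Finsupp.degree_eq_weight_one]
      exact this
    have h1 : (monomial m) (coeff m p) = coeff m p • monomial m 1 := by
      rw [smul_eq_C_mul, C_mul_monomial, mul_one]
    rw [h1]
    apply Submodule.smul_mem
    apply aux_Qsp_le_Pspace Δ hdeg hspan hmin (le_refl d)
    rw [← hdm]
    exact aux_mon_mem_Qsp Δ hspan m
end

section
/- Let Δ be a sequence of n linear forms spanning the dual of an ℓ-dimensional vector space V, and let i ∈ E be neither a loop nor an isthmus of M(Δ). Then the sequence 0 → P(Δ−αᵢ) → P(Δ) → P(Δ/αᵢ) → 0 is exact, where the first map is multiplication by αᵢ and the second is induced by restriction of linear forms to ker(αᵢ). -/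
open MvPolynomial Finset Submodule
open scoped Classical

section AuxAll
attribute [local instance 1100] Classical.propDecidable
set_option linter.unusedSectionVars false
set_option linter.unusedVariables false
set_option maxHeartbeats 1600000
noncomputable section
variable {K : Type*} [Field K]

section PartI
variable {ι : Type*} [Fintype ι] {σ : Type*} (Δ : ι → MvPolynomial σ K)

variable {ι : Type*} [Fintype ι] (Δ : ι → MvPolynomial σ K)

variable (Δ : ι → MvPolynomial σ K)

lemma span_image_finset (S : Finset ι) :
    span K (Δ '' (S : Set ι)) = span K ((S.image Δ : Finset _) : Set (MvPolynomial σ K)) := by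
  rw [Finset.coe_image]

instance spanFD (S : Finset ι) : FiniteDimensional K (span K (Δ '' (S : Set ι))) := by
  rw [span_image_finset]
  infer_instance

lemma rk_le_card (S : Finset ι) : rk Δ S ≤ S.card := by
  calc rk Δ S = Module.finrank K (span K ((S.image Δ : Finset _) : Set (MvPolynomial σ K))) := by
        rw [rk, span_image_finset]
    _ ≤ (S.image Δ).card := finrank_span_finset_le_card _
    _ ≤ S.card := Finset.card_image_le

lemma rk_mono {S T : Finset ι} (h : S ⊆ T) : rk Δ S ≤ rk Δ T :=
  Submodule.finrank_mono (span_mono (Set.image_mono (by exact_mod_cast h)))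

lemma rk_union_le (S T : Finset ι) : rk Δ (S ∪ T) ≤ rk Δ S + rk Δ T := by
  have h1 : span K (Δ '' ((S ∪ T : Finset ι) : Set ι)) =
      span K (Δ '' (S : Set ι)) ⊔ span K (Δ '' (T : Set ι)) := by
    rw [Finset.coe_union, Set.image_union, span_union]
  have := Submodule.finrank_sup_add_finrank_inf_eq (span K (Δ '' (S : Set ι)))
    (span K (Δ '' (T : Set ι)))
  unfold rk
  rw [h1]
  linarith

lemma indep_subset {S T : Finset ι} (hT : Indep Δ T) (h : S ⊆ T) : Indep Δ S := by
  have h1 : rk Δ S ≤ S.card := rk_le_card Δ S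
  have h2 : rk Δ T ≤ rk Δ S + rk Δ (T \ S) := by
    have := rk_union_le Δ S (T \ S)
    rwa [Finset.union_sdiff_of_subset h] at this
  have h3 : rk Δ (T \ S) ≤ (T \ S).card := rk_le_card Δ _
  have h4 : (T \ S).card + S.card = T.card := Finset.card_sdiff_add_card_eq_card h
  unfold Indep at *
  linarith

lemma indep_insert {S : Finset ι} {i : ι} (hS : Indep Δ S)
    (hiS : Δ i ∉ span K (Δ '' (S : Set ι))) : Indep Δ (insert i S) := by
  have hi : i ∉ S := fun h => hiS (subset_span ⟨i, by simpa using h, rfl⟩)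
  have h1 : span K (Δ '' ((insert i S : Finset ι) : Set ι)) =
      (K ∙ Δ i) ⊔ span K (Δ '' (S : Set ι)) := by
    rw [Finset.coe_insert, Set.image_insert_eq, span_insert]
  have hne : Δ i ≠ 0 := fun h => hiS (h ▸ zero_mem _)
  have hinf : (K ∙ Δ i) ⊓ span K (Δ '' (S : Set ι)) = ⊥ := by
    rw [eq_bot_iff]
    rintro x ⟨hx1, hx2⟩
    rcases mem_span_singleton.1 hx1 with ⟨c, rfl⟩
    rcases eq_or_ne c 0 with rfl | hc
    · simp
    · refine absurd ?_ hiS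
      have := smul_mem _ c⁻¹ hx2
      rwa [smul_smul, inv_mul_cancel₀ hc, one_smul] at this
  have := Submodule.finrank_sup_add_finrank_inf_eq (K ∙ Δ i) (span K (Δ '' (S : Set ι)))
  rw [hinf] at this
  simp only [finrank_bot, add_zero, finrank_span_singleton hne] at this
  unfold Indep rk at *
  rw [h1, this, Finset.card_insert_of_notMem hi, hS]
  linarith

lemma dep_mem_span {C : Finset ι} {e : ι} (he : e ∈ C) (hdep : ¬ Indep Δ C)
    (hind : Indep Δ (C.erase e)) : Δ e ∈ span K (Δ '' ((C.erase e : Finset ι) : Set ι)) := by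
  by_contra h
  exact hdep (by simpa [Finset.insert_erase he] using indep_insert Δ hind h)


lemma exists_circuit {J : Finset ι} {e : ι} (hJ : Indep Δ J) (he : e ∉ J)
    (hsp : Δ e ∈ span K (Δ '' (J : Set ι))) :
    ∃ C : Finset ι, IsCircuit Δ C ∧ e ∈ C ∧ C ⊆ insert e J := by
  induction J using Finset.strongInduction with
  | _ J IH =>
  by_cases hmin : ∃ f ∈ J, Δ e ∈ span K (Δ '' ((J.erase f : Finset ι) : Set ι))
  · obtain ⟨f, hf, hsp'⟩ := hmin
    obtain ⟨C, hC, heC, hCsub⟩ := IH (J.erase f) (Finset.erase_ssubset hf)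
      (indep_subset Δ hJ (Finset.erase_subset _ _))
      (fun h => he (Finset.erase_subset _ _ h)) hsp'
    exact ⟨C, hC, heC, hCsub.trans (Finset.insert_subset_insert _ (Finset.erase_subset _ _))⟩
  push_neg at hmin
  refine ⟨insert e J, ⟨?_, ?_⟩, Finset.mem_insert_self _ _, le_refl _⟩
  · intro hind
    have h1 : span K (Δ '' ((insert e J : Finset ι) : Set ι)) = span K (Δ '' (J : Set ι)) := by
      rw [Finset.coe_insert, Set.image_insert_eq, Submodule.span_insert_eq_span hsp]
    have h2 : rk Δ (insert e J) ≤ J.card := by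
      rw [rk, h1]
      exact rk_le_card Δ J
    rw [Indep, Finset.card_insert_of_notMem he] at hind
    linarith
  · intro f hf
    rcases Finset.mem_insert.1 hf with rfl | hfJ
    · rw [Finset.erase_insert he]
      exact hJ
    · have hef : e ≠ f := fun h => he (h ▸ hfJ)
      rw [Finset.erase_insert_of_ne hef]
      exact indep_insert Δ (indep_subset Δ hJ (Finset.erase_subset _ _)) (hmin f hfJ)


instance pspaceFD {ι σ : Type*} [Fintype ι] (Δ : ι → MvPolynomial σ K) :
    FiniteDimensional K (Pspace Δ) :=
  FiniteDimensional.span_of_finite K (Set.finite_range _)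

end PartI

variable {ι : Type*} [Fintype ι] {σ : Type*}

section PartII
variable {ι : Type*} [Fintype ι] [LinearOrder ι] (Δ : ι → MvPolynomial σ K)

/-- the greedy (from above) independent subset of `T`. -/
def gr (T : Finset ι) : Finset ι :=
  T.filter fun e => Δ e ∉ span K (Δ '' ((T.filter fun f => e < f : Finset ι) : Set ι))

lemma gr_subset (T : Finset ι) : gr Δ T ⊆ T := Finset.filter_subset _ _

lemma indep_of_greedy : ∀ (J : Finset ι),
    (∀ e ∈ J, Δ e ∉ span K (Δ '' ((J.filter fun f => e < f : Finset ι) : Set ι))) →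
    Indep Δ J := by
  intro J
  induction J using Finset.strongInduction with
  | _ J IH =>
  intro hJ
  rcases J.eq_empty_or_nonempty with rfl | hne
  · show rk Δ ∅ = _
    rw [rk]
    have hb : span K (Δ '' ((∅ : Finset ι) : Set ι)) = ⊥ := by simp
    rw [hb]
    simp [finrank_bot]
  have hm := J.min'_mem hne
  set m := J.min' hne
  have h1 : J.filter (fun f => m < f) = J.erase m := by
    ext f
    simp only [Finset.mem_filter, Finset.mem_erase]
    constructor
    · rintro ⟨hf, hlt⟩; exact ⟨ne_of_gt hlt, hf⟩
    · rintro ⟨hne', hf⟩; exact ⟨hf, lt_of_le_of_ne (J.min'_le f hf) (Ne.symm hne')⟩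
  have h2 : Indep Δ (J.erase m) := by
    refine IH _ (Finset.erase_ssubset hm) ?_
    intro e he
    have heJ : e ∈ J := Finset.erase_subset _ _ he
    have : (J.erase m).filter (fun f => e < f) = J.filter (fun f => e < f) := by
      ext f
      simp only [Finset.mem_filter, Finset.mem_erase]
      constructor
      · rintro ⟨⟨_, hf⟩, hlt⟩; exact ⟨hf, hlt⟩
      · rintro ⟨hf, hlt⟩
        refine ⟨⟨?_, hf⟩, hlt⟩
        rintro rfl
        exact absurd (J.min'_le e heJ) (not_le.2 hlt)
    rw [this]
    exact hJ e heJ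
  have h3 : Δ m ∉ span K (Δ '' ((J.erase m : Finset ι) : Set ι)) := by
    rw [← h1]; exact hJ m hm
  have h5 := indep_insert Δ h2 h3
  have h6 : insert m (J.erase m) = J := by
    ext x
    simp only [Finset.mem_insert, Finset.mem_erase]
    constructor
    · rintro (rfl | ⟨-, hx⟩) <;> [exact hm; exact hx]
    · intro hx
      by_cases hxm : x = m
      · exact Or.inl hxm
      · exact Or.inr ⟨hxm, hx⟩
  rwa [h6] at h5

lemma gr_indep (T : Finset ι) : Indep Δ (gr Δ T) := by
  refine indep_of_greedy Δ _ ?_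
  intro e he
  rw [gr, Finset.mem_filter] at he
  intro hsp
  refine he.2 (span_mono (Set.image_mono ?_) hsp)
  intro f hf
  simp only [Finset.coe_filter, Set.mem_setOf_eq] at hf ⊢
  exact ⟨gr_subset Δ T hf.1, hf.2⟩

lemma gr_span_le (T : Finset ι) : ∀ (k : ℕ) (e : ι), (T.filter fun f => e < f).card ≤ k →
    span K (Δ '' ((T.filter fun f => e < f : Finset ι) : Set ι)) ≤
    span K (Δ '' (((gr Δ T).filter fun f => e < f : Finset ι) : Set ι)) := by
  intro k
  induction k using Nat.strong_induction_on with
  | _ k IH =>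
  intro e hcard
  rw [span_le]
  rintro - ⟨f, hf, rfl⟩
  have hf' : f ∈ T.filter fun f => e < f := by exact_mod_cast hf
  rw [Finset.mem_filter] at hf'
  obtain ⟨hfT, hef⟩ := hf'
  by_cases hfgr : f ∈ gr Δ T
  · exact subset_span ⟨f, by simp [hfgr, hef], rfl⟩
  · have hsp : Δ f ∈ span K (Δ '' ((T.filter fun g => f < g : Finset ι) : Set ι)) := by
      rw [gr, Finset.mem_filter] at hfgr
      push_neg at hfgr
      exact hfgr hfT
    have hss : (T.filter fun g => f < g) ⊂ (T.filter fun g => e < g) := by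
      refine Finset.ssubset_iff_of_subset ?_ |>.2 ⟨f, by simp [hfT, hef], by simp⟩
      intro g hg
      rw [Finset.mem_filter] at hg ⊢
      exact ⟨hg.1, hef.trans hg.2⟩
    have hcard' : (T.filter fun g => f < g).card < k :=
      lt_of_lt_of_le (Finset.card_lt_card hss) hcard
    have h2 := IH _ hcard' f (le_refl _)
    refine span_mono (Set.image_mono ?_) (h2 hsp)
    intro g hg
    simp only [Finset.coe_filter, Set.mem_setOf_eq] at hg ⊢
    exact ⟨hg.1, hef.trans hg.2⟩

lemma extAct_of_not_gr {T : Finset ι} {e : ι} (heT : e ∈ T) (hegr : e ∉ gr Δ T) :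
    ExtAct Δ (gr Δ T) e := by
  have hsp : Δ e ∈ span K (Δ '' ((T.filter fun f => e < f : Finset ι) : Set ι)) := by
    rw [gr, Finset.mem_filter] at hegr
    push_neg at hegr
    exact hegr heT
  have hsp2 : Δ e ∈ span K (Δ '' (((gr Δ T).filter fun f => e < f : Finset ι) : Set ι)) :=
    gr_span_le Δ T _ e (le_refl _) hsp
  have hIind : Indep Δ ((gr Δ T).filter fun f => e < f) :=
    indep_subset Δ (gr_indep Δ T) (Finset.filter_subset _ _)
  have heI : e ∉ (gr Δ T).filter fun f => e < f := by simp
  obtain ⟨C, hC, heC, hCsub⟩ := exists_circuit Δ hIind heI hsp2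
  refine ⟨C, hC, ?_, heC, ?_⟩
  · refine hCsub.trans ?_
    intro x hx
    rcases Finset.mem_insert.1 hx with rfl | hx'
    · simp only [Finset.mem_insert]
      tauto
    · have := Finset.filter_subset (fun f => e < f) (gr Δ T) hx'
      simp only [Finset.mem_insert]
      tauto
  · intro f hf
    rcases Finset.mem_insert.1 (hCsub hf) with rfl | hfI
    · exact le_refl _
    · exact le_of_lt (Finset.mem_filter.1 hfI).2

lemma exSet_disjoint {I : Finset ι} (hI : Indep Δ I) {e : ι} (he : e ∈ exSet Δ I) : e ∉ I := by
  intro heI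
  obtain ⟨C, hC, hCsub, heC, -⟩ := (Finset.mem_filter.1 he).2
  refine hC.1 (indep_subset Δ hI ?_)
  intro x hx
  have h' := hCsub hx
  simp only [Finset.mem_insert] at h'
  rcases h' with rfl | hx'
  · exact heI
  · exact hx'

end PartII

section PartIIb
variable {n : ℕ} (Δ : Fin n → MvPolynomial σ K)

def mea (T : Finset (Fin n)) : ℕ := ∑ j ∈ T, 2 ^ (j : ℕ)

def goodGens : Finset (MvPolynomial σ K) :=
  (Finset.univ.powerset.filter (Indep Δ)).image
    (fun I => prodForms Δ (Finset.univ \ (I ∪ exSet Δ I)))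

lemma mea_lt {T : Finset (Fin n)} {e k : Fin n} (heT : e ∉ T) (hkT : k ∈ T) (hek : e < k) :
    mea (insert e (T.erase k)) < mea T := by
  have h1 : mea (insert e (T.erase k)) = 2 ^ (e : ℕ) + mea (T.erase k) := by
    rw [mea, Finset.sum_insert (fun h => heT (Finset.erase_subset _ _ h))]
    rfl
  have h2 : mea T = 2 ^ (k : ℕ) + mea (T.erase k) := by
    rw [mea, ← Finset.add_sum_erase _ _ hkT]
    rfl
  have h3 : 2 ^ (e : ℕ) < 2 ^ (k : ℕ) :=
    Nat.pow_lt_pow_right (by norm_num) hek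
  linarith

lemma prod_mem_goodspan : ∀ (N : ℕ) (S : Finset (Fin n)), mea (Finset.univ \ S) ≤ N →
    prodForms Δ S ∈ span K ((goodGens Δ : Finset (MvPolynomial σ K)) : Set (MvPolynomial σ K)) := by
  intro N
  induction N using Nat.strong_induction_on with
  | _ N IH =>
  intro S hN
  set T := Finset.univ \ S with hT
  set I := gr Δ T with hI
  by_cases hterm : exSet Δ I ⊆ T
  · -- terminal case
    have hTeq : T = I ∪ exSet Δ I := by
      ext e
      constructor
      · intro heT
        by_cases heI : e ∈ I
        · exact Finset.mem_union_left _ heI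
        · refine Finset.mem_union_right _ ?_
          rw [exSet, Finset.mem_filter]
          exact ⟨Finset.mem_univ _, extAct_of_not_gr Δ heT heI⟩
      · intro he
        rcases Finset.mem_union.1 he with h | h
        · exact gr_subset Δ T h
        · exact hterm h
    have hSeq : S = Finset.univ \ (I ∪ exSet Δ I) := by
      rw [← hTeq, hT, Finset.sdiff_sdiff_eq_self (Finset.subset_univ S)]
    refine subset_span ?_
    rw [goodGens]
    refine Finset.mem_coe.2 (Finset.mem_image.2 ⟨I, ?_, ?_⟩)
    · rw [Finset.mem_filter, Finset.mem_powerset]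
      exact ⟨Finset.subset_univ _, gr_indep Δ T⟩
    · rw [← hSeq]
  · -- rewriting case
    rw [Finset.not_subset] at hterm
    obtain ⟨e, heEx, heT⟩ := hterm
    have heS : e ∈ S := by
      by_contra h
      exact heT (Finset.mem_sdiff.2 ⟨Finset.mem_univ _, h⟩)
    obtain ⟨C, hCirc, hCsub, heC, hmin⟩ := (Finset.mem_filter.1 heEx).2
    have hCe : C.erase e ⊆ I := by
      intro x hx
      have h' := hCsub (Finset.erase_subset _ _ hx)
      simp only [Finset.mem_insert] at h'
      rcases h' with rfl | h
      · exact absurd rfl (Finset.mem_erase.1 hx).1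
      · exact h
    have hsp : Δ e ∈ span K (Δ '' ((C.erase e : Finset (Fin n)) : Set (Fin n))) :=
      dep_mem_span Δ heC hCirc.1 (hCirc.2 e heC)
    rw [Finsupp.mem_span_image_iff_linearCombination] at hsp
    obtain ⟨l, hlsupp, hl⟩ := hsp
    rw [Finsupp.mem_supported] at hlsupp
    have hprod : prodForms Δ S = ∑ k ∈ l.support, l k • prodForms Δ (insert k (S.erase e)) := by
      have h1 : prodForms Δ S = Δ e * prodForms Δ (S.erase e) :=
        (Finset.mul_prod_erase S Δ heS).symm
      rw [h1, ← hl, Finsupp.linearCombination_apply, Finsupp.sum, Finset.sum_mul]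
      refine Finset.sum_congr rfl ?_
      intro k hk
      have hkC : k ∈ C.erase e := hlsupp hk
      have hkT : k ∈ T := gr_subset Δ T (hCe hkC)
      have hkS : k ∉ S.erase e := by
        intro h
        exact (Finset.mem_sdiff.1 hkT).2 (Finset.erase_subset _ _ h)
      simp only [prodForms]
      rw [smul_mul_assoc, Finset.prod_insert hkS]
    rw [hprod]
    refine Submodule.sum_mem _ ?_
    intro k hk
    have hkC : k ∈ C.erase e := hlsupp hk
    have hkT : k ∈ T := gr_subset Δ T (hCe hkC)
    have hek : e < k := lt_of_le_of_ne (hmin k (Finset.erase_subset _ _ hkC))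
      (Ne.symm (Finset.mem_erase.1 hkC).1)
    have hTk : Finset.univ \ insert k (S.erase e) = insert e (T.erase k) := by
      have hkS : k ∉ S := (Finset.mem_sdiff.1 hkT).2
      ext x
      simp only [Finset.mem_sdiff, Finset.mem_univ, Finset.mem_insert, Finset.mem_erase,
        true_and, hT]
      by_cases hx : x = e <;> by_cases hx' : x = k <;> simp_all [heS, hkS]
    have hlt : mea (Finset.univ \ insert k (S.erase e)) < N := by
      rw [hTk]
      exact lt_of_lt_of_le (mea_lt heT hkT hek) hN
    exact smul_mem _ _ (IH _ hlt _ (le_refl _))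

lemma finrank_Pspace_le :
    Module.finrank K (Pspace Δ) ≤ (Finset.univ.powerset.filter (Indep Δ)).card := by
  have h1 : Pspace Δ ≤ span K ((goodGens Δ : Finset (MvPolynomial σ K)) : Set (MvPolynomial σ K)) := by
    rw [Pspace, span_le]
    rintro - ⟨S, rfl⟩
    exact prod_mem_goodspan Δ _ S (le_refl _)
  calc Module.finrank K (Pspace Δ) ≤ Module.finrank K (span K ((goodGens Δ : Finset (MvPolynomial σ K)) : Set (MvPolynomial σ K))) :=
        Submodule.finrank_mono h1
    _ ≤ (goodGens Δ).card := finrank_span_finset_le_card _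
    _ ≤ _ := Finset.card_image_le

end PartIIb

variable {ℓ n : ℕ}

variable {K : Type*} [Field K] {ℓ : ℕ}

/-- decomposition of a linear form -/
lemma lin_decomp {p : MvPolynomial (Fin ℓ) K} (hp : p ∈ homogeneousSubmodule (Fin ℓ) K 1) :
    p = ∑ j : Fin ℓ, C (coeff (Finsupp.single j 1) p) * X j := by
  have hph : p.IsHomogeneous 1 := hp
  apply MvPolynomial.ext
  intro m
  rw [coeff_sum]
  by_cases hm : ∃ j : Fin ℓ, m = Finsupp.single j 1
  · obtain ⟨j₀, rfl⟩ := hm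
    rw [Finset.sum_eq_single j₀ ?h0 ?h1]
    · rw [coeff_C_mul, coeff_X', if_pos rfl, mul_one]
    case h0 =>
      intro j _ hne
      rw [coeff_C_mul, coeff_X', if_neg, mul_zero]
      intro h
      exact hne (Finsupp.single_left_injective (one_ne_zero (α := ℕ)) h)
    case h1 =>
      intro h
      exact absurd (Finset.mem_univ j₀) h
  · have h1 : coeff m p = 0 := by
      by_contra h
      have hdeg := hph h
      -- weight 1 m = 1, so m = single j 1 for some j
      have hsum : (m.sum fun _ e => e) = 1 := by
        simpa [Finsupp.weight, Finsupp.linearCombination, Finsupp.sum] using hdeg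
      obtain ⟨j, hj⟩ : ∃ j : Fin ℓ, m j ≠ 0 := by
        by_contra hall
        push_neg at hall
        have : m = 0 := Finsupp.ext fun j => hall j
        rw [this] at hsum
        simp [Finsupp.sum] at hsum
      apply hm
      refine ⟨j, ?_⟩
      have hjs : j ∈ m.support := Finsupp.mem_support_iff.2 hj
      have h2 : m j ≤ m.sum fun _ e => e := by
        rw [Finsupp.sum]
        exact Finset.single_le_sum (fun _ _ => Nat.zero_le _) hjs
      have h3 : m j = 1 := le_antisymm (hsum ▸ h2) (Nat.one_le_iff_ne_zero.2 hj)
      -- any other coordinate is 0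
      apply Finsupp.ext
      intro j'
      rcases eq_or_ne j' j with rfl | hne
      · simp [h3]
      · have : m.sum (fun _ e => e) = m j + ∑ x ∈ m.support.erase j, m x := by
          rw [Finsupp.sum, ← Finset.add_sum_erase _ _ hjs]
        rw [hsum, h3] at this
        have h4 : ∑ x ∈ m.support.erase j, m x = 0 := by linarith
        have h5 : ∀ x ∈ m.support.erase j, m x = 0 := by
          intro x hx
          exact (Finset.sum_eq_zero_iff.1 h4) x hx
        rw [Finsupp.single_apply, if_neg (by exact fun h => hne h.symm)]
        by_cases hj' : j' ∈ m.support
        · exact h5 j' (Finset.mem_erase.2 ⟨hne, hj'⟩)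
        · exact Finsupp.notMem_support_iff.1 hj'
    rw [h1]
    symm
    refine Finset.sum_eq_zero ?_
    intro j _
    rw [coeff_C_mul, coeff_X', if_neg (fun h => hm ⟨j, h.symm⟩), mul_zero]

section Phi

variable (α : MvPolynomial (Fin ℓ) K) (j₀ : Fin ℓ)

/-- substitution sending `α` to zero -/
def phiSub : Fin ℓ → MvPolynomial (Fin ℓ) K :=
  fun j => if j = j₀ then X j₀ - C (coeff (Finsupp.single j₀ 1) α)⁻¹ * α else X j

def phi : MvPolynomial (Fin ℓ) K →ₐ[K] MvPolynomial (Fin ℓ) K := aeval (phiSub α j₀)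

variable {α j₀}

lemma phiSub_linear (hα : α ∈ homogeneousSubmodule (Fin ℓ) K 1) (j : Fin ℓ) :
    phiSub α j₀ j ∈ homogeneousSubmodule (Fin ℓ) K 1 := by
  rw [phiSub]
  split
  · refine sub_mem ?_ ?_
    · exact (isHomogeneous_X K j₀ : MvPolynomial.IsHomogeneous _ 1)
    · have := Submodule.smul_mem (homogeneousSubmodule (Fin ℓ) K 1)
        ((coeff (Finsupp.single j₀ 1) α)⁻¹) hα
      rwa [smul_eq_C_mul] at this
  · exact (isHomogeneous_X K j : MvPolynomial.IsHomogeneous _ 1)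

lemma phi_C_mul_sub (hα : α ∈ homogeneousSubmodule (Fin ℓ) K 1)
    (hc : coeff (Finsupp.single j₀ 1) α ≠ 0) (j : Fin ℓ) :
    C (coeff (Finsupp.single j 1) α) * phiSub α j₀ j =
      C (coeff (Finsupp.single j 1) α) * X j - if j = j₀ then α else 0 := by
  rw [phiSub]
  rcases eq_or_ne j j₀ with rfl | hne
  · rw [if_pos rfl, if_pos rfl, mul_sub, ← mul_assoc, ← C_mul,
      mul_inv_cancel₀ hc, C_1, one_mul]
  · rw [if_neg hne, if_neg hne, sub_zero]

lemma phi_alpha (hα : α ∈ homogeneousSubmodule (Fin ℓ) K 1)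
    (hc : coeff (Finsupp.single j₀ 1) α ≠ 0) : phi α j₀ α = 0 := by
  have hstep : phi α j₀ α = ∑ j : Fin ℓ, (phi α j₀) (C (coeff (Finsupp.single j 1) α) * X j) := by
    calc phi α j₀ α = phi α j₀ (∑ j : Fin ℓ, C (coeff (Finsupp.single j 1) α) * X j) :=
          congrArg _ (lin_decomp hα)
      _ = _ := map_sum _ _ _
  rw [hstep]
  have h1 : ∀ j : Fin ℓ, (phi α j₀) (C (coeff (Finsupp.single j 1) α) * X j) =
      C (coeff (Finsupp.single j 1) α) * X j - if j = j₀ then α else 0 := by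
    intro j
    rw [map_mul, phi, aeval_C, aeval_X, algebraMap_eq]
    exact phi_C_mul_sub hα hc j
  rw [Finset.sum_congr rfl fun j _ => h1 j, Finset.sum_sub_distrib, ← lin_decomp hα]
  simp

lemma phi_linear (hα : α ∈ homogeneousSubmodule (Fin ℓ) K 1)
    {β : MvPolynomial (Fin ℓ) K} (hβ : β ∈ homogeneousSubmodule (Fin ℓ) K 1) :
    phi α j₀ β ∈ homogeneousSubmodule (Fin ℓ) K 1 := by
  have hstep : phi α j₀ β = ∑ j : Fin ℓ, (phi α j₀) (C (coeff (Finsupp.single j 1) β) * X j) := by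
    calc phi α j₀ β = phi α j₀ (∑ j : Fin ℓ, C (coeff (Finsupp.single j 1) β) * X j) :=
          congrArg _ (lin_decomp hβ)
      _ = _ := map_sum _ _ _
  rw [hstep]
  refine Submodule.sum_mem _ ?_
  intro j _
  rw [map_mul, phi, aeval_C, aeval_X, algebraMap_eq]
  have := Submodule.smul_mem (homogeneousSubmodule (Fin ℓ) K 1)
    (coeff (Finsupp.single j 1) β) (phiSub_linear (j₀ := j₀) hα j)
  rwa [smul_eq_C_mul] at this

lemma phi_sub_self_mem (f : MvPolynomial (Fin ℓ) K) :
    f - phi α j₀ f ∈ Ideal.span {α} := by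
  induction f using MvPolynomial.induction_on with
  | C a => rw [phi, aeval_C, algebraMap_eq, sub_self]; exact zero_mem _
  | add p q hp hq =>
      rw [map_add]
      have : p + q - (phi α j₀ p + phi α j₀ q) = (p - phi α j₀ p) + (q - phi α j₀ q) := by ring
      rw [this]
      exact add_mem hp hq
  | mul_X p j hp =>
      rw [map_mul]
      have hXj : X j - phi α j₀ (X j) ∈ Ideal.span {α} := by
        rw [phi, aeval_X, phiSub]
        split
        · next h =>
            subst h
            have : X j - (X j - C (coeff (Finsupp.single j 1) α)⁻¹ * α) =
              C (coeff (Finsupp.single j 1) α)⁻¹ * α := by ring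
            rw [this]
            exact Ideal.mul_mem_left _ _ (Ideal.subset_span rfl)
        · simp
      have : p * X j - phi α j₀ p * phi α j₀ (X j) =
          (p - phi α j₀ p) * X j + phi α j₀ p * (X j - phi α j₀ (X j)) := by ring
      rw [this]
      exact add_mem (Ideal.mul_mem_right _ _ hp) (Ideal.mul_mem_left _ _ hXj)

lemma phi_eq_zero_iff (hα : α ∈ homogeneousSubmodule (Fin ℓ) K 1)
    (hc : coeff (Finsupp.single j₀ 1) α ≠ 0) (f : MvPolynomial (Fin ℓ) K) :
    phi α j₀ f = 0 ↔ f ∈ Ideal.span {α} := by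
  constructor
  · intro h
    have := phi_sub_self_mem (α := α) (j₀ := j₀) f
    rwa [h, sub_zero] at this
  · intro h
    obtain ⟨a, ha⟩ := Ideal.mem_span_singleton'.1 h
    rw [← ha, map_mul, phi_alpha hα hc, mul_zero]

end Phi

/-- a linear form in the ideal `(α)` is a scalar multiple of `α`. -/
lemma lin_mem_span_alpha {α β : MvPolynomial (Fin ℓ) K}
    (hα : α ∈ homogeneousSubmodule (Fin ℓ) K 1)
    (hβ : β ∈ homogeneousSubmodule (Fin ℓ) K 1)
    (h : β ∈ Ideal.span {α}) : ∃ d : K, β = C d * α := by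
  obtain ⟨g, hg⟩ := Ideal.mem_span_singleton'.1 h
  refine ⟨coeff 0 g, ?_⟩
  have hco : ∀ j : Fin ℓ, coeff (Finsupp.single j 1) β =
      coeff 0 g * coeff (Finsupp.single j 1) α := by
    intro j
    have h1 : β = g * α := hg.symm
    have h2 : g * α = ∑ j' : Fin ℓ, C (coeff (Finsupp.single j' 1) α) * (g * X j') := by
      conv_lhs => rw [lin_decomp hα]
      rw [Finset.mul_sum]
      refine Finset.sum_congr rfl ?_
      intro j' _
      ring
    rw [h1, h2, coeff_sum]
    rw [Finset.sum_eq_single j ?h0 ?h1]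
    · rw [coeff_C_mul, coeff_mul_X', if_pos (by simp), mul_comm]
      congr 1
      simp
    case h0 =>
      intro j' _ hne
      rw [coeff_C_mul, coeff_mul_X', if_neg, mul_zero]
      intro hmem
      rw [Finsupp.mem_support_iff] at hmem
      apply hne
      have := Finsupp.single_apply (a := j) (a' := j') (b := (1:ℕ))
      rw [this] at hmem
      split at hmem
      · next h' => exact h'.symm
      · exact absurd rfl hmem
    case h1 =>
      intro h'
      exact absurd (Finset.mem_univ j) h'
  have hCd : C (coeff 0 g) * α ∈ homogeneousSubmodule (Fin ℓ) K 1 := by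
    have := Submodule.smul_mem (homogeneousSubmodule (Fin ℓ) K 1) (coeff 0 g) hα
    rwa [smul_eq_C_mul] at this
  rw [lin_decomp hβ, lin_decomp hCd]
  refine Finset.sum_congr rfl ?_
  intro j _
  rw [hco j, coeff_C_mul]


lemma exists_coeff {α : MvPolynomial (Fin ℓ) K} (hα : α ∈ homogeneousSubmodule (Fin ℓ) K 1)
    (h0 : α ≠ 0) : ∃ j₀ : Fin ℓ, coeff (Finsupp.single j₀ 1) α ≠ 0 := by
  by_contra h
  push_neg at h
  apply h0
  rw [lin_decomp hα]
  refine Finset.sum_eq_zero ?_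
  intro j _
  rw [h j, map_zero, zero_mul]

lemma span_forms_le_linear {ι : Type*} [Fintype ι] {Δ : ι → MvPolynomial (Fin ℓ) K}
    (hdeg : ∀ j, Δ j ∈ homogeneousSubmodule (Fin ℓ) K 1) (S : Finset ι) :
    span K (Δ '' (S : Set ι)) ≤ homogeneousSubmodule (Fin ℓ) K 1 := by
  rw [span_le]
  rintro - ⟨j, -, rfl⟩
  exact hdeg j

/-- rank–nullity for a submodule under a linear endomorphism. -/
lemma finrank_eq_map_add_inf_ker (f : MvPolynomial (Fin ℓ) K →ₗ[K] MvPolynomial (Fin ℓ) K)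
    (W : Submodule K (MvPolynomial (Fin ℓ) K)) [FiniteDimensional K W] :
    Module.finrank K W =
      Module.finrank K (Submodule.map f W) + Module.finrank K (W ⊓ LinearMap.ker f : Submodule K _) := by
  have h1 := LinearMap.finrank_range_add_finrank_ker (f.comp W.subtype)
  have h2 : LinearMap.range (f.comp W.subtype) = Submodule.map f W := by
    rw [LinearMap.range_comp, Submodule.range_subtype]
  have h3 : LinearMap.ker (f.comp W.subtype) = Submodule.comap W.subtype (LinearMap.ker f) :=
    LinearMap.ker_comp _ _
  have h4 : Module.finrank K (Submodule.comap W.subtype (LinearMap.ker f)) =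
      Module.finrank K (W ⊓ LinearMap.ker f : Submodule K _) := by
    rw [← Submodule.finrank_map_subtype_eq W (Submodule.comap W.subtype (LinearMap.ker f)),
      Submodule.map_comap_subtype]
  rw [h2, h3, h4] at h1
  exact h1.symm

section Conrk
variable {Δ : Fin n → MvPolynomial (Fin ℓ) K} {i : Fin n} {j₀ : Fin ℓ}
  (hdeg : ∀ j, Δ j ∈ homogeneousSubmodule (Fin ℓ) K 1)
  (hc : coeff (Finsupp.single j₀ 1) (Δ i) ≠ 0)

lemma map_span_forms (f : MvPolynomial (Fin ℓ) K →ₐ[K] MvPolynomial (Fin ℓ) K)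
    (Θ : Fin n → MvPolynomial (Fin ℓ) K) (S : Finset (Fin n)) :
    span K ((f ∘ Θ) '' (S : Set (Fin n))) = Submodule.map f.toLinearMap (span K (Θ '' (S : Set (Fin n)))) := by
  rw [Submodule.map_span, Set.image_comp]
  rfl

include hdeg hc in
lemma conrk {S : Finset (Fin n)} (hiS : i ∉ S) :
    rk ((phi (Δ i) j₀) ∘ Δ) S + 1 = rk Δ (insert i S) := by
  set α := Δ i with hαdef
  set φ := phi α j₀ with hφ
  set W' := span K (Δ '' ((insert i S : Finset (Fin n)) : Set (Fin n))) with hW'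
  have hins : ((insert i S : Finset (Fin n)) : Set (Fin n)) = insert i (S : Set (Fin n)) := by
    ext x; simp [Finset.mem_insert]
  have hrn := finrank_eq_map_add_inf_ker φ.toLinearMap W'
  have hmap : Submodule.map φ.toLinearMap W' = span K ((φ ∘ Δ) '' (S : Set (Fin n))) := by
    rw [hW', ← map_span_forms, hins, Set.image_insert_eq, Function.comp_apply,
      ← hαdef, phi_alpha (hdeg i) hc]
    exact Submodule.span_insert_eq_span (zero_mem _)
  have hker : W' ⊓ LinearMap.ker φ.toLinearMap = span K {α} := by
    apply le_antisymm
    · rintro x ⟨hx1, hx2⟩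
      have hxlin : x ∈ homogeneousSubmodule (Fin ℓ) K 1 :=
        span_forms_le_linear hdeg _ hx1
      have hxker : φ x = 0 := hx2
      rw [phi_eq_zero_iff (hdeg i) hc] at hxker
      obtain ⟨d, rfl⟩ := lin_mem_span_alpha (hdeg i) hxlin hxker
      rw [← smul_eq_C_mul]
      exact smul_mem _ _ (subset_span rfl)
    · rw [span_le, Set.singleton_subset_iff]
      refine ⟨subset_span ?_, ?_⟩
      · rw [hins]
        exact ⟨i, Set.mem_insert _ _, rfl⟩
      · show φ α = 0
        exact phi_alpha (hdeg i) hc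
  have hα0 : α ≠ 0 := by
    intro h
    rw [h] at hc
    simp at hc
  have hone : Module.finrank K (span K ({α} : Set (MvPolynomial (Fin ℓ) K))) = 1 :=
    finrank_span_singleton hα0
  rw [hmap, hker, hone] at hrn
  rw [rk, rk, ← hrn]
end Conrk

lemma zero_not_indep {ι σ : Type*} [Fintype ι] {Θ : ι → MvPolynomial σ K} {i : ι}
    (hzi : Θ i = 0) {S : Finset ι} (hiS : i ∈ S) : ¬ Indep Θ S := by
  have hsp : span K (Θ '' (S : Set ι)) = span K (Θ '' ((S.erase i : Finset ι) : Set ι)) := by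
    apply le_antisymm
    · rw [span_le]
      rintro - ⟨j, hj, rfl⟩
      rcases eq_or_ne j i with rfl | hne
      · rw [hzi]; exact zero_mem _
      · refine subset_span ⟨j, ?_, rfl⟩
        rw [Finset.mem_coe, Finset.mem_erase]
        exact ⟨hne, by exact_mod_cast hj⟩
    · exact span_mono (Set.image_mono (by exact_mod_cast Finset.erase_subset _ _))
  intro hind
  have h1 : rk Θ S = rk Θ (S.erase i) := by rw [rk, rk, hsp]
  have h2 := rk_le_card Θ (S.erase i)
  have h3 : (S.erase i).card + 1 = S.card := by
    rw [Finset.card_erase_of_mem hiS]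
    exact Nat.sub_add_cancel (Nat.one_le_iff_ne_zero.2 (Finset.card_ne_zero_of_mem hiS))
  rw [Indep] at hind
  linarith

def icount {σ : Type*} (Θ : Fin n → MvPolynomial σ K) : ℕ :=
  (Finset.univ.powerset.filter (Indep Θ)).card

lemma update_image {σ : Type*} (Θ : Fin n → MvPolynomial σ K) (i : Fin n) {S : Finset (Fin n)}
    (hiS : i ∉ S) : (Function.update Θ i 0) '' (S : Set (Fin n)) = Θ '' (S : Set (Fin n)) :=
  Set.image_congr fun j hj => Function.update_of_ne (fun h => hiS (by rw [← h]; exact_mod_cast hj)) 0 Θ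

lemma indep_update_iff {σ : Type*} (Θ : Fin n → MvPolynomial σ K) (i : Fin n) {S : Finset (Fin n)}
    (hiS : i ∉ S) : Indep (Function.update Θ i 0) S ↔ Indep Θ S := by
  rw [Indep, Indep, rk, rk, update_image Θ i hiS]

lemma prod_update {σ : Type*} (Θ : Fin n → MvPolynomial σ K) (i : Fin n) {S : Finset (Fin n)}
    (hiS : i ∉ S) : prodForms (Function.update Θ i 0) S = prodForms Θ S :=
  Finset.prod_congr rfl fun j hj => Function.update_of_ne (fun h => hiS (by rw [← h]; exact hj)) 0 Θ

lemma prod_update_zero {σ : Type*} (Θ : Fin n → MvPolynomial σ K) (i : Fin n) {S : Finset (Fin n)}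
    (hiS : i ∈ S) : prodForms (Function.update Θ i 0) S = 0 :=
  Finset.prod_eq_zero hiS (Function.update_self i 0 Θ)

lemma insert_erase' {S : Finset (Fin n)} {i : Fin n} (h : i ∈ S) : insert i (S.erase i) = S := by
  ext x
  simp only [Finset.mem_insert, Finset.mem_erase]
  constructor
  · rintro (rfl | ⟨-, hx⟩) <;> [exact h; exact hx]
  · intro hx
    by_cases hxi : x = i
    · exact Or.inl hxi
    · exact Or.inr ⟨hxi, hx⟩

lemma erase_insert' {T : Finset (Fin n)} {i : Fin n} (h : i ∉ T) : (insert i T).erase i = T := by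
  ext x
  simp only [Finset.mem_insert, Finset.mem_erase]
  constructor
  · rintro ⟨hxi, rfl | hx⟩; · exact absurd rfl hxi
    exact hx
  · intro hx
    exact ⟨fun h' => h (h' ▸ hx), Or.inr hx⟩

section CountSplit
variable {Δ : Fin n → MvPolynomial (Fin ℓ) K} {i : Fin n} {j₀ : Fin ℓ}
  (hdeg : ∀ j, Δ j ∈ homogeneousSubmodule (Fin ℓ) K 1)
  (hc : coeff (Finsupp.single j₀ 1) (Δ i) ≠ 0)

include hdeg hc in
lemma count_split :
    icount Δ = icount (Function.update Δ i 0) + icount ((phi (Δ i) j₀) ∘ Δ) := by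
  have hφi : ((phi (Δ i) j₀) ∘ Δ) i = 0 := phi_alpha (hdeg i) hc
  set A := Finset.univ.powerset.filter (Indep Δ) with hA
  have hsplit := Finset.card_filter_add_card_filter_not (s := A)
    (p := fun S => i ∈ S)
  have part1 : A.filter (fun S => ¬ i ∈ S) = Finset.univ.powerset.filter
      (Indep (Function.update Δ i 0)) := by
    ext S
    simp only [hA, Finset.mem_filter, Finset.mem_powerset]
    constructor
    · rintro ⟨⟨hsub, hind⟩, hiS⟩
      exact ⟨hsub, (indep_update_iff Δ i hiS).2 hind⟩
    · rintro ⟨hsub, hind⟩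
      have hiS : i ∉ S := by
        intro hiS
        exact zero_not_indep (Function.update_self i 0 Δ) hiS hind
      exact ⟨⟨hsub, (indep_update_iff Δ i hiS).1 hind⟩, hiS⟩
  have part2 : (A.filter (fun S => i ∈ S)).card =
      (Finset.univ.powerset.filter (Indep ((phi (Δ i) j₀) ∘ Δ))).card := by
    refine Finset.card_bij' (fun S _ => S.erase i) (fun T _ => insert i T) ?_ ?_ ?_ ?_
    · intro S hS
      simp only [hA, Finset.mem_filter, Finset.mem_powerset] at hS ⊢
      obtain ⟨⟨hsub, hind⟩, hiS⟩ := hS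
      refine ⟨Finset.subset_univ _, ?_⟩
      have hie : i ∉ S.erase i := fun h => (Finset.mem_erase.1 h).1 rfl
      have hcr := conrk hdeg hc (S := S.erase i) hie
      rw [insert_erase' hiS] at hcr
      rw [Indep] at hind ⊢
      rw [hind] at hcr
      have hcard : (S.erase i).card + 1 = S.card := by
        rw [Finset.card_erase_of_mem hiS]
        exact Nat.sub_add_cancel (Nat.one_le_iff_ne_zero.2 (Finset.card_ne_zero_of_mem hiS))
      linarith
    · intro T hT
      simp only [hA, Finset.mem_filter, Finset.mem_powerset] at hT ⊢
      obtain ⟨hsub, hind⟩ := hT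
      have hiT : i ∉ T := fun h => zero_not_indep hφi h hind
      have hcr := conrk hdeg hc (S := T) hiT
      rw [Indep] at hind
      rw [hind] at hcr
      refine ⟨⟨Finset.subset_univ _, ?_⟩, Finset.mem_insert_self _ _⟩
      rw [Indep, ← hcr, Finset.card_insert_of_notMem hiT]
    · intro S hS
      simp only [hA, Finset.mem_filter] at hS
      exact insert_erase' hS.2
    · intro T hT
      simp only [Finset.mem_filter, Finset.mem_powerset] at hT
      have hiT : i ∉ T := fun h => zero_not_indep hφi h hT.2
      exact erase_insert' hiT
  rw [icount, ← hsplit, part1, part2, icount, icount]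
  ring
end CountSplit

lemma map_Pspace (f : MvPolynomial (Fin ℓ) K →ₐ[K] MvPolynomial (Fin ℓ) K)
    (Θ : Fin n → MvPolynomial (Fin ℓ) K) :
    Submodule.map f.toLinearMap (Pspace Θ) = Pspace (f ∘ Θ) := by
  rw [Pspace, Pspace, Submodule.map_span]
  congr 1
  ext x
  constructor
  · rintro ⟨-, ⟨S, rfl⟩, rfl⟩
    refine ⟨S, ?_⟩
    show prodForms (⇑f ∘ Θ) S = f.toLinearMap (prodForms Θ S)
    simp only [prodForms, AlgHom.toLinearMap_apply, map_prod]
    rfl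
  · rintro ⟨S, rfl⟩
    refine ⟨prodForms Θ S, ⟨S, rfl⟩, ?_⟩
    show f.toLinearMap (prodForms Θ S) = prodForms (⇑f ∘ Θ) S
    simp only [prodForms, AlgHom.toLinearMap_apply, map_prod]
    rfl

def mulA (α : MvPolynomial (Fin ℓ) K) : MvPolynomial (Fin ℓ) K →ₗ[K] MvPolynomial (Fin ℓ) K :=
  LinearMap.mulLeft K α

lemma finrank_map_mulA {α : MvPolynomial (Fin ℓ) K} (hα0 : α ≠ 0)
    (P : Submodule K (MvPolynomial (Fin ℓ) K)) :
    Module.finrank K (Submodule.map (mulA α) P) = Module.finrank K P := by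
  have hinj : Function.Injective (mulA α) := by
    intro a b hab
    exact mul_left_cancel₀ hα0 hab
  exact (LinearEquiv.finrank_eq (Submodule.equivMapOfInjective (mulA α) hinj P)).symm

section Lower
variable {Δ : Fin n → MvPolynomial (Fin ℓ) K} {i : Fin n} {j₀ : Fin ℓ}
  (hdeg : ∀ j, Δ j ∈ homogeneousSubmodule (Fin ℓ) K 1)
  (hc : coeff (Finsupp.single j₀ 1) (Δ i) ≠ 0)

include hdeg hc in
lemma mulmap_le :
    Submodule.map (mulA (Δ i)) (Pspace (Function.update Δ i 0)) ≤
      Pspace Δ ⊓ LinearMap.ker (phi (Δ i) j₀).toLinearMap := by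
  rw [Submodule.map_le_iff_le_comap, Pspace, span_le]
  rintro - ⟨S, rfl⟩
  simp only [SetLike.mem_coe, Submodule.mem_comap, Submodule.mem_inf]
  constructor
  · by_cases hiS : i ∈ S
    · rw [prod_update_zero Δ i hiS, map_zero]
      exact zero_mem _
    · have : mulA (Δ i) (prodForms (Function.update Δ i 0) S) = prodForms Δ (insert i S) := by
        rw [prod_update Δ i hiS, mulA, LinearMap.mulLeft_apply]
        simp only [prodForms]
        rw [Finset.prod_insert hiS]
      rw [this]
      exact subset_span ⟨insert i S, rfl⟩
  · rw [LinearMap.mem_ker]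
    show phi (Δ i) j₀ (Δ i * _) = 0
    rw [map_mul, phi_alpha (hdeg i) hc, zero_mul]
end Lower

lemma dim_base (Δ : Fin n → MvPolynomial (Fin ℓ) K) (hz : ∀ j, Δ j = 0) :
    Module.finrank K (Pspace Δ) = 1 ∧ icount Δ = 1 := by
  constructor
  · have hPeq : Pspace Δ = span K {(1 : MvPolynomial (Fin ℓ) K)} := by
      apply le_antisymm
      · rw [Pspace, span_le]
        rintro - ⟨S, rfl⟩
        rcases S.eq_empty_or_nonempty with rfl | ⟨j, hj⟩
        · refine subset_span ?_
          show prodForms Δ ∅ ∈ ({1} : Set (MvPolynomial (Fin ℓ) K))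
          simp only [prodForms, Finset.prod_empty]
          rfl
        · show prodForms Δ S ∈ (span K {(1 : MvPolynomial (Fin ℓ) K)} : Set _)
          simp only [prodForms]
          rw [Finset.prod_eq_zero hj (hz j)]
          exact zero_mem _
      · rw [span_le, Set.singleton_subset_iff]
        exact subset_span ⟨∅, by simp only [prodForms, Finset.prod_empty]⟩
    rw [hPeq]
    exact finrank_span_singleton one_ne_zero
  · rw [icount]
    have : Finset.univ.powerset.filter (Indep Δ) = {∅} := by
      ext S
      simp only [Finset.mem_filter, Finset.mem_powerset, Finset.mem_singleton]
      constructor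
      · rintro ⟨-, hind⟩
        have h0 : rk Δ S = 0 := by
          rw [rk]
          have : Δ '' (S : Set (Fin n)) ⊆ {0} := by
            rintro - ⟨j, -, rfl⟩
            exact hz j
          have hle : span K (Δ '' (S : Set (Fin n))) ≤ ⊥ := by
            rw [← span_zero_singleton (R := K) (M := MvPolynomial (Fin ℓ) K)]
            exact span_mono this
          rw [le_bot_iff.1 hle]
          exact finrank_bot K _
        rw [Indep, h0] at hind
        exact Finset.card_eq_zero.1 hind.symm
      · rintro rfl
        refine ⟨Finset.empty_subset _, ?_⟩
        rw [Indep, rk]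
        have : span K (Δ '' ((∅ : Finset (Fin n)) : Set (Fin n))) = ⊥ := by simp
        rw [this]
        simp [finrank_bot]
    rw [this, Finset.card_singleton]

theorem dim_eq : ∀ (N : ℕ) (Δ : Fin n → MvPolynomial (Fin ℓ) K),
    (∀ j, Δ j ∈ homogeneousSubmodule (Fin ℓ) K 1) →
    (Finset.univ.filter fun j => Δ j ≠ 0).card ≤ N →
    Module.finrank K (Pspace Δ) = icount Δ := by
  intro N
  induction N using Nat.strong_induction_on with
  | _ N IH =>
  intro Δ hdeg hN
  by_cases hz : ∀ j, Δ j = 0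
  · rw [(dim_base Δ hz).1, (dim_base Δ hz).2]
  push_neg at hz
  obtain ⟨i, hi⟩ := hz
  obtain ⟨j₀, hc⟩ := exists_coeff (hdeg i) hi
  set del := Function.update Δ i 0 with hdel
  set con := (phi (Δ i) j₀) ∘ Δ with hcon
  have hdegdel : ∀ j, del j ∈ homogeneousSubmodule (Fin ℓ) K 1 := by
    intro j
    rw [hdel, Function.update_apply]
    split
    · exact zero_mem _
    · exact hdeg j
  have hdegcon : ∀ j, con j ∈ homogeneousSubmodule (Fin ℓ) K 1 := fun j =>
    phi_linear (hdeg i) (hdeg j)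
  have hiin : i ∈ Finset.univ.filter fun j => Δ j ≠ 0 := by
    simp [hi]
  have hNpos : 1 ≤ (Finset.univ.filter fun j => Δ j ≠ 0).card :=
    Finset.card_pos.2 ⟨i, hiin⟩
  have hsub : ∀ (Θ : Fin n → MvPolynomial (Fin ℓ) K), Θ i = 0 →
      (∀ j, Δ j = 0 → Θ j = 0) →
      (Finset.univ.filter fun j => Θ j ≠ 0) ⊆ (Finset.univ.filter fun j => Δ j ≠ 0).erase i := by
    intro Θ hΘi hΘz j hj
    simp only [Finset.mem_filter, Finset.mem_univ, true_and] at hj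
    rw [Finset.mem_erase]
    constructor
    · rintro rfl
      exact hj hΘi
    · simp only [Finset.mem_filter, Finset.mem_univ, true_and]
      intro hΔj
      exact hj (hΘz j hΔj)
  have hcard : ∀ (Θ : Fin n → MvPolynomial (Fin ℓ) K), Θ i = 0 →
      (∀ j, Δ j = 0 → Θ j = 0) →
      (Finset.univ.filter fun j => Θ j ≠ 0).card < N := by
    intro Θ h1 h2
    calc (Finset.univ.filter fun j => Θ j ≠ 0).card
        ≤ ((Finset.univ.filter fun j => Δ j ≠ 0).erase i).card :=
          Finset.card_le_card (hsub Θ h1 h2)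
      _ < (Finset.univ.filter fun j => Δ j ≠ 0).card := by
          rw [Finset.card_erase_of_mem hiin]
          have := Nat.sub_lt (lt_of_lt_of_le Nat.zero_lt_one hNpos) Nat.zero_lt_one
          linarith
      _ ≤ N := hN
  have hdelc : (Finset.univ.filter fun j => del j ≠ 0).card < N :=
    hcard del (Function.update_self i 0 Δ) (fun j hj => by
      rw [hdel, Function.update_apply]
      split <;> simp [hj])
  have hconc : (Finset.univ.filter fun j => con j ≠ 0).card < N :=
    hcard con (phi_alpha (hdeg i) hc) (fun j hj => by
      rw [hcon, Function.comp_apply, hj, map_zero])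
  have IHdel := IH _ hdelc del hdegdel (le_refl _)
  have IHcon := IH _ hconc con hdegcon (le_refl _)
  have hrn := finrank_eq_map_add_inf_ker (phi (Δ i) j₀).toLinearMap (Pspace Δ)
  rw [map_Pspace] at hrn
  have hlow : icount del ≤ Module.finrank K
      (Pspace Δ ⊓ LinearMap.ker (phi (Δ i) j₀).toLinearMap : Submodule K _) := by
    have hFD : FiniteDimensional K
        (Pspace Δ ⊓ LinearMap.ker (phi (Δ i) j₀).toLinearMap : Submodule K _) :=
      Submodule.finiteDimensional_of_le inf_le_left
    calc icount del = Module.finrank K (Pspace del) := IHdel.symm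
      _ = Module.finrank K (Submodule.map (mulA (Δ i)) (Pspace del)) :=
          (finrank_map_mulA hi _).symm
      _ ≤ _ := Submodule.finrank_mono (mulmap_le hdeg hc)
  have hup : Module.finrank K (Pspace Δ) ≤ icount Δ := finrank_Pspace_le Δ
  have hcs := count_split hdeg hc
  linarith

theorem key_exact (Δ : Fin n → MvPolynomial (Fin ℓ) K)
    (hdeg : ∀ j, Δ j ∈ homogeneousSubmodule (Fin ℓ) K 1)
    (i : Fin n) (hloop : Δ i ≠ 0) :
    ∀ p ∈ Pspace Δ, p ∈ Ideal.span {Δ i} →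
    ∃ p' ∈ span K {q : MvPolynomial (Fin ℓ) K |
        ∃ S : Finset (Fin n), i ∉ S ∧ q = prodForms Δ S}, p = Δ i * p' := by
  obtain ⟨j₀, hc⟩ := exists_coeff (hdeg i) hloop
  set del := Function.update Δ i 0 with hdel
  set con := (phi (Δ i) j₀) ∘ Δ with hcon
  have hdegdel : ∀ j, del j ∈ homogeneousSubmodule (Fin ℓ) K 1 := by
    intro j
    rw [hdel, Function.update_apply]
    split
    · exact zero_mem _
    · exact hdeg j
  have hdegcon : ∀ j, con j ∈ homogeneousSubmodule (Fin ℓ) K 1 := fun j =>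
    phi_linear (hdeg i) (hdeg j)
  have hPdel_eq : Pspace del = span K {q : MvPolynomial (Fin ℓ) K |
      ∃ S : Finset (Fin n), i ∉ S ∧ q = prodForms Δ S} := by
    apply le_antisymm
    · rw [Pspace, span_le]
      rintro - ⟨S, rfl⟩
      show prodForms del S ∈ _
      rw [hdel]
      by_cases hiS : i ∈ S
      · rw [prod_update_zero Δ i hiS]
        exact zero_mem _
      · rw [prod_update Δ i hiS]
        exact subset_span ⟨S, hiS, rfl⟩
    · rw [span_le]
      rintro - ⟨S, hiS, rfl⟩
      refine subset_span ⟨S, ?_⟩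
      show prodForms del S = prodForms Δ S
      rw [hdel, prod_update Δ i hiS]
  have hd1 := dim_eq _ Δ hdeg (le_refl _)
  have hd2 := dim_eq _ del hdegdel (le_refl _)
  have hd3 := dim_eq _ con hdegcon (le_refl _)
  have hrn := finrank_eq_map_add_inf_ker (phi (Δ i) j₀).toLinearMap (Pspace Δ)
  rw [map_Pspace] at hrn
  have hcs := count_split hdeg hc
  have hFD : FiniteDimensional K
      (Pspace Δ ⊓ LinearMap.ker (phi (Δ i) j₀).toLinearMap : Submodule K _) :=
    Submodule.finiteDimensional_of_le inf_le_left
  have hfk : Module.finrank K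
      (Pspace Δ ⊓ LinearMap.ker (phi (Δ i) j₀).toLinearMap : Submodule K _) = icount del := by
    linarith
  have hdim_eq2 : Module.finrank K
      (Pspace Δ ⊓ LinearMap.ker (phi (Δ i) j₀).toLinearMap : Submodule K _) ≤
      Module.finrank K (Submodule.map (mulA (Δ i)) (Pspace del)) := by
    rw [finrank_map_mulA hloop, hd2, hfk]
  have heq : Submodule.map (mulA (Δ i)) (Pspace del) =
      Pspace Δ ⊓ LinearMap.ker (phi (Δ i) j₀).toLinearMap :=
    Submodule.eq_of_le_of_finrank_le (mulmap_le hdeg hc) hdim_eq2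
  intro p hp hpid
  have hker : p ∈ Pspace Δ ⊓ LinearMap.ker (phi (Δ i) j₀).toLinearMap := by
    rw [Submodule.mem_inf]
    refine ⟨hp, ?_⟩
    rw [LinearMap.mem_ker]
    show phi (Δ i) j₀ p = 0
    rw [phi_eq_zero_iff (hdeg i) hc]
    exact hpid
  rw [← heq] at hker
  obtain ⟨p', hp', hps⟩ := hker
  refine ⟨p', ?_, ?_⟩
  · rw [← hPdel_eq]
    exact hp'
  · rw [← hps]
    rfl

end
end AuxAll

/-- `P(Δ − α_i)`: the span of the subproducts avoiding `i` (the deletion). -/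
noncomputable def Pdel {K : Type*} [Field K] {ℓ n : ℕ} (Δ : Fin n → MvPolynomial (Fin ℓ) K)
    (i : Fin n) : Submodule K (MvPolynomial (Fin ℓ) K) :=
  span K {p | ∃ S : Finset (Fin n), i ∉ S ∧ p = prodForms Δ S}

/-- `P(Δ/α_i)`: the span of the subproducts of the restrictions of the remaining forms
to `ker α_i`, i.e. of the images of the `α_S` (`i ∉ S`) in `Sym(V*)/(α_i)`. -/
noncomputable def Pcon {K : Type*} [Field K] {ℓ n : ℕ} (Δ : Fin n → MvPolynomial (Fin ℓ) K)
    (i : Fin n) : Submodule K (MvPolynomial (Fin ℓ) K ⧸ Ideal.span {Δ i}) :=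
  span K {q | ∃ S : Finset (Fin n), i ∉ S ∧
    q = Ideal.Quotient.mkₐ K (Ideal.span {Δ i}) (prodForms Δ S)}

/-- if `i` is neither a loop nor an isthmus of `M(Δ)`, then
`0 → P(Δ−α_i) → P(Δ) → P(Δ/α_i) → 0` is exact, where the first map is multiplication
by `α_i` and the second is induced by restriction of forms to `ker α_i` (the quotient
map `Sym(V*) → Sym(V*)/(α_i) ≅ Sym(ker(α_i)*)`). -/
theorem statement12 {K : Type*} [Field K] {ℓ n : ℕ}
    (Δ : Fin n → MvPolynomial (Fin ℓ) K)
    (hdeg : ∀ i, Δ i ∈ homogeneousSubmodule (Fin ℓ) K 1)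
    (hspan : homogeneousSubmodule (Fin ℓ) K 1 ≤ span K (Set.range Δ))
    (i : Fin n) (hloop : Δ i ≠ 0)
    (histhmus : rk Δ (Finset.univ.erase i) = rk Δ Finset.univ) :
    (∀ p ∈ Pdel Δ i, Δ i * p ∈ Pspace Δ) ∧
    (∀ p ∈ Pdel Δ i, Δ i * p = 0 → p = 0) ∧
    Submodule.map (Ideal.Quotient.mkₐ K (Ideal.span {Δ i})).toLinearMap (Pspace Δ) =
        Pcon Δ i ∧
    (∀ p ∈ Pspace Δ, Ideal.Quotient.mkₐ K (Ideal.span {Δ i}) p = 0 →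
      ∃ p' ∈ Pdel Δ i, p = Δ i * p') := by
  have part1 : ∀ p ∈ Pdel Δ i, Δ i * p ∈ Pspace Δ := by
    intro p hp
    have hp' : p ∈ span K {q : MvPolynomial (Fin ℓ) K |
        ∃ S : Finset (Fin n), i ∉ S ∧ q = prodForms Δ S} := hp
    refine Submodule.span_induction ?_ ?_ ?_ ?_ hp'
    · rintro x ⟨S, hiS, rfl⟩
      refine subset_span ⟨insert i S, ?_⟩
      show prodForms Δ (insert i S) = Δ i * prodForms Δ S
      simp only [prodForms]
      rw [Finset.prod_insert hiS]
    · rw [mul_zero]; exact zero_mem _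
    · intro x y _ _ hx hy
      rw [mul_add]; exact add_mem hx hy
    · intro a x _ hx
      rw [mul_smul_comm]; exact smul_mem _ _ hx
  refine ⟨part1, ?_, ?_, ?_⟩
  · intro p _ h0
    rcases mul_eq_zero.1 h0 with h | h
    · exact absurd h hloop
    · exact h
  · apply le_antisymm
    · rw [Submodule.map_le_iff_le_comap, Pspace, span_le]
      rintro - ⟨S, rfl⟩
      simp only [SetLike.mem_coe, Submodule.mem_comap, AlgHom.toLinearMap_apply]
      by_cases hiS : i ∈ S
      · have h1 : prodForms Δ S = Δ i * prodForms Δ (S.erase i) := by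
          simp only [prodForms]
          rw [Finset.mul_prod_erase S Δ hiS]
        have h2 : prodForms Δ S ∈ Ideal.span {Δ i} := by
          rw [h1]
          exact Ideal.mul_mem_right _ _ (Ideal.subset_span rfl)
        have h3 : (Ideal.Quotient.mkₐ K (Ideal.span {Δ i})) (prodForms Δ S) = 0 :=
          Ideal.Quotient.eq_zero_iff_mem.2 h2
        rw [h3]
        exact zero_mem _
      · exact subset_span ⟨S, hiS, rfl⟩
    · rw [Pcon, span_le]
      rintro - ⟨S, hiS, rfl⟩
      exact ⟨prodForms Δ S, subset_span ⟨S, rfl⟩, rfl⟩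
  · intro p hp h0
    have hpid : p ∈ Ideal.span {Δ i} := by
      have h0' : Ideal.Quotient.mk (Ideal.span {Δ i}) p = 0 := h0
      exact Ideal.Quotient.eq_zero_iff_mem.1 h0'
    obtain ⟨p', hp', heq⟩ := key_exact Δ hdeg i hloop p hp hpid
    exact ⟨p', hp', heq⟩
end
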